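/- arXiv:quant-ph/0607061 — 9 statements merged into one kernel-verified Lean document; each statement's English description precedes it below -/
import Mathlib

section
/- Let ψ be a pure state in Schmidt form on ℂ^d ⊗ ℂ^d. The matrix I − (P_ψ)^Γ is positive definite if and only if ψ has Schmidt rank at least 2 (i.e. ψ is entangled). Equivalently, every eigenvalue of (P_ψ)^Γ has modulus strictly less than 1 if and only if ψ is entangled, while if ψ has Schmidt rank 1 then 1 is an eigenvalue of (P_ψ)^Γ. -/
open Matrix BigOperators
open scoped ComplexOrder

/-- Partial transpose with respect to the first tensor factor:
`X^Γ[(i,j),(k,l)] = X[(k,j),(i,l)]`. -/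
def ptg {A B : Type*} (X : Matrix (A × B) (A × B) ℂ) : Matrix (A × B) (A × B) ℂ :=
  Matrix.of fun p q => X (q.1, p.2) (p.1, q.2)

/-- A pure state in Schmidt form with Schmidt coefficients `μ`:
`ψ[(i,j)] = μ_i δ_{ij}`. -/
noncomputable def schmidtVec {d : ℕ} (μ : Fin d → ℝ) : Fin d × Fin d → ℂ :=
  fun p => if p.1 = p.2 then (μ p.1 : ℂ) else 0

/-- Rank-one projection onto the vector `v`. -/
noncomputable def projVec {n : Type*} (v : n → ℂ) : Matrix n n ℂ :=
  Matrix.of fun p q => v p * star (v q)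

/-- The Schmidt rank: the number of nonzero Schmidt coefficients. -/
noncomputable def schmidtRank {d : ℕ} (μ : Fin d → ℝ) : ℕ :=
  (Finset.univ.filter fun i => μ i ≠ 0).card

/-!
`(P_ψ)^Γ` sends `v` to `p ↦ μ p.1 μ p.2 v p.swap`: it is block diagonal with `1 × 1` blocks
`μ_i²` and `2 × 2` blocks `!![0, μ_i μ_j; μ_i μ_j, 0]`, so its eigenvalues have
moduli `μ_i μ_j`. These are all `< 1` exactly when at least two `μ_i` are nonzero; otherwise
some `μ_i² = 1` and `e_i ⊗ e_i` is a fixed vector. Since `(P_ψ)^Γ` is Hermitian, eigenvalues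
of modulus `< 1` make `1 - (P_ψ)^Γ` positive definite.
-/

theorem isHermitian_ptg {A B : Type*} {X : Matrix (A × B) (A × B) ℂ}
    (hX : X.IsHermitian) : (ptg X).IsHermitian := by
  ext p q
  simpa [ptg] using congrFun (congrFun hX (q.1, p.2)) (p.1, q.2)

theorem isHermitian_projVec {n : Type*} [Fintype n] (v : n → ℂ) : (projVec v).IsHermitian :=
  (posSemidef_vecMulVec_self_star v).isHermitian

theorem Matrix.IsHermitian.posDef_one_sub_of_norm_eigenvalue_lt_one {𝕜 n : Type*} [RCLike 𝕜]
    [Fintype n] [DecidableEq n] {A : Matrix n n 𝕜} (hA : A.IsHermitian)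
    (h : ∀ (c : 𝕜) (v : n → 𝕜), v ≠ 0 → A *ᵥ v = c • v → ‖c‖ < 1) : (1 - A).PosDef := by
  have hB : (1 - A).IsHermitian := isHermitian_one.sub hA
  refine hB.posDef_iff_eigenvalues_pos.2 fun i => ?_
  set u : n → 𝕜 := ⇑(hB.eigenvectorBasis i)
  set l := hB.eigenvalues i
  have hu : u ≠ 0 := fun hu =>
    hB.eigenvectorBasis.orthonormal.ne_zero i (by ext j; exact congrFun hu j)
  have hAu : A *ᵥ u = ((1 - l : ℝ) : 𝕜) • u := by
    have hBu : (1 - A) *ᵥ u = (l : 𝕜) • u := by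
      simpa only [RCLike.real_smul_eq_coe_smul (K := 𝕜)] using hB.mulVec_eigenvectorBasis i
    rw [sub_mulVec, one_mulVec] at hBu
    rw [RCLike.ofReal_sub, RCLike.ofReal_one, sub_smul, one_smul, ← hBu, sub_sub_cancel]
  have hl := h _ u hu hAu
  rw [RCLike.norm_ofReal] at hl
  linarith [(abs_lt.mp hl).2]

section SchmidtForm

variable {d : ℕ} (μ : Fin d → ℝ)

theorem ptg_projVec_schmidtVec_mulVec_apply (v : Fin d × Fin d → ℂ) (p : Fin d × Fin d) :
    (ptg (projVec (schmidtVec μ)) *ᵥ v) p = (μ p.1 * μ p.2 : ℂ) * v p.swap := by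
  rcases p with ⟨i, j⟩
  simp only [mulVec, dotProduct, ptg, projVec, schmidtVec, RCLike.star_def,
    apply_ite (starRingEnd ℂ), Complex.conj_ofReal, map_zero, mul_ite, ite_mul, zero_mul,
    mul_zero, of_apply, Fintype.sum_prod_type, Finset.sum_ite_eq, Finset.mem_univ, if_true,
    Finset.sum_ite_eq', Prod.swap_prod_mk]
  ring

theorem ptg_projVec_schmidtVec_mulVec_single (i : Fin d) :
    ptg (projVec (schmidtVec μ)) *ᵥ Pi.single (i, i) 1 = (μ i ^ 2 : ℂ) • Pi.single (i, i) 1 := by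
  ext p
  rw [ptg_projVec_schmidtVec_mulVec_apply]
  by_cases hp : p = (i, i)
  · subst hp
    simp [sq]
  · have hps : p.swap ≠ (i, i) := fun h => hp (by simpa using congrArg Prod.swap h)
    simp [hp, hps]

theorem exists_norm_eq_of_ptg_projVec_schmidtVec_mulVec_eq_smul (hpos : ∀ i, 0 ≤ μ i)
    {c : ℂ} {v : Fin d × Fin d → ℂ} (hv : v ≠ 0)
    (hcv : ptg (projVec (schmidtVec μ)) *ᵥ v = c • v) : ∃ i j, ‖c‖ = μ i * μ j := by
  obtain ⟨p, hp⟩ := Function.ne_iff.mp hv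
  set a : ℂ := μ p.1 * μ p.2
  have h₁ : a * v p.swap = c * v p := by
    simpa [ptg_projVec_schmidtVec_mulVec_apply] using congrFun hcv p
  have h₂ : a * v p = c * v p.swap := by
    simpa [ptg_projVec_schmidtVec_mulVec_apply, a, mul_comm] using congrFun hcv p.swap
  -- the matrix only couples `v p` and `v p.swap`, on which it acts as `!![0, a; a, 0]`
  have hsq : c ^ 2 = a ^ 2 := mul_right_cancel₀ hp (by linear_combination -c * h₁ - a * h₂)
  have ha : ‖a‖ = μ p.1 * μ p.2 := by simp [a, abs_of_nonneg (hpos _)]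
  exact ⟨p.1, p.2, ha ▸ (sq_eq_sq₀ (norm_nonneg c) (norm_nonneg a)).1 (by
    rw [← norm_pow, hsq, norm_pow])⟩

theorem exists_sq_eq_one_of_schmidtRank_le_one (hnorm : ∑ i, μ i ^ 2 = 1)
    (h : schmidtRank μ ≤ 1) : ∃ i, μ i ^ 2 = 1 := by
  obtain ⟨i, -, hi⟩ := Finset.exists_ne_zero_of_sum_ne_zero (hnorm ▸ one_ne_zero)
  refine ⟨i, hnorm ▸ (Fintype.sum_eq_single (f := fun j => μ j ^ 2) i fun j hji => ?_).symm⟩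
  have hj : μ j = 0 := by
    by_contra hj
    exact hji (Finset.card_le_one.mp h j (by simpa) i (by simpa using hi))
  simp [hj]

theorem sq_lt_one_of_two_le_schmidtRank (hnorm : ∑ i, μ i ^ 2 = 1)
    (h : 2 ≤ schmidtRank μ) (i : Fin d) : μ i ^ 2 < 1 := by
  obtain ⟨k, hk, hki⟩ := Finset.exists_mem_ne h i
  have hk0 : 0 < μ k ^ 2 := by
    have : μ k ≠ 0 := by simpa using hk
    positivity
  have := hnorm ▸ Finset.add_le_sum (fun j _ => sq_nonneg (μ j)) (Finset.mem_univ i)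
    (Finset.mem_univ k) hki.symm
  linarith

theorem mul_lt_one_of_two_le_schmidtRank (hpos : ∀ i, 0 ≤ μ i) (hnorm : ∑ i, μ i ^ 2 = 1)
    (h : 2 ≤ schmidtRank μ) (i j : Fin d) : μ i * μ j < 1 :=
  have hlt (k : Fin d) : μ k < 1 :=
    (sq_lt_one_iff₀ (hpos k)).1 (sq_lt_one_of_two_le_schmidtRank μ hnorm h k)
  mul_lt_one_of_nonneg_of_lt_one_left (hpos i) (hlt i) (hlt j).le

end SchmidtForm

theorem posDef_one_sub_partial_transpose_iff_entangled {d : ℕ} (μ : Fin d → ℝ)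
    (hpos : ∀ i, 0 ≤ μ i) (hnorm : ∑ i, μ i ^ 2 = 1) :
    -- I − (P_ψ)^Γ is positive definite iff ψ is entangled
    ((1 - ptg (projVec (schmidtVec μ))).PosDef ↔ 2 ≤ schmidtRank μ)
    ∧ -- equivalently, every eigenvalue of (P_ψ)^Γ has modulus < 1 iff ψ is entangled
    ((∀ (c : ℂ) (v : Fin d × Fin d → ℂ), v ≠ 0 →
        (ptg (projVec (schmidtVec μ))).mulVec v = c • v → ‖c‖ < 1)
      ↔ 2 ≤ schmidtRank μ)
    ∧ -- while for a Schmidt-rank-one ψ, 1 is an eigenvalue of (P_ψ)^Γ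
    (schmidtRank μ = 1 → ∃ v : Fin d × Fin d → ℂ, v ≠ 0 ∧
        (ptg (projVec (schmidtVec μ))).mulVec v = v) := by
  set M := ptg (projVec (schmidtVec μ))
  have hM : M.IsHermitian := isHermitian_ptg (isHermitian_projVec _)
  have h_unit_eigen (h : schmidtRank μ ≤ 1) : ∃ v, v ≠ 0 ∧ M *ᵥ v = v := by
    obtain ⟨i, hi⟩ := exists_sq_eq_one_of_schmidtRank_le_one μ hnorm h
    have hi' : (μ i : ℂ) ^ 2 = 1 := by exact_mod_cast hi
    refine ⟨Pi.single (i, i) 1, by simp, ?_⟩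
    rw [ptg_projVec_schmidtVec_mulVec_single, hi', one_smul]
  have h_eigen_lt (h : 2 ≤ schmidtRank μ) (c : ℂ) (v : Fin d × Fin d → ℂ) (hv : v ≠ 0)
      (hcv : M *ᵥ v = c • v) : ‖c‖ < 1 := by
    obtain ⟨i, j, hc⟩ := exists_norm_eq_of_ptg_projVec_schmidtVec_mulVec_eq_smul μ hpos hv hcv
    exact hc ▸ mul_lt_one_of_two_le_schmidtRank μ hpos hnorm h i j
  refine ⟨⟨fun hpd => ?_, fun h => hM.posDef_one_sub_of_norm_eigenvalue_lt_one (h_eigen_lt h)⟩,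
    ⟨fun heig => ?_, h_eigen_lt⟩, fun h => h_unit_eigen h.le⟩
  · by_contra h
    obtain ⟨v, hv, hMv⟩ := h_unit_eigen (by omega)
    have := hpd.dotProduct_mulVec_pos hv
    rw [sub_mulVec, one_mulVec, hMv, sub_self, dotProduct_zero] at this
    exact lt_irrefl _ this
  · by_contra h
    obtain ⟨v, hv, hMv⟩ := h_unit_eigen (by omega)
    simpa using heig 1 v hv (by rw [hMv, one_smul])
end

section
/- Let ψ1 on ℂ^{d1}⊗ℂ^{d1} and ψ2 on ℂ^{d2}⊗ℂ^{d2} be pure states in Schmidt form with Schmidt coefficients forming the diagonal matrices μ1 and μ2, let ε ∈ ℝ, and define the witness W_ε(ψ1,ψ2) = P_{ψ1} ⊠ (I − P_{ψ2}) + (I − P_{ψ1}) ⊠ P_{ψ2} − ε · P_{ψ1} ⊠ P_{ψ2}. For arbitrary complex d1×d2 matrices α and β let a ∈ ℂ^{d1·d2} and b ∈ ℂ^{d1·d2} be the vectors with components a[(i,j)] = α_{ij} and b[(i,j)] = β_{ij}, and let a⊗b be the product vector with components (a⊗b)[((i1,i2),(j1,j2))] = α_{i1 i2} β_{j1 j2}.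 Then ⟨a⊗b, W_ε(ψ1,ψ2) (a⊗b)⟩ = Tr((βᵀ μ1 α)ᴴ (βᵀ μ1 α)) + Tr((α μ2 βᵀ)ᴴ (α μ2 βᵀ)) − (2+ε)·|Tr(α μ2 βᵀ μ1)|². -/
open Matrix BigOperators
open scoped ComplexOrder

/-- Cut-respecting tensor product `σ ⊠ τ` of matrices on `ℂ^{d1}⊗ℂ^{d1}` and
`ℂ^{d2}⊗ℂ^{d2}`: the A side collects the first components, the B side the second. -/
def ctens {d1 d2 : ℕ} (σ : Matrix (Fin d1 × Fin d1) (Fin d1 × Fin d1) ℂ)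
    (τ : Matrix (Fin d2 × Fin d2) (Fin d2 × Fin d2) ℂ) :
    Matrix ((Fin d1 × Fin d2) × (Fin d1 × Fin d2)) ((Fin d1 × Fin d2) × (Fin d1 × Fin d2)) ℂ :=
  Matrix.of fun p q => σ (p.1.1, p.2.1) (q.1.1, q.2.1) * τ (p.1.2, p.2.2) (q.1.2, q.2.2)

/-- The product vector `a ⊗ b`. -/
def prodVec {d1 d2 : ℕ} (a b : Fin d1 × Fin d2 → ℂ) :
    (Fin d1 × Fin d2) × (Fin d1 × Fin d2) → ℂ :=
  fun p => a p.1 * b p.2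

/-- The canonical witness
`W_ε(ψ1,ψ2) = P_{ψ1} ⊠ (I−P_{ψ2}) + (I−P_{ψ1}) ⊠ P_{ψ2} − ε P_{ψ1} ⊠ P_{ψ2}`. -/
noncomputable def witnessW {d1 d2 : ℕ} (μ1 : Fin d1 → ℝ) (μ2 : Fin d2 → ℝ) (ε : ℝ) :
    Matrix ((Fin d1 × Fin d2) × (Fin d1 × Fin d2)) ((Fin d1 × Fin d2) × (Fin d1 × Fin d2)) ℂ :=
  ctens (projVec (schmidtVec μ1)) (1 - projVec (schmidtVec μ2))
    + ctens (1 - projVec (schmidtVec μ1)) (projVec (schmidtVec μ2))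
    - ε • ctens (projVec (schmidtVec μ1)) (projVec (schmidtVec μ2))

/-- The diagonal matrix of Schmidt coefficients, as a complex matrix. -/
noncomputable def diagC {d : ℕ} (μ : Fin d → ℝ) : Matrix (Fin d) (Fin d) ℂ :=
  Matrix.diagonal fun i => (μ i : ℂ)


/-!
Regrouping the indices as (A-pair, B-pair) turns `σ ⊠ τ` into the Kronecker product `σ ⊗ₖ τ`
and the product vector `a ⊗ b` into `vec (αᵀ ⊗ₖ βᵀ)`. Against a rank-one projection `P_u` on the
A side, the expectation of `P_u ⊗ₖ τ` at `vec X` is the expectation of `τ` at the contracted vector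
`X *ᵥ star u` (and symmetrically on the B side). Since `star ψ = vec μ`, the identity
`(B ⊗ₖ A) *ᵥ vec X = vec (A * X * Bᵀ)` contracts `α ⊗ β` with the Schmidt vectors to
`vec (βᵀ μ1 α)` and `vec (β μ2 αᵀ)`. Writing `W_ε = P1 ⊠ 1 + 1 ⊠ P2 - (2 + ε) P1 ⊠ P2`, the first
two expectations are squared Frobenius norms, and the last is `|⟨ψ2, vec (βᵀ μ1 α)⟩|²`, where
`⟨ψ2, vec (βᵀ μ1 α)⟩ = tr (α μ2 βᵀ μ1)`.
-/

open scoped Kronecker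

theorem projVec_eq_vecMulVec {n : Type*} (v : n → ℂ) : projVec v = vecMulVec v (star v) := rfl

theorem star_dotProduct_projVec_mulVec {n : Type*} [Fintype n] (v x : n → ℂ) :
    star x ⬝ᵥ projVec v *ᵥ x = ((‖star v ⬝ᵥ x‖ ^ 2 : ℝ) : ℂ) := by
  rw [projVec_eq_vecMulVec, vecMulVec_mulVec, dotProduct_smul, star_dotProduct x v, op_smul_eq_mul,
    Complex.ofReal_pow, ← Complex.conj_mul']
  rfl

section Kronecker

variable {m n : Type*} [Fintype m] [Fintype n]

theorem star_vec_dotProduct_projVec_kronecker_mulVec (u : m → ℂ) (τ : Matrix n n ℂ)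
    (X : Matrix n m ℂ) :
    star (vec X) ⬝ᵥ (projVec u ⊗ₖ τ) *ᵥ vec X
      = star (X *ᵥ star u) ⬝ᵥ τ *ᵥ (X *ᵥ star u) := by
  rw [kronecker_mulVec_vec, star_vec_dotProduct_vec, projVec_eq_vecMulVec, transpose_vecMulVec,
    mul_vecMulVec, mul_vecMulVec, trace_vecMulVec, star_mulVec, star_star,
    ← dotProduct_mulVec, dotProduct_comm, ← mulVec_mulVec]

theorem star_vec_dotProduct_kronecker_projVec_mulVec (σ : Matrix m m ℂ) (v : n → ℂ)
    (X : Matrix n m ℂ) :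
    star (vec X) ⬝ᵥ (σ ⊗ₖ projVec v) *ᵥ vec X
      = star (star v ᵥ* X) ⬝ᵥ σ *ᵥ (star v ᵥ* X) := by
  rw [kronecker_mulVec_vec, star_vec_dotProduct_vec, projVec_eq_vecMulVec, vecMulVec_mul,
    vecMulVec_mul, mul_vecMulVec, trace_vecMulVec, star_vecMul, star_star, vecMul_transpose]

end Kronecker

section Cut

variable {d1 d2 : ℕ}

theorem ctens_eq_submatrix_kronecker (σ : Matrix (Fin d1 × Fin d1) (Fin d1 × Fin d1) ℂ)
    (τ : Matrix (Fin d2 × Fin d2) (Fin d2 × Fin d2) ℂ) :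
    ctens σ τ = (σ ⊗ₖ τ).submatrix (Equiv.prodProdProdComm _ _ _ _)
      (Equiv.prodProdProdComm _ _ _ _) :=
  rfl

theorem star_dotProduct_ctens_mulVec (σ : Matrix (Fin d1 × Fin d1) (Fin d1 × Fin d1) ℂ)
    (τ : Matrix (Fin d2 × Fin d2) (Fin d2 × Fin d2) ℂ)
    (x : (Fin d1 × Fin d2) × (Fin d1 × Fin d2) → ℂ) :
    star x ⬝ᵥ ctens σ τ *ᵥ x
      = star (x ∘ (Equiv.prodProdProdComm _ _ _ _).symm) ⬝ᵥ
          (σ ⊗ₖ τ) *ᵥ (x ∘ (Equiv.prodProdProdComm _ _ _ _).symm) := by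
  rw [ctens_eq_submatrix_kronecker, submatrix_mulVec_equiv, ← comp_equiv_symm_dotProduct]
  rfl

abbrev productVec (α β : Matrix (Fin d1) (Fin d2) ℂ) :
    (Fin d1 × Fin d2) × (Fin d1 × Fin d2) → ℂ :=
  prodVec (fun p => α p.1 p.2) (fun p => β p.1 p.2)

theorem productVec_comp_prodProdProdComm_symm (α β : Matrix (Fin d1) (Fin d2) ℂ) :
    productVec α β ∘ (Equiv.prodProdProdComm _ _ _ _).symm = vec (αᵀ ⊗ₖ βᵀ) :=
  rfl

end Cut

section Schmidt

variable {d : ℕ}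

theorem star_schmidtVec (μ : Fin d → ℝ) : star (schmidtVec μ) = vec (diagC μ) := by
  ext ⟨i, j⟩
  by_cases h : i = j
  · subst h; simp [schmidtVec, diagC]
  · simp [schmidtVec, diagC, h, Ne.symm h]

theorem transpose_diagC (μ : Fin d → ℝ) : (diagC μ)ᵀ = diagC μ :=
  diagonal_transpose _

end Schmidt

theorem trace_conjTranspose_transpose_mul_transpose {m n : Type*} [Fintype m] [Fintype n]
    (M : Matrix m n ℂ) : ((Mᵀ)ᴴ * Mᵀ).trace = (Mᴴ * M).trace := by
  rw [conjTranspose_transpose_eq_transpose_conjTranspose, ← transpose_mul, trace_transpose,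
    trace_mul_comm]

theorem witnessW_eq {d1 d2 : ℕ} (μ1 : Fin d1 → ℝ) (μ2 : Fin d2 → ℝ) (ε : ℝ) :
    witnessW μ1 μ2 ε
      = ctens (projVec (schmidtVec μ1)) 1 + ctens 1 (projVec (schmidtVec μ2))
        - ((2 + ε : ℝ) : ℂ) • ctens (projVec (schmidtVec μ1)) (projVec (schmidtVec μ2)) := by
  ext p q
  simp only [witnessW, ctens, Matrix.sub_apply, Matrix.add_apply, Matrix.smul_apply, of_apply,
    Complex.real_smul, smul_eq_mul]
  push_cast
  ring

section ProductVectors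

variable {d1 d2 : ℕ} (μ1 : Fin d1 → ℝ) (μ2 : Fin d2 → ℝ) (α β : Matrix (Fin d1) (Fin d2) ℂ)

theorem star_productVec_dotProduct_ctens_projVec_one_mulVec :
    star (productVec α β) ⬝ᵥ ctens (projVec (schmidtVec μ1)) 1 *ᵥ productVec α β
      = ((βᵀ * diagC μ1 * α)ᴴ * (βᵀ * diagC μ1 * α)).trace := by
  rw [star_dotProduct_ctens_mulVec, productVec_comp_prodProdProdComm_symm,
    star_vec_dotProduct_projVec_kronecker_mulVec, one_mulVec, star_schmidtVec,
    kronecker_mulVec_vec, transpose_transpose, star_vec_dotProduct_vec]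

theorem star_productVec_dotProduct_ctens_one_projVec_mulVec :
    star (productVec α β) ⬝ᵥ ctens 1 (projVec (schmidtVec μ2)) *ᵥ productVec α β
      = ((α * diagC μ2 * βᵀ)ᴴ * (α * diagC μ2 * βᵀ)).trace := by
  rw [star_dotProduct_ctens_mulVec, productVec_comp_prodProdProdComm_symm,
    star_vec_dotProduct_kronecker_projVec_mulVec, one_mulVec, star_schmidtVec,
    vec_vecMul_kronecker, transpose_transpose, star_vec_dotProduct_vec,
    ← trace_conjTranspose_transpose_mul_transpose]
  simp only [transpose_mul, transpose_transpose, transpose_diagC, Matrix.mul_assoc]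

theorem star_productVec_dotProduct_ctens_projVec_projVec_mulVec :
    star (productVec α β) ⬝ᵥ
        ctens (projVec (schmidtVec μ1)) (projVec (schmidtVec μ2)) *ᵥ productVec α β
      = ((‖(α * diagC μ2 * βᵀ * diagC μ1).trace‖ ^ 2 : ℝ) : ℂ) := by
  rw [star_dotProduct_ctens_mulVec, productVec_comp_prodProdProdComm_symm,
    star_vec_dotProduct_projVec_kronecker_mulVec, star_dotProduct_projVec_mulVec,
    star_schmidtVec, star_schmidtVec, kronecker_mulVec_vec, transpose_transpose,
    vec_dotProduct_vec, transpose_diagC]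
  simp only [← Matrix.mul_assoc]
  rw [trace_mul_comm]
  simp only [Matrix.mul_assoc]

end ProductVectors

theorem witness_expectation_on_product_vectors_general {d1 d2 : ℕ}
    (μ1 : Fin d1 → ℝ) (μ2 : Fin d2 → ℝ)
    (ε : ℝ) (α β : Matrix (Fin d1) (Fin d2) ℂ) :
    star (prodVec (fun p => α p.1 p.2) (fun p => β p.1 p.2)) ⬝ᵥ
        (witnessW μ1 μ2 ε).mulVec
          (prodVec (fun p => α p.1 p.2) (fun p => β p.1 p.2))
      = ((βᵀ * diagC μ1 * α)ᴴ * (βᵀ * diagC μ1 * α)).trace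
        + ((α * diagC μ2 * βᵀ)ᴴ * (α * diagC μ2 * βᵀ)).trace
        - (((2 + ε) * ‖(α * diagC μ2 * βᵀ * diagC μ1).trace‖ ^ 2 : ℝ) : ℂ) := by
  rw [witnessW_eq, sub_mulVec, add_mulVec, smul_mulVec, dotProduct_sub, dotProduct_add,
    dotProduct_smul, star_productVec_dotProduct_ctens_projVec_one_mulVec,
    star_productVec_dotProduct_ctens_one_projVec_mulVec,
    star_productVec_dotProduct_ctens_projVec_projVec_mulVec, smul_eq_mul, Complex.ofReal_mul]

theorem witness_expectation_on_product_vectors {d1 d2 : ℕ}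
    (μ1 : Fin d1 → ℝ) (μ2 : Fin d2 → ℝ)
    (h1pos : ∀ i, 0 ≤ μ1 i) (h1norm : ∑ i, μ1 i ^ 2 = 1)
    (h2pos : ∀ i, 0 ≤ μ2 i) (h2norm : ∑ i, μ2 i ^ 2 = 1)
    (ε : ℝ) (α β : Matrix (Fin d1) (Fin d2) ℂ) :
    star (prodVec (fun p => α p.1 p.2) (fun p => β p.1 p.2)) ⬝ᵥ
        (witnessW μ1 μ2 ε).mulVec
          (prodVec (fun p => α p.1 p.2) (fun p => β p.1 p.2))
      = ((βᵀ * diagC μ1 * α)ᴴ * (βᵀ * diagC μ1 * α)).trace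
        + ((α * diagC μ2 * βᵀ)ᴴ * (α * diagC μ2 * βᵀ)).trace
        - (((2 + ε) * ‖(α * diagC μ2 * βᵀ * diagC μ1).trace‖ ^ 2 : ℝ) : ℂ) :=
  witness_expectation_on_product_vectors_general μ1 μ2 ε α β
end

section
/- Let μ1 ∈ ℝ^{d1} and μ2 ∈ ℝ^{d2} be vectors of nonnegative reals with Σ_i μ1_i² = 1 and Σ_i μ2_i² = 1, identified with the diagonal matrices diag(μ1) and diag(μ2). Then the following are equivalent: (a) there exists ε > 0 such that for all complex d1×d2 matrices α and β, Tr((βᵀ μ1 α)ᴴ (βᵀ μ1 α)) + Tr((α μ2 βᵀ)ᴴ (α μ2 βᵀ)) ≥ (2+ε)·|Tr(α μ2 βᵀ μ1)|²; (b) the multisets of nonzero entries of μ1 and of μ2 are different. (In the language of the paper: the canonical witness W_ε(ψ1,ψ2) can be chosen nontrivial, i.e. with ε > 0 while remaining positive on all product vectors, exactly when the two pure states ψ1 and ψ2 do not have the same Schmidt coefficients.) -/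
open Matrix BigOperators

/-- The multiset of nonzero entries of `μ`. -/
noncomputable def nzMultiset {d : ℕ} (μ : Fin d → ℝ) : Multiset ℝ :=
  Multiset.filter (fun x => x ≠ 0) (Finset.univ.val.map μ)

namespace SchmidtAux

lemma nzMultiset_eq {d : ℕ} (μ : Fin d → ℝ) :
    nzMultiset μ = (Multiset.filter (fun i => μ i ≠ 0) Finset.univ.val).map μ := by
  unfold nzMultiset
  rw [Multiset.filter_map]
  rfl

noncomputable def msq {m n : ℕ} (X : Matrix (Fin m) (Fin n) ℂ) : ℝ :=
  ∑ i, ∑ j, Complex.normSq (X i j)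

lemma msq_nonneg {m n : ℕ} (X : Matrix (Fin m) (Fin n) ℂ) : 0 ≤ msq X :=
  Finset.sum_nonneg fun _ _ => Finset.sum_nonneg fun _ _ => Complex.normSq_nonneg _

lemma trace_conjTranspose_mul_self {m n : ℕ} (X : Matrix (Fin m) (Fin n) ℂ) :
    ((Xᴴ * X).trace) = (msq X : ℂ) := by
  rw [Matrix.trace, msq]
  push_cast
  rw [Finset.sum_comm]
  congr 1; ext i
  simp [Matrix.diag, Matrix.mul_apply, Matrix.conjTranspose_apply, Complex.normSq_eq_conj_mul_self]

lemma msq_smul {m n : ℕ} (c : ℂ) (X : Matrix (Fin m) (Fin n) ℂ) :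
    msq (c • X) = Complex.normSq c * msq X := by
  simp [msq, Finset.mul_sum, Complex.normSq_mul]

lemma trace_mul_diagC {d : ℕ} (A : Matrix (Fin d) (Fin d) ℂ) (μ : Fin d → ℝ) :
    (A * diagC μ).trace = ∑ j, A j j * (μ j : ℂ) := by
  simp [Matrix.trace, diagC, Matrix.diag, Matrix.mul_apply, Matrix.diagonal]

lemma diagC_conjTranspose {d : ℕ} (μ : Fin d → ℝ) : (diagC μ)ᴴ = diagC μ := by
  have hstar : (star fun i => (μ i : ℂ)) = fun i => (μ i : ℂ) :=
    funext fun i => Complex.conj_ofReal _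
  rw [diagC, Matrix.diagonal_conjTranspose, hstar]

lemma diagC_sq_trace {d : ℕ} (μ : Fin d → ℝ) :
    ((diagC μ)ᴴ * diagC μ).trace = ((∑ j, μ j ^ 2 : ℝ) : ℂ) := by
  rw [diagC_conjTranspose, trace_mul_diagC]
  have : ∀ j, diagC μ j j = (μ j : ℂ) := fun j => by simp [diagC]
  simp_rw [this]
  push_cast
  apply Finset.sum_congr rfl
  intros
  ring

theorem det_swap_id {d1 d2 : ℕ} (P : Matrix (Fin d1) (Fin d2) ℂ) (Q : Matrix (Fin d2) (Fin d1) ℂ)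
    {z : ℂ} (hz : z ≠ 0) :
    (z • 1 - P * Q).det * z ^ d2 = (z • 1 - Q * P).det * z ^ d1 := by
  have e1 : ((-z⁻¹) • P) * Q = (-z⁻¹) • (P * Q) := Matrix.smul_mul _ _ _
  have e2 : Q * ((-z⁻¹) • P) = (-z⁻¹) • (Q * P) := Matrix.mul_smul _ _ _
  have hzz : z • ((-z⁻¹) • (P * Q)) = -(P * Q) := by
    rw [smul_smul]; field_simp; exact neg_one_smul _ _
  have hzz2 : z • ((-z⁻¹) • (Q * P)) = -(Q * P) := by
    rw [smul_smul]; field_simp; exact neg_one_smul _ _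
  have h1 : z • (1 : Matrix (Fin d1) (Fin d1) ℂ) - P * Q
      = z • (1 + ((-z⁻¹) • P) * Q) := by
    rw [e1, smul_add, hzz, sub_eq_add_neg]
  have h2 : z • (1 : Matrix (Fin d2) (Fin d2) ℂ) - Q * P
      = z • (1 + Q * ((-z⁻¹) • P)) := by
    rw [e2, smul_add, hzz2, sub_eq_add_neg]
  rw [h1, h2, Matrix.det_smul, Matrix.det_smul, Matrix.det_one_add_mul_comm]
  simp only [Fintype.card_fin]
  ring

def goodPair {d1 d2 : ℕ} (μ1 : Fin d1 → ℝ) (μ2 : Fin d2 → ℝ)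
    (A : Matrix (Fin d2) (Fin d2) ℂ) (B : Matrix (Fin d1) (Fin d1) ℂ) : Prop :=
  (A * diagC μ2).trace = 1 ∧ (B * diagC μ1).trace = 1 ∧
    ∀ z : ℂ, z ≠ 0 →
      (z • 1 - B * diagC μ1).det * z ^ d2 = (z • 1 - diagC μ2 * A).det * z ^ d1

theorem goodPair_realizable {d1 d2 : ℕ} (μ1 : Fin d1 → ℝ) (μ2 : Fin d2 → ℝ)
    (α β : Matrix (Fin d1) (Fin d2) ℂ)
    (ht : (α * diagC μ2 * βᵀ * diagC μ1).trace ≠ 0) :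
    goodPair μ1 μ2
      ((α * diagC μ2 * βᵀ * diagC μ1).trace⁻¹ • (βᵀ * diagC μ1 * α))
      ((α * diagC μ2 * βᵀ * diagC μ1).trace⁻¹ • (α * diagC μ2 * βᵀ)) := by
  set t := (α * diagC μ2 * βᵀ * diagC μ1).trace with hT
  refine ⟨?_, ?_, ?_⟩
  · have key : ((βᵀ * diagC μ1 * α) * diagC μ2).trace = t := by
      rw [Matrix.mul_assoc (βᵀ * diagC μ1) α (diagC μ2), Matrix.trace_mul_comm,
        ← Matrix.mul_assoc, hT, Matrix.mul_assoc α (diagC μ2) βᵀ]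
    rw [Matrix.smul_mul, Matrix.trace_smul, key, smul_eq_mul, inv_mul_cancel₀ ht]
  · rw [Matrix.smul_mul, Matrix.trace_smul, ← hT, smul_eq_mul, inv_mul_cancel₀ ht]
  · intro z hz
    have hB : (t⁻¹ • (α * diagC μ2 * βᵀ)) * diagC μ1
        = (t⁻¹ • α) * (diagC μ2 * βᵀ * diagC μ1) := by
      simp only [Matrix.smul_mul, Matrix.mul_assoc]
    have hA : diagC μ2 * (t⁻¹ • (βᵀ * diagC μ1 * α))
        = (diagC μ2 * βᵀ * diagC μ1) * (t⁻¹ • α) := by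
      simp only [Matrix.mul_smul, Matrix.smul_mul, Matrix.mul_assoc]
    rw [hB, hA]
    exact det_swap_id _ _ hz
-- expansion of the distance to the diagonal matrix
lemma dist_diag_expand {d : ℕ} (A : Matrix (Fin d) (Fin d) ℂ) (μ : Fin d → ℝ) :
    (∑ j, ∑ k, Complex.normSq (A j k - diagC μ j k))
      = msq A + (∑ j, μ j ^ 2) - 2 * ((A * diagC μ).trace).re := by
  have expand : ∀ j k, Complex.normSq (A j k - diagC μ j k)
      = Complex.normSq (A j k) + Complex.normSq (diagC μ j k)
        - 2 * (A j k * (starRingEnd ℂ) (diagC μ j k)).re :=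
    fun j k => Complex.normSq_sub _ _
  simp only [expand]
  have h1 : ∀ j, ∑ k, (Complex.normSq (A j k) + Complex.normSq (diagC μ j k)
      - 2 * (A j k * (starRingEnd ℂ) (diagC μ j k)).re)
      = (∑ k, Complex.normSq (A j k)) + (∑ k, Complex.normSq (diagC μ j k))
        - 2 * (∑ k, (A j k * (starRingEnd ℂ) (diagC μ j k)).re) := by
    intro j
    rw [Finset.sum_sub_distrib, Finset.sum_add_distrib, Finset.mul_sum]
  simp only [h1]
  rw [Finset.sum_sub_distrib, Finset.sum_add_distrib, ← Finset.mul_sum]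
  have h2 : ∀ j, ∑ k, Complex.normSq (diagC μ j k) = μ j ^ 2 := by
    intro j
    rw [Finset.sum_eq_single j]
    · simp [diagC, Matrix.diagonal, Complex.normSq, pow_two]
    · intro k _ hk
      simp [diagC, Matrix.diagonal_apply_ne _ (Ne.symm hk)]
    · simp
  have h3 : ∀ j, ∑ k, (A j k * (starRingEnd ℂ) (diagC μ j k)).re = (A j j * (μ j : ℂ)).re := by
    intro j
    rw [Finset.sum_eq_single j]
    · simp [diagC, Matrix.diagonal]
    · intro k _ hk
      simp [diagC, Matrix.diagonal_apply_ne _ (Ne.symm hk)]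
    · simp
  simp only [h2, h3]
  rw [trace_mul_diagC, Complex.re_sum, msq]

lemma eq_diag_of_msq_le {d1 d2 : ℕ} {μ1 : Fin d1 → ℝ} {μ2 : Fin d2 → ℝ}
    {A : Matrix (Fin d2) (Fin d2) ℂ} {B : Matrix (Fin d1) (Fin d1) ℂ}
    (h1norm : ∑ i, μ1 i ^ 2 = 1) (h2norm : ∑ i, μ2 i ^ 2 = 1)
    (htrA : (A * diagC μ2).trace = 1) (htrB : (B * diagC μ1).trace = 1)
    (hsum : msq A + msq B ≤ 2) : A = diagC μ2 ∧ B = diagC μ1 := by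
  have TA := dist_diag_expand A μ2
  have TB := dist_diag_expand B μ1
  rw [h2norm, htrA] at TA
  rw [h1norm, htrB] at TB
  simp only [Complex.one_re] at TA TB
  have hTA0 : 0 ≤ ∑ j, ∑ k, Complex.normSq (A j k - diagC μ2 j k) :=
    Finset.sum_nonneg fun _ _ => Finset.sum_nonneg fun _ _ => Complex.normSq_nonneg _
  have hTB0 : 0 ≤ ∑ j, ∑ k, Complex.normSq (B j k - diagC μ1 j k) :=
    Finset.sum_nonneg fun _ _ => Finset.sum_nonneg fun _ _ => Complex.normSq_nonneg _
  have hA0 : ∑ j, ∑ k, Complex.normSq (A j k - diagC μ2 j k) = 0 := by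
    rw [TA]; rw [TB] at hTB0; linarith
  have hB0 : ∑ j, ∑ k, Complex.normSq (B j k - diagC μ1 j k) = 0 := by
    rw [TB]; rw [TA] at hTA0; linarith
  constructor
  · ext j k
    have := (Finset.sum_eq_zero_iff_of_nonneg (fun j _ =>
      Finset.sum_nonneg fun _ _ => Complex.normSq_nonneg _)).mp hA0 j (Finset.mem_univ j)
    have := (Finset.sum_eq_zero_iff_of_nonneg (fun k _ =>
      Complex.normSq_nonneg _)).mp this k (Finset.mem_univ k)
    have := Complex.normSq_eq_zero.mp this
    exact sub_eq_zero.mp this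
  · ext j k
    have := (Finset.sum_eq_zero_iff_of_nonneg (fun j _ =>
      Finset.sum_nonneg fun _ _ => Complex.normSq_nonneg _)).mp hB0 j (Finset.mem_univ j)
    have := (Finset.sum_eq_zero_iff_of_nonneg (fun k _ =>
      Complex.normSq_nonneg _)).mp this k (Finset.mem_univ k)
    have := Complex.normSq_eq_zero.mp this
    exact sub_eq_zero.mp this

lemma det_diag_form {d : ℕ} (ν : Fin d → ℝ) (z : ℂ) :
    (z • (1 : Matrix (Fin d) (Fin d) ℂ) - diagC ν * diagC ν).det
      = ∏ i, (z - ((ν i : ℂ))^2) := by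
  rw [diagC, Matrix.diagonal_mul_diagonal, Matrix.smul_one_eq_diagonal,
    Matrix.diagonal_sub, Matrix.det_diagonal]
  simp [pow_two]

lemma nz_sq_eq_of_det {d1 d2 : ℕ} {μ1 : Fin d1 → ℝ} {μ2 : Fin d2 → ℝ}
    (hdet : ∀ z : ℂ, z ≠ 0 →
      (∏ i, (z - ((μ1 i : ℂ))^2)) * z ^ d2 = (∏ j, (z - ((μ2 j : ℂ))^2)) * z ^ d1) :
    Multiset.filter (fun x => x ≠ 0) (Finset.univ.val.map (fun i => ((μ1 i : ℂ))^2))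
      = Multiset.filter (fun x => x ≠ 0) (Finset.univ.val.map (fun j => ((μ2 j : ℂ))^2)) := by
  set m1 : Multiset ℂ := Finset.univ.val.map (fun i => ((μ1 i : ℂ))^2) with hm1
  set m2 : Multiset ℂ := Finset.univ.val.map (fun j => ((μ2 j : ℂ))^2) with hm2
  set p : Polynomial ℂ := (m1.map fun r => Polynomial.X - Polynomial.C r).prod
      * Polynomial.X ^ d2 with hp
  set q : Polynomial ℂ := (m2.map fun r => Polynomial.X - Polynomial.C r).prod
      * Polynomial.X ^ d1 with hq
  have heval : ∀ (z : ℂ) (m : Multiset ℂ),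
      ((m.map fun r => Polynomial.X - Polynomial.C r).prod).eval z
        = (m.map fun r => z - r).prod := by
    intro z m
    rw [Polynomial.eval_multiset_prod, Multiset.map_map]
    congr 1
    apply Multiset.map_congr rfl
    intro r _
    simp
  have hpq : p = q := by
    apply Polynomial.eq_of_infinite_eval_eq
    apply Set.Infinite.mono (s := ({0}ᶜ : Set ℂ))
    · intro z hz
      have hz' : z ≠ 0 := hz
      simp only [Set.mem_setOf_eq, hp, hq, Polynomial.eval_mul, Polynomial.eval_pow,
        Polynomial.eval_X, heval]
      have e1 : (m1.map fun r => z - r).prod = ∏ i, (z - ((μ1 i : ℂ))^2) := by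
        rw [hm1, Multiset.map_map, Finset.prod_eq_multiset_prod]; rfl
      have e2 : (m2.map fun r => z - r).prod = ∏ j, (z - ((μ2 j : ℂ))^2) := by
        rw [hm2, Multiset.map_map, Finset.prod_eq_multiset_prod]; rfl
      rw [e1, e2]
      exact hdet z hz'
    · exact (Set.finite_singleton 0).infinite_compl
  have hmonic : ∀ m : Multiset ℂ, ((m.map fun r => Polynomial.X - Polynomial.C r).prod).Monic :=
    fun m => Polynomial.monic_multiset_prod_of_monic _ _ fun r _ => Polynomial.monic_X_sub_C r
  have hproots : p.roots = m1 + d2 • ({0} : Multiset ℂ) := by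
    rw [hp, Polynomial.roots_mul (((hmonic m1).mul (Polynomial.monic_X_pow d2)).ne_zero),
      Polynomial.roots_multiset_prod_X_sub_C, Polynomial.roots_pow, Polynomial.roots_X]
  have hqroots : q.roots = m2 + d1 • ({0} : Multiset ℂ) := by
    rw [hq, Polynomial.roots_mul (((hmonic m2).mul (Polynomial.monic_X_pow d1)).ne_zero),
      Polynomial.roots_multiset_prod_X_sub_C, Polynomial.roots_pow, Polynomial.roots_X]
  have hroots : m1 + d2 • ({0} : Multiset ℂ) = m2 + d1 • ({0} : Multiset ℂ) := by
    rw [← hproots, ← hqroots, hpq]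
  have hfilter0 : ∀ n : ℕ, Multiset.filter (fun x => x ≠ 0) (n • ({0} : Multiset ℂ)) = 0 := by
    intro n
    rw [Multiset.nsmul_singleton]
    rw [Multiset.filter_eq_nil]
    intro a ha
    simp [Multiset.eq_of_mem_replicate ha]
  have := congrArg (Multiset.filter (fun x => x ≠ 0)) hroots
  rwa [Multiset.filter_add, Multiset.filter_add, hfilter0, hfilter0, add_zero, add_zero] at this

lemma nzMultiset_from_sq {d : ℕ} (μ : Fin d → ℝ) (hpos : ∀ i, 0 ≤ μ i) :
    (Multiset.filter (fun x => x ≠ 0)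
        (Finset.univ.val.map (fun i => ((μ i : ℂ))^2))).map (fun z => Real.sqrt z.re)
      = nzMultiset μ := by
  rw [Multiset.filter_map, Multiset.map_map, nzMultiset_eq]
  have hcong : Multiset.filter ((fun x : ℂ => x ≠ 0) ∘ fun i => ((μ i : ℂ))^2)
        Finset.univ.val
      = Multiset.filter (fun i => μ i ≠ 0) Finset.univ.val := by
    apply Multiset.filter_congr
    simp only [Function.comp_apply]
    intro i _
    constructor
    · intro h h0; exact h (by simp [h0])
    · intro h h0
      exact h (by exact_mod_cast pow_eq_zero_iff (n := 2) (by norm_num) |>.mp (by exact_mod_cast h0))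
  rw [hcong]
  apply Multiset.map_congr rfl
  intro i _
  have : (((μ i : ℂ))^2).re = (μ i)^2 := by
    rw [← Complex.ofReal_pow, Complex.ofReal_re]
  simp only [Function.comp_apply, this]
  exact Real.sqrt_sq (hpos i)

theorem exists_min_good {d1 d2 : ℕ} (μ1 : Fin d1 → ℝ) (μ2 : Fin d2 → ℝ)
    (hgap : ∀ A B, goodPair μ1 μ2 A B → ¬ (msq A + msq B ≤ 2)) :
    ∃ ε : ℝ, 0 < ε ∧ ε ≤ 1 ∧
      ∀ A B, goodPair μ1 μ2 A B → 2 + ε ≤ msq A + msq B := by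
  classical
  set X := Matrix (Fin d2) (Fin d2) ℂ × Matrix (Fin d1) (Fin d1) ℂ
  have hmsq_cont1 : Continuous fun p : X => msq p.1 :=
    continuous_finset_sum _ fun i _ => continuous_finset_sum _ fun j _ =>
      Complex.continuous_normSq.comp ((continuous_fst.matrix_elem i j))
  have hmsq_cont2 : Continuous fun p : X => msq p.2 :=
    continuous_finset_sum _ fun i _ => continuous_finset_sum _ fun j _ =>
      Complex.continuous_normSq.comp ((continuous_snd.matrix_elem i j))
  set K : Set X := {p | goodPair μ1 μ2 p.1 p.2 ∧ msq p.1 + msq p.2 ≤ 4} with hK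
  have hKclosed : IsClosed K := by
    have c1 : IsClosed {p : X | (p.1 * diagC μ2).trace = 1} :=
      isClosed_eq ((continuous_fst.matrix_mul continuous_const).matrix_trace) continuous_const
    have c2 : IsClosed {p : X | (p.2 * diagC μ1).trace = 1} :=
      isClosed_eq ((continuous_snd.matrix_mul continuous_const).matrix_trace) continuous_const
    have c3 : IsClosed {p : X | ∀ z : ℂ, z ≠ 0 →
        (z • 1 - p.2 * diagC μ1).det * z ^ d2 = (z • 1 - diagC μ2 * p.1).det * z ^ d1} := by
      have : {p : X | ∀ z : ℂ, z ≠ 0 →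
          (z • 1 - p.2 * diagC μ1).det * z ^ d2 = (z • 1 - diagC μ2 * p.1).det * z ^ d1}
          = ⋂ (z : {z : ℂ // z ≠ 0}), {p : X |
            ((z : ℂ) • 1 - p.2 * diagC μ1).det * (z : ℂ) ^ d2
              = ((z : ℂ) • 1 - diagC μ2 * p.1).det * (z : ℂ) ^ d1} := by
        ext p
        simp only [Set.mem_setOf_eq, Set.mem_iInter, Subtype.forall]
      rw [this]
      refine isClosed_iInter fun z => isClosed_eq ?_ ?_
      · exact ((continuous_const.sub (continuous_snd.matrix_mul continuous_const)).matrix_det).mul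
          continuous_const
      · exact ((continuous_const.sub (continuous_const.matrix_mul continuous_fst)).matrix_det).mul
          continuous_const
    have c4 : IsClosed {p : X | msq p.1 + msq p.2 ≤ 4} :=
      isClosed_le (hmsq_cont1.add hmsq_cont2) continuous_const
    have : K = ({p : X | (p.1 * diagC μ2).trace = 1} ∩ {p : X | (p.2 * diagC μ1).trace = 1}
        ∩ {p : X | ∀ z : ℂ, z ≠ 0 →
          (z • 1 - p.2 * diagC μ1).det * z ^ d2 = (z • 1 - diagC μ2 * p.1).det * z ^ d1})
        ∩ {p : X | msq p.1 + msq p.2 ≤ 4} := by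
      ext p
      simp only [hK, Set.mem_setOf_eq, Set.mem_inter_iff, goodPair]
      tauto
    rw [this]
    exact ((c1.inter c2).inter c3).inter c4
  have hKcompact : IsCompact K := by
    have hbox : IsCompact ((Set.univ.pi fun _ : Fin d2 => Set.univ.pi fun _ : Fin d2 =>
        Metric.closedBall (0:ℂ) 2) ×ˢ (Set.univ.pi fun _ : Fin d1 => Set.univ.pi fun _ : Fin d1 =>
        Metric.closedBall (0:ℂ) 2)) :=
      (isCompact_univ_pi fun _ => isCompact_univ_pi fun _ => isCompact_closedBall _ _).prod
        (isCompact_univ_pi fun _ => isCompact_univ_pi fun _ => isCompact_closedBall _ _)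
    refine IsCompact.of_isClosed_subset hbox hKclosed ?_
    rintro ⟨A, B⟩ ⟨_, hle⟩
    have hBnn : (0:ℝ) ≤ msq B :=
      Finset.sum_nonneg fun _ _ => Finset.sum_nonneg fun _ _ => Complex.normSq_nonneg _
    have hAnn : (0:ℝ) ≤ msq A :=
      Finset.sum_nonneg fun _ _ => Finset.sum_nonneg fun _ _ => Complex.normSq_nonneg _
    have entry_bound : ∀ {n m : ℕ} (X : Matrix (Fin n) (Fin m) ℂ), msq X ≤ 4 →
        ∀ i j, X i j ∈ Metric.closedBall (0:ℂ) 2 := by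
      intro n m X hX i j
      have h1 : Complex.normSq (X i j) ≤ ∑ k, Complex.normSq (X i k) :=
        Finset.single_le_sum (fun k _ => Complex.normSq_nonneg _) (Finset.mem_univ j)
      have h2 : (∑ k, Complex.normSq (X i k)) ≤ msq X :=
        Finset.single_le_sum (f := fun i => ∑ k, Complex.normSq (X i k))
          (fun i _ => Finset.sum_nonneg fun _ _ => Complex.normSq_nonneg _) (Finset.mem_univ i)
      have h3 : Complex.normSq (X i j) ≤ 4 := by linarith
      rw [Metric.mem_closedBall, dist_zero_right]
      have : ‖X i j‖ = Real.sqrt (Complex.normSq (X i j)) := by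
        rw [Complex.norm_def]
      rw [this]
      calc Real.sqrt (Complex.normSq (X i j)) ≤ Real.sqrt 4 := Real.sqrt_le_sqrt h3
        _ = 2 := by
            rw [show (4:ℝ) = 2^2 by norm_num, Real.sqrt_sq (by norm_num : (0:ℝ) ≤ 2)]
    constructor
    · intro i _
      intro j _
      exact entry_bound A (by linarith) i j
    · intro i _
      intro j _
      exact entry_bound B (by linarith) i j
  -- extract minimum
  rcases Set.eq_empty_or_nonempty K with hKe | hKne
  · refine ⟨1, one_pos, le_refl 1, fun A B hgp => ?_⟩
    by_contra hlt
    push_neg at hlt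
    have : (A, B) ∈ K := ⟨hgp, by linarith⟩
    rw [hKe] at this
    exact this
  · obtain ⟨p0, hp0K, hp0min⟩ := hKcompact.exists_isMinOn hKne
      ((hmsq_cont1.add hmsq_cont2).continuousOn)
    set m := msq p0.1 + msq p0.2 with hm
    have hm2 : 2 < m := by
      rcases lt_or_ge 2 m with h | h
      · exact h
      · exact absurd h (by simpa using hgap p0.1 p0.2 hp0K.1)
    refine ⟨min (m - 2) 1, by simp [hm2], min_le_right _ _, fun A B hgp => ?_⟩
    rcases le_or_gt (msq A + msq B) 4 with h4 | h4
    · have : (A, B) ∈ K := ⟨hgp, h4⟩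
      have := hp0min this
      simp only [Set.mem_setOf_eq, Pi.add_apply] at this
      have hmin_le : min (m - 2) 1 ≤ m - 2 := min_le_left _ _
      simp only [hm] at this ⊢
      linarith [this]
    · have : min (m - 2) 1 ≤ 1 := min_le_right _ _
      linarith

-- selection matrix lemmas
lemma sel1 {d n : ℕ} (s : Fin n → Fin d) (hs : Function.Injective s) (ν : Fin d → ℂ) :
    (Matrix.of fun (i : Fin d) (m : Fin n) => if i = s m then (1:ℂ) else 0)ᵀ
      * Matrix.diagonal ν
      * (Matrix.of fun (i : Fin d) (m : Fin n) => if i = s m then (1:ℂ) else 0)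
      = Matrix.diagonal (ν ∘ s) := by
  ext m m'
  rw [Matrix.mul_assoc, Matrix.mul_apply]
  simp only [Matrix.transpose_apply, Matrix.of_apply, Matrix.diagonal_mul, Matrix.of_apply]
  rw [Finset.sum_eq_single (s m)]
  · simp only [if_pos rfl, one_mul]
    by_cases h : m = m'
    · subst h; simp [Matrix.diagonal]
    · have : ¬ (s m = s m') := fun hc => h (hs hc)
      simp [Matrix.diagonal, this, h]
  · intro i _ hi
    rw [if_neg hi, zero_mul]
  · simp

lemma sel2 {d n : ℕ} (s : Fin n → Fin d) (hs : Function.Injective s)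
    (ν : Fin n → ℂ) (ν' : Fin d → ℂ)
    (hzero : ∀ j, (∀ m, s m ≠ j) → ν' j = 0) (hval : ∀ m, ν m = ν' (s m)) :
    (Matrix.of fun (i : Fin d) (m : Fin n) => if i = s m then (1:ℂ) else 0)
      * Matrix.diagonal ν
      * (Matrix.of fun (i : Fin d) (m : Fin n) => if i = s m then (1:ℂ) else 0)ᵀ
      = Matrix.diagonal ν' := by
  ext j k
  rw [Matrix.mul_assoc, Matrix.mul_apply]
  simp only [Matrix.of_apply, Matrix.diagonal_mul, Matrix.transpose_apply]
  by_cases hj : ∃ m, s m = j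
  · obtain ⟨m, hm⟩ := hj
    rw [Finset.sum_eq_single m]
    · rw [if_pos hm.symm, one_mul]
      by_cases hjk : j = k
      · subst hjk
        rw [if_pos hm.symm, mul_one, Matrix.diagonal_apply_eq, hval, hm]
      · rw [if_neg (fun hc : k = s m => hjk ((hc.trans hm).symm)), mul_zero,
          Matrix.diagonal_apply_ne _ hjk]
    · intro m' _ hm'
      rw [if_neg fun hc : j = s m' => hm' (hs (by rw [← hc, hm]))]
      rw [zero_mul]
    · simp
  · push_neg at hj
    rw [Finset.sum_eq_zero]
    · by_cases hjk : j = k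
      · subst hjk
        rw [Matrix.diagonal_apply_eq, hzero j hj]
      · rw [Matrix.diagonal_apply_ne _ hjk]
    · intro m _
      rw [if_neg fun hc : j = s m => hj m hc.symm, zero_mul]

lemma rel_to_list {ι κ : Type*} {r : ι → κ → Prop} :
    ∀ {s : Multiset ι} {t : Multiset κ}, Multiset.Rel r s t →
      ∃ L : List (ι × κ), (↑(L.map Prod.fst) : Multiset ι) = s
        ∧ (↑(L.map Prod.snd) : Multiset κ) = t ∧ ∀ p ∈ L, r p.1 p.2 := by
  intro s t h
  induction h with
  | zero => exact ⟨[], by simp, by simp, by simp⟩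
  | @cons a b s' t' hab hst ih =>
    obtain ⟨L, h1, h2, h3⟩ := ih
    refine ⟨(a, b) :: L, by simp [← h1], by simp [← h2], ?_⟩
    rintro p hp
    rcases List.mem_cons.mp hp with rfl | hp'
    · exact hab
    · exact h3 p hp'


theorem construction {d1 d2 : ℕ} {μ1 : Fin d1 → ℝ} {μ2 : Fin d2 → ℝ}
    (hEq : nzMultiset μ1 = nzMultiset μ2) :
    ∃ α : Matrix (Fin d1) (Fin d2) ℂ,
      αᵀ * diagC μ1 * α = diagC μ2 ∧ α * diagC μ2 * αᵀ = diagC μ1 := by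
  classical
  set t1 := Multiset.filter (fun i => μ1 i ≠ 0) Finset.univ.val with ht1
  set t2 := Multiset.filter (fun j => μ2 j ≠ 0) Finset.univ.val with ht2
  have hEq' : t1.map μ1 = t2.map μ2 := by
    rw [← nzMultiset_eq, ← nzMultiset_eq]; exact hEq
  have hrel : Multiset.Rel (fun i j => μ1 i = μ2 j) t1 t2 :=
    Multiset.rel_map.mp (Multiset.rel_eq.mpr hEq')
  obtain ⟨L, h1, h2, h3⟩ := rel_to_list hrel
  set n := L.length with hn
  set x : Fin n → Fin d1 := fun m => (L.get m).1 with hxdef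
  set y : Fin n → Fin d2 := fun m => (L.get m).2 with hydef
  have hnd1 : (L.map Prod.fst).Nodup := by
    rw [← Multiset.coe_nodup, h1]
    exact Multiset.Nodup.filter _ Finset.univ.nodup
  have hnd2 : (L.map Prod.snd).Nodup := by
    rw [← Multiset.coe_nodup, h2]
    exact Multiset.Nodup.filter _ Finset.univ.nodup
  have hlen1 : (L.map Prod.fst).length = n := by simp [hn]
  have hlen2 : (L.map Prod.snd).length = n := by simp [hn]
  have hx_inj : Function.Injective x := by
    intro m m' h
    have hget := List.nodup_iff_injective_get.mp hnd1
    have e : ∀ m : Fin n, (L.map Prod.fst).get ⟨m.1, by rw [hlen1]; exact m.2⟩ = x m := by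
      intro m
      simp [hxdef, List.get_eq_getElem, List.getElem_map]
    have := hget (a₁ := ⟨m.1, by rw [hlen1]; exact m.2⟩) (a₂ := ⟨m'.1, by rw [hlen1]; exact m'.2⟩)
      (by rw [e m, e m', h])
    have h12 := congrArg Fin.val this
    exact Fin.ext h12
  have hy_inj : Function.Injective y := by
    intro m m' h
    have hget := List.nodup_iff_injective_get.mp hnd2
    have e : ∀ m : Fin n, (L.map Prod.snd).get ⟨m.1, by rw [hlen2]; exact m.2⟩ = y m := by
      intro m
      simp [hydef, List.get_eq_getElem, List.getElem_map]
    have := hget (a₁ := ⟨m.1, by rw [hlen2]; exact m.2⟩) (a₂ := ⟨m'.1, by rw [hlen2]; exact m'.2⟩)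
      (by rw [e m, e m', h])
    have h12 := congrArg Fin.val this
    exact Fin.ext h12
  have hxr : ∀ i, μ1 i ≠ 0 ↔ ∃ m, x m = i := by
    intro i
    have hmem : i ∈ L.map Prod.fst ↔ μ1 i ≠ 0 := by
      rw [← Multiset.mem_coe, h1, ht1, Multiset.mem_filter]
      simp
    rw [← hmem, List.mem_iff_get]
    constructor
    · rintro ⟨m, hm⟩
      refine ⟨⟨m.1, by rw [← hlen1]; exact m.2⟩, ?_⟩
      rw [← hm]
      simp [hxdef, List.get_eq_getElem, List.getElem_map]
    · rintro ⟨m, hm⟩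
      refine ⟨⟨m.1, by rw [hlen1]; exact m.2⟩, ?_⟩
      rw [← hm]
      simp [hxdef, List.get_eq_getElem, List.getElem_map]
  have hyr : ∀ j, μ2 j ≠ 0 ↔ ∃ m, y m = j := by
    intro j
    have hmem : j ∈ L.map Prod.snd ↔ μ2 j ≠ 0 := by
      rw [← Multiset.mem_coe, h2, ht2, Multiset.mem_filter]
      simp
    rw [← hmem, List.mem_iff_get]
    constructor
    · rintro ⟨m, hm⟩
      refine ⟨⟨m.1, by rw [← hlen2]; exact m.2⟩, ?_⟩
      rw [← hm]
      simp [hydef, List.get_eq_getElem, List.getElem_map]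
    · rintro ⟨m, hm⟩
      refine ⟨⟨m.1, by rw [hlen2]; exact m.2⟩, ?_⟩
      rw [← hm]
      simp [hydef, List.get_eq_getElem, List.getElem_map]
  have hv : ∀ m, μ1 (x m) = μ2 (y m) := by
    intro m
    exact h3 (L.get m) (List.get_mem L m)
  set U : Matrix (Fin d1) (Fin n) ℂ :=
    Matrix.of fun (i : Fin d1) (m : Fin n) => if i = x m then (1:ℂ) else 0 with hU
  set V : Matrix (Fin d2) (Fin n) ℂ :=
    Matrix.of fun (j : Fin d2) (m : Fin n) => if j = y m then (1:ℂ) else 0 with hV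
  refine ⟨U * Vᵀ, ?_, ?_⟩
  · have hMid : Uᵀ * Matrix.diagonal (fun i => (μ1 i : ℂ)) * U
        = Matrix.diagonal ((fun i => (μ1 i : ℂ)) ∘ x) := sel1 x hx_inj _
    have hdiag : Matrix.diagonal ((fun i => (μ1 i : ℂ)) ∘ x)
        = Matrix.diagonal ((fun j => (μ2 j : ℂ)) ∘ y) := by
      rw [show ((fun i => (μ1 i : ℂ)) ∘ x) = ((fun j => (μ2 j : ℂ)) ∘ y) from
        funext fun m => congrArg Complex.ofReal (hv m)]
    have hstep : (U * Vᵀ)ᵀ * diagC μ1 * (U * Vᵀ)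
        = V * (Uᵀ * Matrix.diagonal (fun i => (μ1 i : ℂ)) * U) * Vᵀ := by
      rw [diagC]
      simp only [Matrix.transpose_mul, Matrix.transpose_transpose, Matrix.mul_assoc]
    rw [hstep, hMid, hdiag]
    exact sel2 y hy_inj _ _
      (fun j hj => by
        by_contra hne
        have : μ2 j ≠ 0 := fun h0 => hne (by rw [h0]; simp)
        obtain ⟨m, hm⟩ := (hyr j).mp this
        exact hj m hm)
      (fun m => rfl)
  · have hMid : Vᵀ * Matrix.diagonal (fun j => (μ2 j : ℂ)) * V
        = Matrix.diagonal ((fun j => (μ2 j : ℂ)) ∘ y) := sel1 y hy_inj _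
    have hdiag : Matrix.diagonal ((fun j => (μ2 j : ℂ)) ∘ y)
        = Matrix.diagonal ((fun i => (μ1 i : ℂ)) ∘ x) := by
      rw [show ((fun i => (μ1 i : ℂ)) ∘ x) = ((fun j => (μ2 j : ℂ)) ∘ y) from
        funext fun m => congrArg Complex.ofReal (hv m)]
    have hstep : (U * Vᵀ) * diagC μ2 * (U * Vᵀ)ᵀ
        = U * (Vᵀ * Matrix.diagonal (fun j => (μ2 j : ℂ)) * V) * Uᵀ := by
      rw [diagC]
      simp only [Matrix.transpose_mul, Matrix.transpose_transpose, Matrix.mul_assoc]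
    rw [hstep, hMid, hdiag]
    exact sel2 x hx_inj _ _
      (fun i hi => by
        by_contra hne
        have : μ1 i ≠ 0 := fun h0 => hne (by rw [h0]; simp)
        obtain ⟨m, hm⟩ := (hxr i).mp this
        exact hi m hm)
      (fun m => rfl)

theorem main_gap {d1 d2 : ℕ} {μ1 : Fin d1 → ℝ} {μ2 : Fin d2 → ℝ}
    (h1pos : ∀ i, 0 ≤ μ1 i) (h1norm : ∑ i, μ1 i ^ 2 = 1)
    (h2pos : ∀ i, 0 ≤ μ2 i) (h2norm : ∑ i, μ2 i ^ 2 = 1)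
    (hne : nzMultiset μ1 ≠ nzMultiset μ2) :
    ∃ ε : ℝ, 0 < ε ∧ ε ≤ 1 ∧
      ∀ A B, goodPair μ1 μ2 A B → 2 + ε ≤ msq A + msq B := by
  apply exists_min_good
  intro A B hgp hle
  obtain ⟨hA, hB⟩ := eq_diag_of_msq_le h1norm h2norm hgp.1 hgp.2.1 hle
  apply hne
  have hdet := hgp.2.2
  rw [hA, hB] at hdet
  have hdet' : ∀ z : ℂ, z ≠ 0 →
      (∏ i, (z - ((μ1 i : ℂ))^2)) * z ^ d2 = (∏ j, (z - ((μ2 j : ℂ))^2)) * z ^ d1 := by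
    intro z hz
    have := hdet z hz
    rwa [det_diag_form, det_diag_form] at this
  have hsq := nz_sq_eq_of_det hdet'
  have e1 := nzMultiset_from_sq μ1 h1pos
  have e2 := nzMultiset_from_sq μ2 h2pos
  rw [← e1, ← e2, hsq]

end SchmidtAux

open SchmidtAux

theorem nontrivial_witness_iff_different_schmidt_coefficients
    {d1 d2 : ℕ} (μ1 : Fin d1 → ℝ) (μ2 : Fin d2 → ℝ)
    (h1pos : ∀ i, 0 ≤ μ1 i) (h1norm : ∑ i, μ1 i ^ 2 = 1)
    (h2pos : ∀ i, 0 ≤ μ2 i) (h2norm : ∑ i, μ2 i ^ 2 = 1) :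
    (∃ ε : ℝ, 0 < ε ∧ ∀ α β : Matrix (Fin d1) (Fin d2) ℂ,
        (2 + ε) * ‖(α * diagC μ2 * βᵀ * diagC μ1).trace‖ ^ 2 ≤
          (((βᵀ * diagC μ1 * α)ᴴ * (βᵀ * diagC μ1 * α)).trace
            + ((α * diagC μ2 * βᵀ)ᴴ * (α * diagC μ2 * βᵀ)).trace).re)
      ↔ nzMultiset μ1 ≠ nzMultiset μ2 := by
  constructor
  · rintro ⟨ε, hε, hineq⟩ hEq
    obtain ⟨α, hA, hB⟩ := construction hEq
    have h := hineq α α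
    have ht : (α * diagC μ2 * αᵀ * diagC μ1).trace = 1 := by
      rw [hB, trace_mul_diagC]
      have hdg : ∀ j, diagC μ1 j j = (μ1 j : ℂ) := fun j => by simp [diagC]
      simp_rw [hdg]
      calc ∑ j, (μ1 j : ℂ) * (μ1 j : ℂ) = ((∑ j, μ1 j ^ 2 : ℝ) : ℂ) := by
            push_cast
            apply Finset.sum_congr rfl
            intros
            ring
        _ = 1 := by rw [h1norm]; norm_num
    rw [ht, hA, hB] at h
    rw [diagC_sq_trace, diagC_sq_trace, h1norm, h2norm] at h
    simp at h
    linarith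
  · intro hne
    obtain ⟨ε, hε0, hε1, hmin⟩ := main_gap h1pos h1norm h2pos h2norm hne
    refine ⟨ε, hε0, fun α β => ?_⟩
    have hRHS : (((βᵀ * diagC μ1 * α)ᴴ * (βᵀ * diagC μ1 * α)).trace
        + ((α * diagC μ2 * βᵀ)ᴴ * (α * diagC μ2 * βᵀ)).trace).re
        = msq (βᵀ * diagC μ1 * α) + msq (α * diagC μ2 * βᵀ) := by
      rw [trace_conjTranspose_mul_self, trace_conjTranspose_mul_self,
        ← Complex.ofReal_add, Complex.ofReal_re]
    rw [hRHS]
    set t := (α * diagC μ2 * βᵀ * diagC μ1).trace with hT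
    by_cases ht : t = 0
    · rw [ht]
      simp only [norm_zero]
      have := msq_nonneg (βᵀ * diagC μ1 * α)
      have := msq_nonneg (α * diagC μ2 * βᵀ)
      nlinarith
    · have hgp := goodPair_realizable μ1 μ2 α β ht
      have hm := hmin _ _ hgp
      rw [msq_smul, msq_smul] at hm
      have hnt : Complex.normSq t⁻¹ = (‖t‖ ^ 2)⁻¹ := by
        rw [Complex.normSq_inv, Complex.normSq_eq_norm_sq]
      rw [hnt] at hm
      have hpos : 0 < ‖t‖ ^ 2 := by
        have h0 : 0 < ‖t‖ := norm_pos_iff.mpr ht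
        positivity
      have hm' : 2 + ε ≤ (msq (βᵀ * diagC μ1 * α) + msq (α * diagC μ2 * βᵀ)) / ‖t‖ ^ 2 := by
        rw [div_eq_mul_inv]
        calc 2 + ε ≤ (‖t‖ ^ 2)⁻¹ * msq (βᵀ * diagC μ1 * α)
            + (‖t‖ ^ 2)⁻¹ * msq (α * diagC μ2 * βᵀ) := hm
          _ = _ := by ring
      calc (2 + ε) * ‖t‖ ^ 2
          ≤ ((msq (βᵀ * diagC μ1 * α) + msq (α * diagC μ2 * βᵀ)) / ‖t‖ ^ 2) * ‖t‖ ^ 2 := by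
            exact mul_le_mul_of_nonneg_right hm' (le_of_lt hpos) 
        _ = msq (βᵀ * diagC μ1 * α) + msq (α * diagC μ2 * βᵀ) := by
            field_simp
end

section
/- Let ψ1 on ℂ^{d1}⊗ℂ^{d1} and ψ2 on ℂ^{d2}⊗ℂ^{d2} (d1, d2 ≥ 2) be pure states in Schmidt form whose multisets of nonzero Schmidt coefficients are different. Then for every p with 0 < p ≤ 1, the state ρ_p(ψ1,ψ2) is not separable across the A:B cut. -/
open Matrix BigOperators
open scoped ComplexOrder

/-- The state `ρ_p(ψ1,ψ2)`. -/
noncomputable def rhoP {d1 d2 : ℕ} (μ1 : Fin d1 → ℝ) (μ2 : Fin d2 → ℝ) (p : ℝ) :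
    Matrix ((Fin d1 × Fin d2) × (Fin d1 × Fin d2)) ((Fin d1 × Fin d2) × (Fin d1 × Fin d2)) ℂ :=
  ((1 - p) / (((d1 : ℝ) ^ 2 - 1) * ((d2 : ℝ) ^ 2 - 1))) •
      ctens (1 - projVec (schmidtVec μ1)) (1 - projVec (schmidtVec μ2))
    + p • ctens (projVec (schmidtVec μ1)) (projVec (schmidtVec μ2))

/-- Separability across the `A:B` cut: a finite convex combination of Kronecker
products of rank-one projections. -/
def IsSepState {d1 d2 : ℕ}
    (ρ : Matrix ((Fin d1 × Fin d2) × (Fin d1 × Fin d2)) ((Fin d1 × Fin d2) × (Fin d1 × Fin d2)) ℂ) :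
    Prop :=
  ∃ (N : ℕ) (c : Fin N → ℝ) (v w : Fin N → (Fin d1 × Fin d2) → ℂ),
    (∀ m, 0 ≤ c m) ∧
    ρ = ∑ m, (c m : ℂ) •
      Matrix.of (fun p q => (v m p.1 * star (v m q.1)) * (w m p.2 * star (w m q.2)))


noncomputable def qf {I : Type*} [Fintype I] (ρ : Matrix I I ℂ) (y : I → ℂ) : ℂ :=
  ∑ q, ∑ q', (starRingEnd ℂ) (y q) * ρ q q' * y q'

def pv {d1 d2 : ℕ} (a : Fin d1 × Fin d1 → ℂ) (b : Fin d2 × Fin d2 → ℂ) :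
    (Fin d1 × Fin d2) × (Fin d1 × Fin d2) → ℂ :=
  fun q => a (q.1.1, q.2.1) * b (q.1.2, q.2.2)

lemma qf_add {I : Type*} [Fintype I] (ρ σ : Matrix I I ℂ) (y : I → ℂ) :
    qf (ρ + σ) y = qf ρ y + qf σ y := by
  simp [qf, Matrix.add_apply, mul_add, add_mul, Finset.sum_add_distrib]

lemma qf_sub {I : Type*} [Fintype I] (ρ σ : Matrix I I ℂ) (y : I → ℂ) :
    qf (ρ - σ) y = qf ρ y - qf σ y := by
  simp [qf, Matrix.sub_apply, mul_sub, sub_mul, Finset.sum_sub_distrib]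

lemma qf_zero {I : Type*} [Fintype I] (y : I → ℂ) : qf (0 : Matrix I I ℂ) y = 0 := by
  simp [qf]

lemma qf_smul_real {I : Type*} [Fintype I] (s : ℝ) (ρ : Matrix I I ℂ) (y : I → ℂ) :
    qf (s • ρ) y = (s : ℂ) * qf ρ y := by
  simp only [qf, Matrix.smul_apply, Complex.real_smul, Finset.mul_sum]
  apply Finset.sum_congr rfl; intro q _
  apply Finset.sum_congr rfl; intro q' _
  ring

lemma qf_smul_c {I : Type*} [Fintype I] (s : ℂ) (ρ : Matrix I I ℂ) (y : I → ℂ) :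
    qf (s • ρ) y = s * qf ρ y := by
  simp only [qf, Matrix.smul_apply, smul_eq_mul, Finset.mul_sum]
  apply Finset.sum_congr rfl; intro q _
  apply Finset.sum_congr rfl; intro q' _
  ring

lemma qf_sum {I : Type*} [Fintype I] {J : Type*} (s : Finset J)
    (M : J → Matrix I I ℂ) (y : I → ℂ) :
    qf (∑ m ∈ s, M m) y = ∑ m ∈ s, qf (M m) y := by
  classical
  induction s using Finset.induction_on with
  | empty => simp [qf_zero]
  | insert a s' h ih => rw [Finset.sum_insert h, qf_add, ih, Finset.sum_insert h]

lemma qf_one {I : Type*} [Fintype I] [DecidableEq I] (y : I → ℂ) :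
    qf (1 : Matrix I I ℂ) y = ∑ q, (starRingEnd ℂ) (y q) * y q := by
  classical
  simp [qf, Matrix.one_apply, mul_ite, ite_mul, Finset.sum_ite_eq]

lemma qf_proj {I : Type*} [Fintype I] (s y : I → ℂ) :
    qf (projVec s) y
      = (∑ q, (starRingEnd ℂ) (y q) * s q) * (∑ q, (starRingEnd ℂ) (s q) * y q) := by
  rw [Finset.sum_mul_sum]
  simp only [qf, projVec, Matrix.of_apply]
  apply Finset.sum_congr rfl; intro q _
  apply Finset.sum_congr rfl; intro q' _
  simp only [← starRingEnd_apply]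
  ring

lemma qf_rankone {I : Type*} [Fintype I] (x y : I → ℂ) :
    qf (Matrix.of fun p q => x p * star (x q)) y
      = (∑ q, (starRingEnd ℂ) (y q) * x q)
        * (starRingEnd ℂ) (∑ q, (starRingEnd ℂ) (y q) * x q) := by
  rw [map_sum, Finset.sum_mul_sum]
  simp only [qf, Matrix.of_apply]
  apply Finset.sum_congr rfl; intro q _
  apply Finset.sum_congr rfl; intro q' _
  simp only [← starRingEnd_apply, _root_.map_mul, Complex.conj_conj]
  ring

-- the index shuffle
def shuffle (d1 d2 : ℕ) :
    (((Fin d1 × Fin d2) × (Fin d1 × Fin d2)) × ((Fin d1 × Fin d2) × (Fin d1 × Fin d2)))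
    ≃ (((Fin d1 × Fin d1) × (Fin d1 × Fin d1)) × ((Fin d2 × Fin d2) × (Fin d2 × Fin d2))) where
  toFun x := (((x.1.1.1, x.1.2.1), (x.2.1.1, x.2.2.1)), ((x.1.1.2, x.1.2.2), (x.2.1.2, x.2.2.2)))
  invFun y := (((y.1.1.1, y.2.1.1), (y.1.1.2, y.2.1.2)), ((y.1.2.1, y.2.2.1), (y.1.2.2, y.2.2.2)))
  left_inv := fun _ => rfl
  right_inv := fun _ => rfl

lemma qf_ctens {d1 d2 : ℕ} (σ : Matrix (Fin d1 × Fin d1) (Fin d1 × Fin d1) ℂ)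
    (τ : Matrix (Fin d2 × Fin d2) (Fin d2 × Fin d2) ℂ)
    (a : Fin d1 × Fin d1 → ℂ) (b : Fin d2 × Fin d2 → ℂ) :
    qf (ctens σ τ) (pv a b) = qf σ a * qf τ b := by
  have key := Fintype.sum_equiv (shuffle d1 d2)
    (fun x => (starRingEnd ℂ) (pv a b x.1) * ctens σ τ x.1 x.2 * pv a b x.2)
    (fun y => ((starRingEnd ℂ) (a y.1.1) * σ y.1.1 y.1.2 * a y.1.2)
      * ((starRingEnd ℂ) (b y.2.1) * τ y.2.1 y.2.2 * b y.2.2))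
    (fun x => by
      simp only [pv, ctens, Matrix.of_apply, shuffle, Equiv.coe_fn_mk, _root_.map_mul]
      ring)
  calc qf (ctens σ τ) (pv a b)
      = ∑ x : ((Fin d1 × Fin d2) × (Fin d1 × Fin d2)) × ((Fin d1 × Fin d2) × (Fin d1 × Fin d2)),
          (starRingEnd ℂ) (pv a b x.1) * ctens σ τ x.1 x.2 * pv a b x.2 := by
        rw [qf, ← Fintype.sum_prod_type']
    _ = ∑ y : ((Fin d1 × Fin d1) × (Fin d1 × Fin d1)) × ((Fin d2 × Fin d2) × (Fin d2 × Fin d2)),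
          ((starRingEnd ℂ) (a y.1.1) * σ y.1.1 y.1.2 * a y.1.2)
            * ((starRingEnd ℂ) (b y.2.1) * τ y.2.1 y.2.2 * b y.2.2) := key
    _ = (∑ y1 : (Fin d1 × Fin d1) × (Fin d1 × Fin d1),
          (starRingEnd ℂ) (a y1.1) * σ y1.1 y1.2 * a y1.2)
        * (∑ y2 : (Fin d2 × Fin d2) × (Fin d2 × Fin d2),
          (starRingEnd ℂ) (b y2.1) * τ y2.1 y2.2 * b y2.2) := by
        rw [Finset.sum_mul_sum, ← Fintype.sum_prod_type']
    _ = qf σ a * qf τ b := by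
        rw [qf, qf, ← Fintype.sum_prod_type', ← Fintype.sum_prod_type']

lemma expand_sub {I : Type*} [Fintype I] (f g : I → ℂ) (α : ℂ)
    (h1 : ∑ q, (starRingEnd ℂ) (g q) * f q = α)
    (h2 : ∑ q, Complex.normSq (g q) = 1) :
    ∑ q, Complex.normSq (f q - α * g q)
      = (∑ q, Complex.normSq (f q)) - Complex.normSq α := by
  have hfg : ∑ q, f q * (starRingEnd ℂ) (g q) = α := by
    rw [← h1]; exact Finset.sum_congr rfl fun q _ => by ring
  have hgf : ∑ q, g q * (starRingEnd ℂ) (f q) = (starRingEnd ℂ) α := by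
    have := congrArg (starRingEnd ℂ) h1
    rw [map_sum] at this
    rw [← this]
    exact Finset.sum_congr rfl fun q _ => by
      rw [_root_.map_mul, Complex.conj_conj]
  have hgg : ∑ q, g q * (starRingEnd ℂ) (g q) = 1 := by
    have : ∑ q, g q * (starRingEnd ℂ) (g q) = ((∑ q, Complex.normSq (g q) : ℝ) : ℂ) := by
      rw [Complex.ofReal_sum]
      exact Finset.sum_congr rfl fun q _ => Complex.mul_conj _
    rw [this, h2, Complex.ofReal_one]
  apply Complex.ofReal_injective
  rw [Complex.ofReal_sub, Complex.ofReal_sum, Complex.ofReal_sum]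
  have expand : ∀ q, ((Complex.normSq (f q - α * g q) : ℝ) : ℂ)
      = f q * (starRingEnd ℂ) (f q)
        - (starRingEnd ℂ) α * (f q * (starRingEnd ℂ) (g q))
        - α * (g q * (starRingEnd ℂ) (f q))
        + (α * (starRingEnd ℂ) α) * (g q * (starRingEnd ℂ) (g q)) := by
    intro q
    rw [← Complex.mul_conj]
    simp only [map_sub, _root_.map_mul]
    ring
  rw [Finset.sum_congr rfl fun q _ => expand q]
  rw [Finset.sum_add_distrib, Finset.sum_sub_distrib, Finset.sum_sub_distrib,
    ← Finset.mul_sum, ← Finset.mul_sum, ← Finset.mul_sum, hfg, hgf, hgg]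
  have h3 : ∀ q, (f q * (starRingEnd ℂ) (f q)) = ((Complex.normSq (f q) : ℝ) : ℂ) :=
    fun q => Complex.mul_conj _
  rw [Finset.sum_congr rfl fun q _ => h3 q, ← Complex.mul_conj]
  ring

lemma schmidt_ip {d : ℕ} (μ : Fin d → ℝ) (h : ∑ i, μ i ^ 2 = 1) :
    ∑ q, (starRingEnd ℂ) (schmidtVec μ q) * schmidtVec μ q = 1 := by
  rw [Fintype.sum_prod_type]
  simp only [schmidtVec, apply_ite (starRingEnd ℂ), map_zero, Complex.conj_ofReal,
    ite_mul, mul_ite, mul_zero, zero_mul, Finset.sum_ite_eq, Finset.mem_univ, if_true]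
  have : ∀ i : Fin d, (μ i : ℂ) * (μ i : ℂ) = ((μ i ^ 2 : ℝ) : ℂ) := by
    intro i; push_cast; ring
  rw [Finset.sum_congr rfl fun i _ => this i, ← Complex.ofReal_sum, h, Complex.ofReal_one]

lemma schmidt_normSq {d : ℕ} (μ : Fin d → ℝ) (h : ∑ i, μ i ^ 2 = 1) :
    ∑ q, Complex.normSq (schmidtVec μ q) = 1 := by
  rw [Fintype.sum_prod_type]
  simp only [schmidtVec, apply_ite Complex.normSq, Complex.normSq_ofReal, map_zero,
    Finset.sum_ite_eq, Finset.mem_univ, if_true]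
  rw [← h]
  exact Finset.sum_congr rfl fun i _ => by ring

def bb {I : Type*} [DecidableEq I] (q0 : I) : I → ℂ := fun q => if q = q0 then 1 else 0

section ipcomp
variable {d1 d2 : ℕ} (μ1 : Fin d1 → ℝ) (μ2 : Fin d2 → ℝ) (vv ww : Fin d1 × Fin d2 → ℂ)

lemma ipA_gen (q0 : Fin d2 × Fin d2) :
    ∑ q : (Fin d1 × Fin d2) × (Fin d1 × Fin d2),
      (starRingEnd ℂ) (pv (schmidtVec μ1) (bb q0) q) * (vv q.1 * ww q.2)
    = ∑ k, (μ1 k : ℂ) * vv (k, q0.1) * ww (k, q0.2) := by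
  obtain ⟨a0, b0⟩ := q0
  rw [Fintype.sum_prod_type]
  rw [Finset.sum_congr rfl fun qa _ => Fintype.sum_prod_type
    (fun qb => (starRingEnd ℂ) (pv (schmidtVec μ1) (bb (a0, b0)) (qa, qb)) * (vv qa * ww qb))]
  rw [Fintype.sum_prod_type]
  simp only [pv, bb, schmidtVec, _root_.map_mul, apply_ite (starRingEnd ℂ), map_zero, _root_.map_one,
    Complex.conj_ofReal, Prod.mk.injEq, ite_mul, zero_mul, one_mul, mul_ite, mul_zero,
    ite_and, Finset.sum_ite_irrel, Finset.sum_const_zero, Finset.sum_ite_eq, Finset.sum_ite_eq', Finset.mem_univ, if_true]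
  apply Finset.sum_congr rfl
  intro k _
  ring

lemma ipB_gen (q0 : Fin d1 × Fin d1) :
    ∑ q : (Fin d1 × Fin d2) × (Fin d1 × Fin d2),
      (starRingEnd ℂ) (pv (bb q0) (schmidtVec μ2) q) * (vv q.1 * ww q.2)
    = ∑ k, (μ2 k : ℂ) * vv (q0.1, k) * ww (q0.2, k) := by
  obtain ⟨a0, b0⟩ := q0
  rw [Fintype.sum_prod_type]
  rw [Finset.sum_congr rfl fun qa _ => Fintype.sum_prod_type
    (fun qb => (starRingEnd ℂ) (pv (bb (a0, b0)) (schmidtVec μ2) (qa, qb)) * (vv qa * ww qb))]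
  rw [Fintype.sum_prod_type]
  simp only [pv, bb, schmidtVec, _root_.map_mul, apply_ite (starRingEnd ℂ), map_zero, _root_.map_one,
    Complex.conj_ofReal, Prod.mk.injEq, ite_mul, zero_mul, one_mul, mul_ite, mul_zero,
    ite_and, Finset.sum_ite_irrel, Finset.sum_const_zero, Finset.sum_ite_eq, Finset.sum_ite_eq', Finset.mem_univ, if_true]
  apply Finset.sum_congr rfl
  intro k _
  ring

lemma ipalpha_gen :
    ∑ q : (Fin d1 × Fin d2) × (Fin d1 × Fin d2),
      (starRingEnd ℂ) (pv (schmidtVec μ1) (schmidtVec μ2) q) * (vv q.1 * ww q.2)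
    = ∑ i, ∑ j, (μ1 i : ℂ) * (μ2 j : ℂ) * vv (i, j) * ww (i, j) := by
  rw [Fintype.sum_prod_type]
  rw [Finset.sum_congr rfl fun qa _ => Fintype.sum_prod_type
    (fun qb => (starRingEnd ℂ) (pv (schmidtVec μ1) (schmidtVec μ2) (qa, qb)) * (vv qa * ww qb))]
  rw [Fintype.sum_prod_type]
  simp only [pv, schmidtVec, _root_.map_mul, apply_ite (starRingEnd ℂ), map_zero,
    Complex.conj_ofReal, ite_mul, zero_mul, mul_ite, mul_zero,
    Finset.sum_ite_eq, Finset.sum_ite_eq', Finset.mem_univ, if_true]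
  apply Finset.sum_congr rfl
  intro i _
  apply Finset.sum_congr rfl
  intro j _
  ring

lemma ovA_gen :
    ∑ q0 : Fin d2 × Fin d2, (starRingEnd ℂ) (schmidtVec μ2 q0)
        * (∑ k, (μ1 k : ℂ) * vv (k, q0.1) * ww (k, q0.2))
    = ∑ i, ∑ j, (μ1 i : ℂ) * (μ2 j : ℂ) * vv (i, j) * ww (i, j) := by
  rw [Fintype.sum_prod_type]
  simp only [schmidtVec, apply_ite (starRingEnd ℂ), map_zero, Complex.conj_ofReal,
    ite_mul, zero_mul, Finset.sum_ite_eq, Finset.mem_univ, if_true]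
  rw [Finset.sum_congr rfl fun i2 _ => Finset.mul_sum Finset.univ
    (fun k => (μ1 k : ℂ) * vv (k, i2) * ww (k, i2)) ((μ2 i2 : ℂ))]
  rw [Finset.sum_comm]
  apply Finset.sum_congr rfl
  intro i _
  apply Finset.sum_congr rfl
  intro j _
  ring

lemma ovB_gen :
    ∑ q0 : Fin d1 × Fin d1, (starRingEnd ℂ) (schmidtVec μ1 q0)
        * (∑ k, (μ2 k : ℂ) * vv (q0.1, k) * ww (q0.2, k))
    = ∑ i, ∑ j, (μ1 i : ℂ) * (μ2 j : ℂ) * vv (i, j) * ww (i, j) := by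
  rw [Fintype.sum_prod_type]
  simp only [schmidtVec, apply_ite (starRingEnd ℂ), map_zero, Complex.conj_ofReal,
    ite_mul, zero_mul, Finset.sum_ite_eq, Finset.mem_univ, if_true]
  rw [Finset.sum_congr rfl fun i1 _ => Finset.mul_sum Finset.univ
    (fun k => (μ2 k : ℂ) * vv (i1, k) * ww (i1, k)) ((μ1 i1 : ℂ))]
  apply Finset.sum_congr rfl
  intro i _
  apply Finset.sum_congr rfl
  intro j _
  ring

end ipcomp

lemma core_lemma {d1 d2 : ℕ} (μ1 : Fin d1 → ℝ) (μ2 : Fin d2 → ℝ)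
    (h1pos : ∀ i, 0 ≤ μ1 i) (h2pos : ∀ i, 0 ≤ μ2 i)
    (v w : Fin d1 × Fin d2 → ℂ) (α : ℂ) (hα : α ≠ 0)
    (hE1 : ∀ i2 j2, ∑ k, (μ1 k : ℂ) * v (k, i2) * w (k, j2)
        = α * (if i2 = j2 then (μ2 i2 : ℂ) else 0))
    (hE2 : ∀ i1 j1, ∑ k, (μ2 k : ℂ) * v (i1, k) * w (j1, k)
        = α * (if i1 = j1 then (μ1 i1 : ℂ) else 0)) :
    nzMultiset μ1 = nzMultiset μ2 := by
  classical
  -- Step 1: intertwining relations kill entries with mismatched coefficients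
  have hv : ∀ i j, μ1 i ≠ μ2 j → v (i, j) = 0 := by
    intro i j hij
    have h1 : ∑ k, ∑ l, (μ1 k : ℂ) * (μ2 l : ℂ) * v (i, l) * w (k, l) * v (k, j)
        = α * (μ1 i : ℂ) ^ 2 * v (i, j) := by
      have hk : ∀ k, (∑ l, (μ1 k : ℂ) * (μ2 l : ℂ) * v (i, l) * w (k, l) * v (k, j))
          = (μ1 k : ℂ) * v (k, j) * (α * (if i = k then (μ1 i : ℂ) else 0)) := by
        intro k
        rw [← hE2 i k, Finset.mul_sum]
        exact Finset.sum_congr rfl fun l _ => by ring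
      rw [Finset.sum_congr rfl fun k _ => hk k]
      simp [mul_ite, ite_mul, Finset.sum_ite_eq]
      ring
    have h2 : ∑ k, ∑ l, (μ1 k : ℂ) * (μ2 l : ℂ) * v (i, l) * w (k, l) * v (k, j)
        = α * (μ2 j : ℂ) ^ 2 * v (i, j) := by
      rw [Finset.sum_comm]
      have hl : ∀ l, (∑ k, (μ1 k : ℂ) * (μ2 l : ℂ) * v (i, l) * w (k, l) * v (k, j))
          = (μ2 l : ℂ) * v (i, l) * (α * (if j = l then (μ2 j : ℂ) else 0)) := by
        intro l
        rw [← hE1 j l, Finset.mul_sum]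
        exact Finset.sum_congr rfl fun k _ => by ring
      rw [Finset.sum_congr rfl fun l _ => hl l]
      simp [mul_ite, ite_mul, Finset.sum_ite_eq]
      ring
    have hne : (μ1 i : ℂ) ^ 2 ≠ (μ2 j : ℂ) ^ 2 := by
      intro h
      apply hij
      have : (μ1 i : ℝ) ^ 2 = (μ2 j : ℝ) ^ 2 := by exact_mod_cast h
      nlinarith [h1pos i, h2pos j]
    have h3 : α * ((μ1 i : ℂ) ^ 2 - (μ2 j : ℂ) ^ 2) * v (i, j) = 0 := by
      rw [h1] at h2; linear_combination h2
    rcases mul_eq_zero.mp h3 with h4 | h4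
    · rcases mul_eq_zero.mp h4 with h5 | h5
      · exact absurd h5 hα
      · exact absurd (sub_eq_zero.mp h5) hne
    · exact h4
  have hw : ∀ i j, μ1 i ≠ μ2 j → w (i, j) = 0 := by
    intro i j hij
    have h1 : ∑ k, ∑ l, (μ1 k : ℂ) * (μ2 l : ℂ) * v (k, l) * w (i, l) * w (k, j)
        = α * (μ1 i : ℂ) ^ 2 * w (i, j) := by
      have hk : ∀ k, (∑ l, (μ1 k : ℂ) * (μ2 l : ℂ) * v (k, l) * w (i, l) * w (k, j))
          = (μ1 k : ℂ) * w (k, j) * (α * (if k = i then (μ1 k : ℂ) else 0)) := by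
        intro k
        rw [← hE2 k i, Finset.mul_sum]
        exact Finset.sum_congr rfl fun l _ => by ring
      rw [Finset.sum_congr rfl fun k _ => hk k]
      simp [mul_ite, ite_mul, Finset.sum_ite_eq']
      ring
    have h2 : ∑ k, ∑ l, (μ1 k : ℂ) * (μ2 l : ℂ) * v (k, l) * w (i, l) * w (k, j)
        = α * (μ2 j : ℂ) ^ 2 * w (i, j) := by
      rw [Finset.sum_comm]
      have hl : ∀ l, (∑ k, (μ1 k : ℂ) * (μ2 l : ℂ) * v (k, l) * w (i, l) * w (k, j))
          = (μ2 l : ℂ) * w (i, l) * (α * (if l = j then (μ2 l : ℂ) else 0)) := by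
        intro l
        rw [← hE1 l j, Finset.mul_sum]
        exact Finset.sum_congr rfl fun k _ => by ring
      rw [Finset.sum_congr rfl fun l _ => hl l]
      simp [mul_ite, ite_mul, Finset.sum_ite_eq']
      ring
    have hne : (μ1 i : ℂ) ^ 2 ≠ (μ2 j : ℂ) ^ 2 := by
      intro h
      apply hij
      have : (μ1 i : ℝ) ^ 2 = (μ2 j : ℝ) ^ 2 := by exact_mod_cast h
      nlinarith [h1pos i, h2pos j]
    have h3 : α * ((μ1 i : ℂ) ^ 2 - (μ2 j : ℂ) ^ 2) * w (i, j) = 0 := by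
      rw [h1] at h2; linear_combination h2
    rcases mul_eq_zero.mp h3 with h4 | h4
    · rcases mul_eq_zero.mp h4 with h5 | h5
      · exact absurd h5 hα
      · exact absurd (sub_eq_zero.mp h5) hne
    · exact h4
  -- Step 2: equal multiplicities for each t ≠ 0
  have hcard : ∀ t : ℝ, t ≠ 0 →
      Fintype.card {i // μ1 i = t} = Fintype.card {j // μ2 j = t} := by
    intro t ht
    set m' := {i // μ1 i = t}
    set n' := {j // μ2 j = t}
    have htc : (t : ℂ) ≠ 0 := by exact_mod_cast ht
    set A : Matrix m' n' ℂ := Matrix.of fun i j => v (i.1, j.1) with hA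
    set B : Matrix m' n' ℂ := Matrix.of fun i j => w (i.1, j.1) with hB
    have hAB : A * B.transpose = Matrix.diagonal (fun _ : m' => α) := by
      ext i i'
      have base := hE2 i.1 i'.1
      have split : ∑ k, (μ2 k : ℂ) * v (i.1, k) * w (i'.1, k)
          = (t : ℂ) * ∑ j : n', v (i.1, j.1) * w (i'.1, j.1) := by
        rw [Finset.mul_sum]
        rw [← Finset.sum_subtype (Finset.univ.filter (fun j => μ2 j = t))
          (p := fun j => μ2 j = t) (fun j => by simp)
          (fun j => (t : ℂ) * (v (i.1, j) * w (i'.1, j)))]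
        rw [Finset.sum_filter]
        apply Finset.sum_congr rfl
        intro k _
        by_cases hk : μ2 k = t
        · simp [hk]; ring
        · have : v (i.1, k) = 0 := hv i.1 k (by rw [i.2]; exact fun h => hk h.symm)
          simp [hk, this]
      rw [split] at base
      have : (t:ℂ) * ∑ j : n', v (i.1, j.1) * w (i'.1, j.1)
          = (t:ℂ) * (if i = i' then α else 0) := by
        rw [base]
        by_cases h : i = i'
        · simp [h, i'.2, mul_comm]
        · have h' : i.1 ≠ i'.1 := fun hh => h (Subtype.ext hh)
          simp [h, h']
      have hfin := mul_left_cancel₀ htc this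
      show (A * Bᵀ) i i' = _
      rw [Matrix.mul_apply]
      simp only [Matrix.transpose_apply, hA, hB, Matrix.of_apply]
      rw [hfin, Matrix.diagonal_apply]
    have hBA : A.transpose * B = Matrix.diagonal (fun _ : n' => α) := by
      ext j j'
      have base := hE1 j.1 j'.1
      have split : ∑ k, (μ1 k : ℂ) * v (k, j.1) * w (k, j'.1)
          = (t : ℂ) * ∑ i : m', v (i.1, j.1) * w (i.1, j'.1) := by
        rw [Finset.mul_sum]
        rw [← Finset.sum_subtype (Finset.univ.filter (fun i => μ1 i = t))
          (p := fun i => μ1 i = t) (fun i => by simp)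
          (fun k => (t : ℂ) * (v (k, j.1) * w (k, j'.1)))]
        rw [Finset.sum_filter]
        apply Finset.sum_congr rfl
        intro k _
        by_cases hk : μ1 k = t
        · simp [hk]; ring
        · have : v (k, j.1) = 0 := hv k j.1 (by rw [j.2]; exact hk)
          simp [hk, this]
      rw [split] at base
      have : (t:ℂ) * ∑ i : m', v (i.1, j.1) * w (i.1, j'.1)
          = (t:ℂ) * (if j = j' then α else 0) := by
        rw [base]
        by_cases h : j = j'
        · simp [h, j'.2, mul_comm]
        · have h' : j.1 ≠ j'.1 := fun hh => h (Subtype.ext hh)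
          simp [h, h']
      have hfin := mul_left_cancel₀ htc this
      show (Aᵀ * B) j j' = _
      rw [Matrix.mul_apply]
      simp only [Matrix.transpose_apply, hA, hB, Matrix.of_apply]
      rw [hfin, Matrix.diagonal_apply]
    have hrank : ∀ {k : Type} [Fintype k] [DecidableEq k],
        (Matrix.diagonal (fun _ : k => α)).rank = Fintype.card k := by
      intro k _ _
      rw [Matrix.rank_diagonal]
      exact Fintype.card_congr (Equiv.subtypeUnivEquiv fun _ => hα)
    have le1 : Fintype.card m' ≤ Fintype.card n' := by
      have := Matrix.rank_mul_le_left A B.transpose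
      rw [hAB, hrank] at this
      exact this.trans (Matrix.rank_le_card_width A)
    have le2 : Fintype.card n' ≤ Fintype.card m' := by
      have := Matrix.rank_mul_le_left A.transpose B
      rw [hBA, hrank] at this
      exact this.trans (Matrix.rank_le_card_width A.transpose)
    exact le_antisymm le1 le2
  -- Step 3: conclude multiset equality
  ext a
  rw [nzMultiset, nzMultiset, Multiset.count_filter, Multiset.count_filter]
  by_cases ha : a ≠ 0
  · rw [if_pos ha, if_pos ha]
    rw [Multiset.count_map, Multiset.count_map]
    have e1 : Multiset.card (Multiset.filter (fun i => a = μ1 i) Finset.univ.val)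
        = Fintype.card {i // μ1 i = a} := by
      rw [← Finset.filter_val]
      rw [show (Finset.univ.filter (fun i => a = μ1 i)).val.card
          = (Finset.univ.filter (fun i => a = μ1 i)).card from rfl]
      rw [Fintype.card_subtype]
      congr 1
      apply Finset.filter_congr
      intro x _
      simp [eq_comm]
    have e2 : Multiset.card (Multiset.filter (fun j => a = μ2 j) Finset.univ.val)
        = Fintype.card {j // μ2 j = a} := by
      rw [← Finset.filter_val]
      rw [show (Finset.univ.filter (fun j => a = μ2 j)).val.card
          = (Finset.univ.filter (fun j => a = μ2 j)).card from rfl]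
      rw [Fintype.card_subtype]
      congr 1
      apply Finset.filter_congr
      intro x _
      simp [eq_comm]
    rw [e1, e2, hcard a ha]
  · push_neg at ha; subst ha; simp

theorem rhoP_entangled_of_different_schmidt_coefficients {d1 d2 : ℕ}
    (hd1 : 2 ≤ d1) (hd2 : 2 ≤ d2)
    (μ1 : Fin d1 → ℝ) (μ2 : Fin d2 → ℝ)
    (h1pos : ∀ i, 0 ≤ μ1 i) (h1norm : ∑ i, μ1 i ^ 2 = 1)
    (h2pos : ∀ i, 0 ≤ μ2 i) (h2norm : ∑ i, μ2 i ^ 2 = 1)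
    (hdiff : nzMultiset μ1 ≠ nzMultiset μ2)
    (p : ℝ) (hp0 : 0 < p) (hp1 : p ≤ 1) :
    ¬ IsSepState (rhoP μ1 μ2 p) := by
  rintro ⟨N, c, v, w, hc, hrep⟩
  classical
  have hs1 := schmidt_ip μ1 h1norm
  have hs2 := schmidt_ip μ2 h2norm
  have hns1 := schmidt_normSq μ1 h1norm
  have hns2 := schmidt_normSq μ2 h2norm
  -- quadratic form of the separable representation
  have hqf : ∀ y : (Fin d1 × Fin d2) × (Fin d1 × Fin d2) → ℂ,
      qf (rhoP μ1 μ2 p) y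
        = ∑ m, (c m : ℂ) * ((∑ q, (starRingEnd ℂ) (y q) * (v m q.1 * w m q.2))
            * (starRingEnd ℂ) (∑ q, (starRingEnd ℂ) (y q) * (v m q.1 * w m q.2))) := by
    intro y
    have hrep' : rhoP μ1 μ2 p = ∑ m, (c m : ℂ) •
        Matrix.of (fun p' q' => (fun q : (Fin d1 × Fin d2) × (Fin d1 × Fin d2) => v m q.1 * w m q.2) p'
          * star ((fun q : (Fin d1 × Fin d2) × (Fin d1 × Fin d2) => v m q.1 * w m q.2) q')) := by
      rw [hrep]
      apply Finset.sum_congr rfl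
      intro m _
      congr 1
      ext p' q'
      simp only [Matrix.of_apply, star_mul']
      ring
    rw [hrep', qf_sum]
    apply Finset.sum_congr rfl
    intro m _
    rw [qf_smul_c, qf_rankone]
  have key : ∀ (y : (Fin d1 × Fin d2) × (Fin d1 × Fin d2) → ℂ) (S : Fin N → ℂ),
      (∀ m, (∑ q, (starRingEnd ℂ) (y q) * (v m q.1 * w m q.2)) = S m) →
      qf (rhoP μ1 μ2 p) y = ∑ m, (c m : ℂ) * (S m * (starRingEnd ℂ) (S m)) := by
    intro y S hS
    rw [hqf y]
    exact Finset.sum_congr rfl fun m _ => by rw [hS m]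
  -- quadratic form of rhoP at product vectors
  have hpv : ∀ (a : Fin d1 × Fin d1 → ℂ) (b : Fin d2 × Fin d2 → ℂ),
      qf (rhoP μ1 μ2 p) (pv a b)
        = (((1 - p) / (((d1 : ℝ) ^ 2 - 1) * ((d2 : ℝ) ^ 2 - 1)) : ℝ) : ℂ)
            * (qf (1 - projVec (schmidtVec μ1)) a * qf (1 - projVec (schmidtVec μ2)) b)
          + ((p : ℝ) : ℂ) * (qf (projVec (schmidtVec μ1)) a * qf (projVec (schmidtVec μ2)) b) := by
    intro a b
    rw [rhoP, qf_add, qf_smul_real, qf_smul_real, qf_ctens, qf_ctens]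
  have h1sub : qf (1 - projVec (schmidtVec μ1)) (schmidtVec μ1) = 0 := by
    rw [qf_sub, qf_one, qf_proj, hs1]; ring
  have h2sub : qf (1 - projVec (schmidtVec μ2)) (schmidtVec μ2) = 0 := by
    rw [qf_sub, qf_one, qf_proj, hs2]; ring
  have h1proj : qf (projVec (schmidtVec μ1)) (schmidtVec μ1) = 1 := by
    rw [qf_proj, hs1]; ring
  have h2proj : qf (projVec (schmidtVec μ2)) (schmidtVec μ2) = 1 := by
    rw [qf_proj, hs2]; ring
  have hbb2 : ∀ q0 : Fin d2 × Fin d2, qf (projVec (schmidtVec μ2)) (bb q0)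
      = schmidtVec μ2 q0 * (starRingEnd ℂ) (schmidtVec μ2 q0) := by
    intro q0
    rw [qf_proj]
    congr 1
    · simp [bb, apply_ite (starRingEnd ℂ), ite_mul, Finset.sum_ite_eq']
    · simp [bb, mul_ite, Finset.sum_ite_eq']
  have hbb1 : ∀ q0 : Fin d1 × Fin d1, qf (projVec (schmidtVec μ1)) (bb q0)
      = schmidtVec μ1 q0 * (starRingEnd ℂ) (schmidtVec μ1 q0) := by
    intro q0
    rw [qf_proj]
    congr 1
    · simp [bb, apply_ite (starRingEnd ℂ), ite_mul, Finset.sum_ite_eq']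
    · simp [bb, mul_ite, Finset.sum_ite_eq']
  -- abbreviations
  set αx : Fin N → ℂ :=
    fun m => ∑ i, ∑ j, (μ1 i : ℂ) * (μ2 j : ℂ) * v m (i, j) * w m (i, j) with hαx
  set Ax : Fin N → Fin d2 × Fin d2 → ℂ :=
    fun m q0 => ∑ k, (μ1 k : ℂ) * v m (k, q0.1) * w m (k, q0.2) with hAx
  set Bx : Fin N → Fin d1 × Fin d1 → ℂ :=
    fun m q0 => ∑ k, (μ2 k : ℂ) * v m (q0.1, k) * w m (q0.2, k) with hBx
  -- equation 1
  have e1 : qf (rhoP μ1 μ2 p) (pv (schmidtVec μ1) (schmidtVec μ2))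
      = ∑ m, (c m : ℂ) * (αx m * (starRingEnd ℂ) (αx m)) :=
    key _ _ (fun m => ipalpha_gen μ1 μ2 (v m) (w m))
  have e1' : (∑ m, (c m : ℂ) * (αx m * (starRingEnd ℂ) (αx m))) = ((p : ℝ) : ℂ) := by
    rw [← e1, hpv, h1sub, h2sub, h1proj, h2proj]; ring
  have hQ1 : ∑ m, c m * Complex.normSq (αx m) = p := by
    simp only [Complex.mul_conj] at e1'
    exact_mod_cast e1'
  -- equation 2
  have e2 : ∀ q0 : Fin d2 × Fin d2, qf (rhoP μ1 μ2 p) (pv (schmidtVec μ1) (bb q0))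
      = ∑ m, (c m : ℂ) * (Ax m q0 * (starRingEnd ℂ) (Ax m q0)) :=
    fun q0 => key _ _ (fun m => ipA_gen μ1 (v m) (w m) q0)
  have e2' : ∑ q0 : Fin d2 × Fin d2, qf (rhoP μ1 μ2 p) (pv (schmidtVec μ1) (bb q0))
      = ((p : ℝ) : ℂ) := by
    rw [Finset.sum_congr rfl fun q0 _ => by rw [hpv, h1sub, h1proj, hbb2 q0]]
    simp only [zero_mul, mul_zero, one_mul, zero_add]
    rw [← Finset.mul_sum]
    have hone : ∑ q0 : Fin d2 × Fin d2, schmidtVec μ2 q0 * (starRingEnd ℂ) (schmidtVec μ2 q0) = 1 := by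
      rw [← hs2]; exact Finset.sum_congr rfl fun q0 _ => by ring
    rw [hone, mul_one]
  have e2'' : ∑ m, (c m : ℂ) * (∑ q0, (Ax m q0 * (starRingEnd ℂ) (Ax m q0))) = ((p : ℝ) : ℂ) := by
    calc ∑ m, (c m : ℂ) * (∑ q0, (Ax m q0 * (starRingEnd ℂ) (Ax m q0)))
        = ∑ m, ∑ q0, (c m : ℂ) * (Ax m q0 * (starRingEnd ℂ) (Ax m q0)) :=
          Finset.sum_congr rfl fun m _ => Finset.mul_sum _ _ _
      _ = ∑ q0, ∑ m, (c m : ℂ) * (Ax m q0 * (starRingEnd ℂ) (Ax m q0)) := Finset.sum_comm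
      _ = ∑ q0 : Fin d2 × Fin d2, qf (rhoP μ1 μ2 p) (pv (schmidtVec μ1) (bb q0)) :=
          Finset.sum_congr rfl fun q0 _ => (e2 q0).symm
      _ = ((p : ℝ) : ℂ) := e2'
  have hQ2 : ∑ m, c m * (∑ q0, Complex.normSq (Ax m q0)) = p := by
    simp only [Complex.mul_conj] at e2''
    exact_mod_cast e2''
  -- equation 3
  have e3 : ∀ q0 : Fin d1 × Fin d1, qf (rhoP μ1 μ2 p) (pv (bb q0) (schmidtVec μ2))
      = ∑ m, (c m : ℂ) * (Bx m q0 * (starRingEnd ℂ) (Bx m q0)) :=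
    fun q0 => key _ _ (fun m => ipB_gen μ2 (v m) (w m) q0)
  have e3' : ∑ q0 : Fin d1 × Fin d1, qf (rhoP μ1 μ2 p) (pv (bb q0) (schmidtVec μ2))
      = ((p : ℝ) : ℂ) := by
    rw [Finset.sum_congr rfl fun q0 _ => by rw [hpv, h2sub, h2proj, hbb1 q0]]
    simp only [zero_mul, mul_zero, one_mul, mul_one, zero_add]
    rw [← Finset.mul_sum]
    have hone : ∑ q0 : Fin d1 × Fin d1, schmidtVec μ1 q0 * (starRingEnd ℂ) (schmidtVec μ1 q0) = 1 := by
      rw [← hs1]; exact Finset.sum_congr rfl fun q0 _ => by ring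
    rw [hone, mul_one]
  have e3'' : ∑ m, (c m : ℂ) * (∑ q0, (Bx m q0 * (starRingEnd ℂ) (Bx m q0))) = ((p : ℝ) : ℂ) := by
    calc ∑ m, (c m : ℂ) * (∑ q0, (Bx m q0 * (starRingEnd ℂ) (Bx m q0)))
        = ∑ m, ∑ q0, (c m : ℂ) * (Bx m q0 * (starRingEnd ℂ) (Bx m q0)) :=
          Finset.sum_congr rfl fun m _ => Finset.mul_sum _ _ _
      _ = ∑ q0, ∑ m, (c m : ℂ) * (Bx m q0 * (starRingEnd ℂ) (Bx m q0)) := Finset.sum_comm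
      _ = ∑ q0 : Fin d1 × Fin d1, qf (rhoP μ1 μ2 p) (pv (bb q0) (schmidtVec μ2)) :=
          Finset.sum_congr rfl fun q0 _ => (e3 q0).symm
      _ = ((p : ℝ) : ℂ) := e3'
  have hQ3 : ∑ m, c m * (∑ q0, Complex.normSq (Bx m q0)) = p := by
    simp only [Complex.mul_conj] at e3''
    exact_mod_cast e3''
  -- expansion identities
  have hexpA : ∀ m, ∑ q0, Complex.normSq (Ax m q0 - αx m * schmidtVec μ2 q0)
      = (∑ q0, Complex.normSq (Ax m q0)) - Complex.normSq (αx m) :=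
    fun m => expand_sub (Ax m) (schmidtVec μ2) (αx m) (ovA_gen μ1 μ2 (v m) (w m)) hns2
  have hexpB : ∀ m, ∑ q0, Complex.normSq (Bx m q0 - αx m * schmidtVec μ1 q0)
      = (∑ q0, Complex.normSq (Bx m q0)) - Complex.normSq (αx m) :=
    fun m => expand_sub (Bx m) (schmidtVec μ1) (αx m) (ovB_gen μ1 μ2 (v m) (w m)) hns1
  -- the sum of nonnegative defects vanishes
  have hz : ∑ m, c m * ((∑ q0, Complex.normSq (Ax m q0 - αx m * schmidtVec μ2 q0))
      + (∑ q0, Complex.normSq (Bx m q0 - αx m * schmidtVec μ1 q0))) = 0 := by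
    calc ∑ m, c m * ((∑ q0, Complex.normSq (Ax m q0 - αx m * schmidtVec μ2 q0))
          + (∑ q0, Complex.normSq (Bx m q0 - αx m * schmidtVec μ1 q0)))
        = ∑ m, (c m * (∑ q0, Complex.normSq (Ax m q0))
            + c m * (∑ q0, Complex.normSq (Bx m q0))
            - 2 * (c m * Complex.normSq (αx m))) :=
          Finset.sum_congr rfl fun m _ => by rw [hexpA m, hexpB m]; ring
      _ = (∑ m, c m * (∑ q0, Complex.normSq (Ax m q0)))
            + (∑ m, c m * (∑ q0, Complex.normSq (Bx m q0)))
            - 2 * ∑ m, c m * Complex.normSq (αx m) := by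
          rw [Finset.sum_sub_distrib, Finset.sum_add_distrib, Finset.mul_sum]
      _ = p + p - 2 * p := by rw [hQ1, hQ2, hQ3]
      _ = 0 := by ring
  have hnnA : ∀ m, (0:ℝ) ≤ ∑ q0, Complex.normSq (Ax m q0 - αx m * schmidtVec μ2 q0) :=
    fun m => Finset.sum_nonneg fun _ _ => Complex.normSq_nonneg _
  have hnnB : ∀ m, (0:ℝ) ≤ ∑ q0, Complex.normSq (Bx m q0 - αx m * schmidtVec μ1 q0) :=
    fun m => Finset.sum_nonneg fun _ _ => Complex.normSq_nonneg _
  have hall : ∀ m, c m * ((∑ q0, Complex.normSq (Ax m q0 - αx m * schmidtVec μ2 q0))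
      + (∑ q0, Complex.normSq (Bx m q0 - αx m * schmidtVec μ1 q0))) = 0 := by
    intro m
    exact (Finset.sum_eq_zero_iff_of_nonneg
      (fun m _ => mul_nonneg (hc m) (add_nonneg (hnnA m) (hnnB m)))).mp hz m (Finset.mem_univ m)
  -- find a member with nonzero overlap
  have hex : ∃ m ∈ Finset.univ, c m * Complex.normSq (αx m) ≠ 0 := by
    apply Finset.exists_ne_zero_of_sum_ne_zero
    rw [hQ1]
    exact ne_of_gt hp0
  obtain ⟨m, -, hmne⟩ := hex
  have hcm : c m ≠ 0 := fun h => hmne (by rw [h]; ring)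
  have hαm : αx m ≠ 0 := fun h => hmne (by rw [h]; simp)
  have hrm0 : (∑ q0, Complex.normSq (Ax m q0 - αx m * schmidtVec μ2 q0))
      + (∑ q0, Complex.normSq (Bx m q0 - αx m * schmidtVec μ1 q0)) = 0 := by
    rcases mul_eq_zero.mp (hall m) with h | h
    · exact absurd h hcm
    · exact h
  have hAz : ∑ q0, Complex.normSq (Ax m q0 - αx m * schmidtVec μ2 q0) = 0 := by
    have := hnnA m; have := hnnB m; linarith
  have hBz : ∑ q0, Complex.normSq (Bx m q0 - αx m * schmidtVec μ1 q0) = 0 := by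
    have := hnnA m; have := hnnB m; linarith
  have hAeq : ∀ q0, Ax m q0 = αx m * schmidtVec μ2 q0 := by
    intro q0
    have h0 := (Finset.sum_eq_zero_iff_of_nonneg
      (fun q0 _ => Complex.normSq_nonneg _)).mp hAz q0 (Finset.mem_univ q0)
    exact sub_eq_zero.mp (Complex.normSq_eq_zero.mp h0)
  have hBeq : ∀ q0, Bx m q0 = αx m * schmidtVec μ1 q0 := by
    intro q0
    have h0 := (Finset.sum_eq_zero_iff_of_nonneg
      (fun q0 _ => Complex.normSq_nonneg _)).mp hBz q0 (Finset.mem_univ q0)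
    exact sub_eq_zero.mp (Complex.normSq_eq_zero.mp h0)
  -- conclude via the core lemma
  apply hdiff
  apply core_lemma μ1 μ2 h1pos h2pos (v m) (w m) (αx m) hαm
  · intro i2 j2
    exact hAeq (i2, j2)
  · intro i1 j1
    exact hBeq (i1, j1)
end

section
/- Let ψ1 on ℂ^{d1}⊗ℂ^{d1} and ψ2 on ℂ^{d2}⊗ℂ^{d2} be pure states in Schmidt form, both of Schmidt rank at least 2, with Schmidt coefficients ordered decreasingly (μ^{(i)}_1 ≥ μ^{(i)}_2 ≥ …), and let 0 ≤ p < 1 and N_i = 1/(d_i²−1). Then ρ_p(ψ1,ψ2)^{Γ_A} is positive semidefinite if and only if p/((1−p)·N1·N2) ≤ min{ (1−(μ^{(1)}_1)²)(1+μ^{(2)}_1 μ^{(2)}_2) / ((μ^{(1)}_1)² μ^{(2)}_1 μ^{(2)}_2), (1−(μ^{(2)}_1)²)(1+μ^{(1)}_1 μ^{(1)}_2) / ((μ^{(2)}_1)² μ^{(1)}_1 μ^{(1)}_2) }. -/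
open Matrix BigOperators
open scoped ComplexOrder

variable {d1 d2 d : ℕ}

lemma ctens_eq (σ : Matrix (Fin d1 × Fin d1) (Fin d1 × Fin d1) ℂ)
    (τ : Matrix (Fin d2 × Fin d2) (Fin d2 × Fin d2) ℂ) :
    ctens σ τ = (Matrix.kroneckerMap (· * ·) σ τ).submatrix
      (Equiv.prodProdProdComm (Fin d1) (Fin d2) (Fin d1) (Fin d2))
      (Equiv.prodProdProdComm (Fin d1) (Fin d2) (Fin d1) (Fin d2)) := rfl

lemma ctens_mul (σ σ' : Matrix (Fin d1 × Fin d1) (Fin d1 × Fin d1) ℂ)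
    (τ τ' : Matrix (Fin d2 × Fin d2) (Fin d2 × Fin d2) ℂ) :
    ctens σ τ * ctens σ' τ' = ctens (σ * σ') (τ * τ') := by
  simp only [ctens_eq, Matrix.submatrix_mul_equiv, Matrix.mul_kronecker_mul]

lemma ctens_one : ctens (1 : Matrix (Fin d1 × Fin d1) (Fin d1 × Fin d1) ℂ)
    (1 : Matrix (Fin d2 × Fin d2) (Fin d2 × Fin d2) ℂ) = 1 := by
  rw [ctens_eq, Matrix.one_kronecker_one, Matrix.submatrix_one_equiv]

lemma ctens_conjTranspose (σ : Matrix (Fin d1 × Fin d1) (Fin d1 × Fin d1) ℂ)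
    (τ : Matrix (Fin d2 × Fin d2) (Fin d2 × Fin d2) ℂ) :
    (ctens σ τ)ᴴ = ctens σᴴ τᴴ := by
  ext p q
  simp [ctens, Matrix.conjTranspose_apply, mul_comm]

lemma ctens_psd {σ : Matrix (Fin d1 × Fin d1) (Fin d1 × Fin d1) ℂ}
    {τ : Matrix (Fin d2 × Fin d2) (Fin d2 × Fin d2) ℂ}
    (hσ : σ.PosSemidef) (hτ : τ.PosSemidef) : (ctens σ τ).PosSemidef := by
  rw [ctens_eq]
  exact (hσ.kronecker hτ).submatrix _

noncomputable def Gm (μ : Fin d → ℝ) : Matrix (Fin d × Fin d) (Fin d × Fin d) ℂ :=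
  ptg (projVec (schmidtVec μ))

lemma Gm_apply (μ : Fin d → ℝ) (i j k l : Fin d) :
    Gm μ (i, j) (k, l) = (if k = j then (μ k : ℂ) else 0) * (if i = l then (μ i : ℂ) else 0) := by
  simp only [Gm, ptg, projVec, schmidtVec, Matrix.of_apply]
  split_ifs <;> simp

lemma Gm_isHermitian (μ : Fin d → ℝ) : (Gm μ).IsHermitian := by
  ext ⟨i, j⟩ ⟨k, l⟩
  simp only [Matrix.conjTranspose_apply, Gm_apply]
  split_ifs with h1 h2 h2 <;> subst_vars <;> simp <;> ring

lemma Gm_mulVec (μ : Fin d → ℝ) (x : Fin d × Fin d → ℂ) (i j : Fin d) :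
    (Gm μ *ᵥ x) (i, j) = ((μ i : ℂ) * (μ j : ℂ)) * x (j, i) := by
  rw [Matrix.mulVec]
  rw [show (dotProduct (Gm μ (i,j)) x) = ∑ q : Fin d × Fin d, Gm μ (i,j) q * x q from rfl]
  rw [Fintype.sum_prod_type]
  simp only [Gm_apply]
  rw [Finset.sum_eq_single j]
  · simp [mul_comm, mul_assoc, mul_left_comm]
  · intro b _ hb
    simp [hb]
  · simp

lemma psd_rsmul {n : Type*} [Fintype n] {M : Matrix n n ℂ} (hM : M.PosSemidef)
    {r : ℝ} (hr : 0 ≤ r) : (r • M).PosSemidef := by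
  refine Matrix.PosSemidef.of_dotProduct_mulVec_nonneg ?_ (fun x => ?_)
  · unfold Matrix.IsHermitian
    rw [Matrix.conjTranspose_smul, hM.1, star_trivial]
  · rw [Matrix.smul_mulVec, dotProduct_smul]
    have := hM.dotProduct_mulVec_nonneg x
    rw [show r • (dotProduct (star x) (M *ᵥ x)) = (r : ℂ) * (dotProduct (star x) (M *ᵥ x)) from Complex.real_smul]
    exact mul_nonneg (by exact_mod_cast Complex.zero_le_real.mpr hr) this

lemma qf_nonneg_of_herm {n : Type*} [Fintype n] {M : Matrix n n ℂ} (hM : M.IsHermitian)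
    (x : n → ℂ) (h : 0 ≤ (dotProduct (star x) (M *ᵥ x)).re) :
    0 ≤ dotProduct (star x) (M *ᵥ x) := by
  rw [Complex.nonneg_iff]
  refine ⟨h, ?_⟩
  have hst : star (dotProduct (star x) (M *ᵥ x)) = dotProduct (star x) (M *ᵥ x) := by
    rw [← Matrix.star_dotProduct_star, star_star, Matrix.star_mulVec, hM.eq,
      Matrix.dotProduct_mulVec]
  exact (Complex.conj_eq_iff_im.mp hst).symm

lemma sum_swap_normSq (x : Fin d × Fin d → ℂ) :
    ∑ P : Fin d × Fin d, Complex.normSq (x (P.2, P.1)) = ∑ P : Fin d × Fin d, Complex.normSq (x P) :=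
  Fintype.sum_equiv (Equiv.prodComm _ _) _ _ (fun ⟨i, j⟩ => rfl)

lemma qf_expand (μ : Fin d → ℝ) (b : ℝ) (x : Fin d × Fin d → ℂ) :
    dotProduct (star x) ((b • (1 : Matrix (Fin d × Fin d) (Fin d × Fin d) ℂ) - Gm μ) *ᵥ x)
      = (b : ℂ) * (∑ P : Fin d × Fin d, (Complex.normSq (x P) : ℂ))
        - ∑ P : Fin d × Fin d, ((μ P.1 * μ P.2 : ℝ) : ℂ) * (star (x P) * x (P.2, P.1)) := by
  rw [Matrix.sub_mulVec, dotProduct_sub]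
  congr 1
  · rw [Matrix.smul_mulVec, Matrix.one_mulVec, dotProduct_smul]
    rw [show b • (dotProduct (star x) x) = (b:ℂ) * dotProduct (star x) x from Complex.real_smul]
    congr 1
    rw [dotProduct]
    refine Finset.sum_congr rfl fun P _ => ?_
    simp only [Pi.star_apply]
    rw [mul_comm, Complex.star_def, Complex.mul_conj]
  · rw [dotProduct]
    refine Finset.sum_congr rfl fun P _ => ?_
    simp only [Pi.star_apply]
    rw [Gm_mulVec μ x P.1 P.2]
    push_cast
    ring

lemma psd_bound_sub (μ : Fin d → ℝ) (b : ℝ) (hb0 : 0 ≤ b)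
    (hpos : ∀ i, 0 ≤ μ i) (hb : ∀ i j, μ i * μ j ≤ b) :
    (b • (1 : Matrix (Fin d × Fin d) (Fin d × Fin d) ℂ) - Gm μ).PosSemidef := by
  have herm : (b • (1 : Matrix (Fin d × Fin d) (Fin d × Fin d) ℂ) - Gm μ).IsHermitian := by
    refine Matrix.IsHermitian.sub ?_ (Gm_isHermitian μ)
    unfold Matrix.IsHermitian
    rw [Matrix.conjTranspose_smul, Matrix.conjTranspose_one, star_trivial]
  refine Matrix.PosSemidef.of_dotProduct_mulVec_nonneg herm (fun x => qf_nonneg_of_herm herm x ?_)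
  rw [qf_expand]
  rw [Complex.sub_re, Complex.re_ofReal_mul, Complex.re_sum, Complex.re_sum]
  simp only [Complex.ofReal_re, Complex.re_ofReal_mul]
  rw [sub_nonneg]
  calc ∑ P : Fin d × Fin d, (μ P.1 * μ P.2) * (star (x P) * x (P.2, P.1)).re
      ≤ ∑ P : Fin d × Fin d, b * ((Complex.normSq (x P) + Complex.normSq (x (P.2, P.1))) / 2) := by
        refine Finset.sum_le_sum fun P _ => ?_
        have h1 : (star (x P) * x (P.2, P.1)).re ≤ ‖x P‖ * ‖x (P.2, P.1)‖ := by
          calc (star (x P) * x (P.2, P.1)).re ≤ ‖star (x P) * x (P.2, P.1)‖ :=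
            Complex.re_le_norm _
          _ = ‖x P‖ * ‖x (P.2, P.1)‖ := by
            rw [norm_mul]; simp
        have h2 : ‖x P‖ * ‖x (P.2, P.1)‖ * 2
            ≤ ‖x P‖ ^ 2 + ‖x (P.2, P.1)‖ ^ 2 := by nlinarith [sq_nonneg (‖x P‖ - ‖x (P.2, P.1)‖)]
        have h3 : 0 ≤ μ P.1 * μ P.2 := mul_nonneg (hpos _) (hpos _)
        have h4 := hb P.1 P.2
        have h5 : (0:ℝ) ≤ ‖x P‖ * ‖x (P.2, P.1)‖ :=
          mul_nonneg (norm_nonneg _) (norm_nonneg _)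
        rw [← Complex.sq_norm, ← Complex.sq_norm]
        nlinarith
    _ = b * ∑ P : Fin d × Fin d, Complex.normSq (x P) := by
        rw [← Finset.mul_sum]
        congr 1
        rw [show ∀ s : Finset (Fin d × Fin d), ∑ P ∈ s, (Complex.normSq (x P) + Complex.normSq (x (P.2,P.1)))/2 = (∑ P ∈ s, Complex.normSq (x P))/2 + (∑ P ∈ s, Complex.normSq (x (P.2,P.1)))/2 from fun s => by rw [← Finset.sum_div, Finset.sum_add_distrib]; ring]
        rw [sum_swap_normSq]
        ring

lemma qf_expand_add (μ : Fin d → ℝ) (a : ℝ) (x : Fin d × Fin d → ℂ) :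
    dotProduct (star x) ((Gm μ + a • (1 : Matrix (Fin d × Fin d) (Fin d × Fin d) ℂ)) *ᵥ x)
      = (∑ P : Fin d × Fin d, ((μ P.1 * μ P.2 : ℝ) : ℂ) * (star (x P) * x (P.2, P.1)))
        + (a : ℂ) * (∑ P : Fin d × Fin d, (Complex.normSq (x P) : ℂ)) := by
  have := qf_expand μ (-a) x
  have h2 : (Gm μ + a • (1 : Matrix (Fin d × Fin d) (Fin d × Fin d) ℂ))
      = -((-a) • (1 : Matrix (Fin d × Fin d) (Fin d × Fin d) ℂ) - Gm μ) := by
    rw [neg_sub, neg_smul, sub_neg_eq_add]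
  rw [h2, Matrix.neg_mulVec, dotProduct_neg, this]
  push_cast
  ring

lemma psd_bound_add (μ : Fin d → ℝ) (a : ℝ) (ha : 0 ≤ a)
    (hpos : ∀ i, 0 ≤ μ i) (hb : ∀ i j, i ≠ j → μ i * μ j ≤ a) :
    (Gm μ + a • (1 : Matrix (Fin d × Fin d) (Fin d × Fin d) ℂ)).PosSemidef := by
  have herm : (Gm μ + a • (1 : Matrix (Fin d × Fin d) (Fin d × Fin d) ℂ)).IsHermitian := by
    refine Matrix.IsHermitian.add (Gm_isHermitian μ) ?_
    unfold Matrix.IsHermitian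
    rw [Matrix.conjTranspose_smul, Matrix.conjTranspose_one, star_trivial]
  refine Matrix.PosSemidef.of_dotProduct_mulVec_nonneg herm (fun x => qf_nonneg_of_herm herm x ?_)
  rw [qf_expand_add]
  rw [Complex.add_re, Complex.re_ofReal_mul, Complex.re_sum, Complex.re_sum]
  simp only [Complex.ofReal_re, Complex.re_ofReal_mul]
  have e1 : -(a * ∑ P : Fin d × Fin d, Complex.normSq (x P))
      = ∑ P : Fin d × Fin d, -(a * ((Complex.normSq (x P) + Complex.normSq (x (P.2, P.1))) / 2)) := by
    rw [Finset.sum_neg_distrib, ← Finset.mul_sum,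
      show ∑ P : Fin d × Fin d, (Complex.normSq (x P) + Complex.normSq (x (P.2,P.1)))/2
        = (∑ P : Fin d × Fin d, Complex.normSq (x P))/2 + (∑ P : Fin d × Fin d, Complex.normSq (x (P.2,P.1)))/2
        from by rw [← Finset.sum_div, Finset.sum_add_distrib]; ring,
      sum_swap_normSq]
    ring
  have e2 : ∑ P : Fin d × Fin d, -(a * ((Complex.normSq (x P) + Complex.normSq (x (P.2, P.1))) / 2))
      ≤ ∑ P : Fin d × Fin d, (μ P.1 * μ P.2) * (star (x P) * x (P.2, P.1)).re := by
    refine Finset.sum_le_sum fun P _ => ?_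
    by_cases hP : P.1 = P.2
    · have hswap : (P.2, P.1) = P := by cases P; simp_all
      rw [hswap]
      have h1 : (star (x P) * x P).re = Complex.normSq (x P) := by
        rw [mul_comm, Complex.star_def, Complex.mul_conj, Complex.ofReal_re]
      rw [h1]
      have : 0 ≤ (μ P.1 * μ P.2) * Complex.normSq (x P) :=
        mul_nonneg (mul_nonneg (hpos _) (hpos _)) (Complex.normSq_nonneg _)
      nlinarith [Complex.normSq_nonneg (x P)]
    · have h1 : |(star (x P) * x (P.2, P.1)).re| ≤ ‖x P‖ * ‖x (P.2, P.1)‖ := by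
        calc |(star (x P) * x (P.2, P.1)).re| ≤ ‖star (x P) * x (P.2, P.1)‖ :=
          Complex.abs_re_le_norm _
        _ = ‖x P‖ * ‖x (P.2, P.1)‖ := by
          rw [norm_mul]; simp
      have h2 : ‖x P‖ * ‖x (P.2, P.1)‖ * 2
          ≤ ‖x P‖ ^ 2 + ‖x (P.2, P.1)‖ ^ 2 := by
        nlinarith [sq_nonneg (‖x P‖ - ‖x (P.2, P.1)‖)]
      have h3 : 0 ≤ μ P.1 * μ P.2 := mul_nonneg (hpos _) (hpos _)
      have h4 := hb P.1 P.2 hP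
      have h5 : (0:ℝ) ≤ ‖x P‖ * ‖x (P.2, P.1)‖ :=
        mul_nonneg (norm_nonneg _) (norm_nonneg _)
      have h6 := neg_abs_le ((star (x P) * x (P.2, P.1)).re)
      rw [← Complex.sq_norm, ← Complex.sq_norm]
      nlinarith
  linarith

lemma ptg_ctens (σ : Matrix (Fin d1 × Fin d1) (Fin d1 × Fin d1) ℂ)
    (τ : Matrix (Fin d2 × Fin d2) (Fin d2 × Fin d2) ℂ) :
    ptg (ctens σ τ) = ctens (ptg σ) (ptg τ) := rfl

lemma ptg_add (X Y : Matrix ((Fin d1 × Fin d2) × (Fin d1 × Fin d2)) ((Fin d1 × Fin d2) × (Fin d1 × Fin d2)) ℂ) :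
    ptg (X + Y) = ptg X + ptg Y := rfl

lemma ptg_smul (r : ℝ) (X : Matrix ((Fin d1 × Fin d2) × (Fin d1 × Fin d2)) ((Fin d1 × Fin d2) × (Fin d1 × Fin d2)) ℂ) :
    ptg (r • X) = r • ptg X := rfl

lemma ptg_sub_small (X Y : Matrix (Fin d × Fin d) (Fin d × Fin d) ℂ) :
    ptg (X - Y) = ptg X - ptg Y := rfl

lemma ptg_one_small : ptg (1 : Matrix (Fin d × Fin d) (Fin d × Fin d) ℂ) = 1 := by
  ext ⟨a, b⟩ ⟨c, e⟩
  simp only [ptg, Matrix.of_apply, Matrix.one_apply, Prod.mk.injEq]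
  by_cases h1 : a = c <;> by_cases h2 : b = e <;> simp_all [eq_comm]

lemma ptg_rhoP (μ1 : Fin d1 → ℝ) (μ2 : Fin d2 → ℝ) (p : ℝ) :
    ptg (rhoP μ1 μ2 p)
      = ((1 - p) / (((d1 : ℝ) ^ 2 - 1) * ((d2 : ℝ) ^ 2 - 1))) •
          ctens (1 - Gm μ1) (1 - Gm μ2) + p • ctens (Gm μ1) (Gm μ2) := by
  rw [rhoP, ptg_add, ptg_smul, ptg_smul, ptg_ctens, ptg_ctens, ptg_sub_small, ptg_sub_small,
    ptg_one_small, ptg_one_small]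
  rfl

lemma interp_identity (G1 : Matrix (Fin d1 × Fin d1) (Fin d1 × Fin d1) ℂ)
    (G2 : Matrix (Fin d2 × Fin d2) (Fin d2 × Fin d2) ℂ) (a1 b1 a2 b2 c p : ℝ) :
    (((a1 + b1) * (a2 + b2)) : ℝ) • (c • ctens (1 - G1) (1 - G2) + p • ctens G1 G2)
      = (c * (1 + a1) * (1 + a2) + p * a1 * a2) • ctens (b1 • 1 - G1) (b2 • 1 - G2)
        + (c * (1 + a1) * (1 - b2) - p * a1 * b2) • ctens (b1 • 1 - G1) (G2 + a2 • 1)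
        + (c * (1 - b1) * (1 + a2) - p * b1 * a2) • ctens (G1 + a1 • 1) (b2 • 1 - G2)
        + (c * (1 - b1) * (1 - b2) + p * b1 * b2) • ctens (G1 + a1 • 1) (G2 + a2 • 1) := by
  ext P Q
  simp only [ctens, Matrix.smul_apply, Matrix.add_apply, Matrix.sub_apply, Matrix.one_apply,
    Matrix.of_apply, smul_eq_mul, Complex.real_smul]
  push_cast
  ring

lemma star_single_one {n : Type*} [DecidableEq n] (P : n) :
    star ((Pi.single P (1:ℂ)) : n → ℂ) = Pi.single P 1 := by
  ext j
  simp [Pi.single_apply, apply_ite]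

lemma qf_two {n : Type*} [Fintype n] [DecidableEq n] (M : Matrix n n ℂ) (P Q : n) :
    dotProduct (star (Pi.single P 1 - Pi.single Q 1))
      (M *ᵥ (Pi.single P 1 - Pi.single Q 1))
        = M P P - M P Q - M Q P + M Q Q := by
  rw [Matrix.mulVec_sub, star_sub, star_single_one, star_single_one,
    sub_dotProduct, dotProduct_sub, dotProduct_sub,
    Matrix.mulVec_single, Matrix.mulVec_single]
  simp only [single_dotProduct, mul_one, one_mul, MulOpposite.op_one, one_smul, Matrix.col_apply]
  ring

lemma offdiag_bound (μ : Fin d → ℝ) (hpos : ∀ i, 0 ≤ μ i) (hmono : Antitone μ)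
    (z o : Fin d) (hz : z.val = 0) (ho : o.val = 1) :
    ∀ i j, i ≠ j → μ i * μ j ≤ μ z * μ o := by
  have main : ∀ i j : Fin d, i.val < j.val → μ i * μ j ≤ μ z * μ o := by
    intro i j hij
    have h1 : μ i ≤ μ z := hmono (by rw [Fin.le_def, hz]; omega)
    have h2 : μ j ≤ μ o := hmono (by rw [Fin.le_def, ho]; omega)
    exact mul_le_mul h1 h2 (hpos j) (le_trans (hpos i) h1)
  intro i j hij
  rcases lt_trichotomy i.val j.val with h | h | h
  · exact main i j h
  · exact absurd (Fin.ext h) hij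
  · rw [mul_comm]; exact main j i h

lemma pos_snd_of_rank (μ : Fin d → ℝ) (hpos : ∀ i, 0 ≤ μ i) (hmono : Antitone μ)
    (hrank : 2 ≤ (Finset.univ.filter fun i => μ i ≠ 0).card)
    (o : Fin d) (ho : o.val = 1) : 0 < μ o := by
  rcases lt_or_eq_of_le (hpos o) with h | h
  · exact h
  · exfalso
    have hz : ∀ i : Fin d, 1 ≤ i.val → μ i = 0 := by
      intro i hi
      have : μ i ≤ μ o := hmono (by rw [Fin.le_def, ho]; omega)
      linarith [hpos i]
    have hd0 : 0 < d := by omega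
    have hsub : (Finset.univ.filter fun i => μ i ≠ 0) ⊆ {(⟨0, hd0⟩ : Fin d)} := by
      intro i hi
      rw [Finset.mem_filter] at hi
      rw [Finset.mem_singleton]
      by_contra hne
      have : 1 ≤ i.val := by
        rcases Nat.eq_zero_or_pos i.val with h0 | h0
        · exact absurd (Fin.ext h0) hne
        · omega
      exact hi.2 (hz i this)
    have := Finset.card_le_card hsub
    rw [Finset.card_singleton] at this
    omega

lemma arith_iff (c p m1z m1o m2z m2o : ℝ) (hc : 0 < c)
    (h1z : 0 < m1z) (h1o : 0 < m1o) (h2z : 0 < m2z) (h2o : 0 < m2o) :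
    (p / c ≤ min ((1 - m1z ^ 2) * (1 + m2z * m2o) / (m1z ^ 2 * m2z * m2o))
        ((1 - m2z ^ 2) * (1 + m1z * m1o) / (m2z ^ 2 * m1z * m1o)))
      ↔ (0 ≤ c * (1 - m1z ^ 2) * (1 + m2z * m2o) - p * (m1z ^ 2 * (m2z * m2o))
          ∧ 0 ≤ c * (1 + m1z * m1o) * (1 - m2z ^ 2) - p * (m1z * m1o * m2z ^ 2)) := by
  rw [le_min_iff]
  have hden1 : 0 < m1z ^ 2 * m2z * m2o := by positivity
  have hden2 : 0 < m2z ^ 2 * m1z * m1o := by positivity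
  rw [div_le_div_iff₀ hc hden1, div_le_div_iff₀ hc hden2]
  constructor <;> rintro ⟨h1, h2⟩ <;> constructor <;> nlinarith

set_option maxHeartbeats 2000000 in
theorem main_aux {d1 d2 : ℕ} (hd1 : 2 ≤ d1) (hd2 : 2 ≤ d2)
    (μ1 : Fin d1 → ℝ) (μ2 : Fin d2 → ℝ)
    (h1pos : ∀ i, 0 ≤ μ1 i) (h1norm : ∑ i, μ1 i ^ 2 = 1)
    (h2pos : ∀ i, 0 ≤ μ2 i) (h2norm : ∑ i, μ2 i ^ 2 = 1)
    (h1mono : Antitone μ1) (h2mono : Antitone μ2)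
    (h1rank : 2 ≤ (Finset.univ.filter fun i => μ1 i ≠ 0).card)
    (h2rank : 2 ≤ (Finset.univ.filter fun i => μ2 i ≠ 0).card)
    (p : ℝ) (hp0 : 0 ≤ p) (hp1 : p < 1)
    (z1 o1 : Fin d1) (z2 o2 : Fin d2)
    (hz1 : z1.val = 0) (ho1 : o1.val = 1) (hz2 : z2.val = 0) (ho2 : o2.val = 1) :
    (ptg (rhoP μ1 μ2 p)).PosSemidef ↔
      p / ((1 - p) * (1 / ((d1 : ℝ) ^ 2 - 1)) * (1 / ((d2 : ℝ) ^ 2 - 1))) ≤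
        min ((1 - μ1 z1 ^ 2) * (1 + μ2 z2 * μ2 o2) / (μ1 z1 ^ 2 * μ2 z2 * μ2 o2))
          ((1 - μ2 z2 ^ 2) * (1 + μ1 z1 * μ1 o1) / (μ2 z2 ^ 2 * μ1 z1 * μ1 o1)) := by
  have hd1R : (2:ℝ) ≤ (d1:ℝ) := by exact_mod_cast hd1
  have hd2R : (2:ℝ) ≤ (d2:ℝ) := by exact_mod_cast hd2
  have hX : (0:ℝ) < (d1 : ℝ) ^ 2 - 1 := by nlinarith
  have hY : (0:ℝ) < (d2 : ℝ) ^ 2 - 1 := by nlinarith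
  have hc : 0 < (1 - p) / (((d1 : ℝ) ^ 2 - 1) * ((d2 : ℝ) ^ 2 - 1)) :=
    div_pos (by linarith) (mul_pos hX hY)
  have hμ1o : 0 < μ1 o1 := pos_snd_of_rank μ1 h1pos h1mono h1rank o1 ho1
  have hμ2o : 0 < μ2 o2 := pos_snd_of_rank μ2 h2pos h2mono h2rank o2 ho2
  have hle1 : μ1 o1 ≤ μ1 z1 := h1mono (by rw [Fin.le_def, hz1]; omega)
  have hle2 : μ2 o2 ≤ μ2 z2 := h2mono (by rw [Fin.le_def, hz2]; omega)
  have hμ1z : 0 < μ1 z1 := lt_of_lt_of_le hμ1o hle1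
  have hμ2z : 0 < μ2 z2 := lt_of_lt_of_le hμ2o hle2
  have hb1le : μ1 z1 ^ 2 ≤ 1 := by
    rw [← h1norm]
    exact Finset.single_le_sum (fun i _ => sq_nonneg (μ1 i)) (Finset.mem_univ z1)
  have hb2le : μ2 z2 ^ 2 ≤ 1 := by
    rw [← h2norm]
    exact Finset.single_le_sum (fun i _ => sq_nonneg (μ2 i)) (Finset.mem_univ z2)
  have hmax1 : ∀ i j, μ1 i * μ1 j ≤ μ1 z1 ^ 2 := by
    intro i j
    have hi : μ1 i ≤ μ1 z1 := h1mono (by rw [Fin.le_def, hz1]; omega)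
    have hj : μ1 j ≤ μ1 z1 := h1mono (by rw [Fin.le_def, hz1]; omega)
    rw [sq]
    exact mul_le_mul hi hj (h1pos j) hμ1z.le
  have hmax2 : ∀ i j, μ2 i * μ2 j ≤ μ2 z2 ^ 2 := by
    intro i j
    have hi : μ2 i ≤ μ2 z2 := h2mono (by rw [Fin.le_def, hz2]; omega)
    have hj : μ2 j ≤ μ2 z2 := h2mono (by rw [Fin.le_def, hz2]; omega)
    rw [sq]
    exact mul_le_mul hi hj (h2pos j) hμ2z.le
  have hoff1 : ∀ i j, i ≠ j → μ1 i * μ1 j ≤ μ1 z1 * μ1 o1 := fun i j h =>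
    offdiag_bound μ1 h1pos h1mono z1 o1 hz1 ho1 i j h
  have hoff2 : ∀ i j, i ≠ j → μ2 i * μ2 j ≤ μ2 z2 * μ2 o2 := fun i j h =>
    offdiag_bound μ2 h2pos h2mono z2 o2 hz2 ho2 i j h
  have hz1o1 : z1 ≠ o1 := fun h => by rw [Fin.ext_iff, hz1, ho1] at h; omega
  have hz2o2 : z2 ≠ o2 := fun h => by rw [Fin.ext_iff, hz2, ho2] at h; omega
  have hM : ptg (rhoP μ1 μ2 p)
      = ((1 - p) / (((d1 : ℝ) ^ 2 - 1) * ((d2 : ℝ) ^ 2 - 1))) •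
          ctens (1 - Gm μ1) (1 - Gm μ2) + p • ctens (Gm μ1) (Gm μ2) := ptg_rhoP μ1 μ2 p
  have hD : (1 - p) * (1 / ((d1 : ℝ) ^ 2 - 1)) * (1 / ((d2 : ℝ) ^ 2 - 1))
      = (1 - p) / (((d1 : ℝ) ^ 2 - 1) * ((d2 : ℝ) ^ 2 - 1)) := by
    rw [mul_one_div, mul_one_div, div_div]
  rw [hD, arith_iff _ p (μ1 z1) (μ1 o1) (μ2 z2) (μ2 o2) hc hμ1z hμ1o hμ2z hμ2o]
  constructor
  · intro hPSD
    constructor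
    · have h := hPSD.dotProduct_mulVec_nonneg (Pi.single ((z1, z2), (z1, o2)) 1 - Pi.single ((z1, o2), (z1, z2)) 1)
      rw [qf_two, hM] at h
      have e11 : (((1 - p) / (((d1 : ℝ) ^ 2 - 1) * ((d2 : ℝ) ^ 2 - 1))) •
            ctens (1 - Gm μ1) (1 - Gm μ2) + p • ctens (Gm μ1) (Gm μ2) :
          Matrix ((Fin d1 × Fin d2) × (Fin d1 × Fin d2)) ((Fin d1 × Fin d2) × (Fin d1 × Fin d2)) ℂ)
          ((z1, z2), (z1, o2)) ((z1, z2), (z1, o2))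
          = (((1 - p) / (((d1 : ℝ) ^ 2 - 1) * ((d2 : ℝ) ^ 2 - 1)) * (1 - μ1 z1 ^ 2) : ℝ) : ℂ) := by
        simp only [Matrix.add_apply, Matrix.smul_apply, ctens, Matrix.of_apply, Matrix.sub_apply,
          Matrix.one_apply, Gm_apply, Prod.mk.injEq, if_pos rfl, hz2o2, Ne.symm hz2o2,
          if_false, and_true, and_false, true_and, false_and, if_true, Complex.real_smul]
        push_cast
        ring
      have e12 : (((1 - p) / (((d1 : ℝ) ^ 2 - 1) * ((d2 : ℝ) ^ 2 - 1))) •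
            ctens (1 - Gm μ1) (1 - Gm μ2) + p • ctens (Gm μ1) (Gm μ2) :
          Matrix ((Fin d1 × Fin d2) × (Fin d1 × Fin d2)) ((Fin d1 × Fin d2) × (Fin d1 × Fin d2)) ℂ)
          ((z1, z2), (z1, o2)) ((z1, o2), (z1, z2))
          = ((p * (μ1 z1 ^ 2 * (μ2 z2 * μ2 o2))
              - (1 - p) / (((d1 : ℝ) ^ 2 - 1) * ((d2 : ℝ) ^ 2 - 1)) * (1 - μ1 z1 ^ 2)
                * (μ2 z2 * μ2 o2) : ℝ) : ℂ) := by
        simp only [Matrix.add_apply, Matrix.smul_apply, ctens, Matrix.of_apply, Matrix.sub_apply,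
          Matrix.one_apply, Gm_apply, Prod.mk.injEq, if_pos rfl, hz2o2, Ne.symm hz2o2,
          if_false, and_true, and_false, true_and, false_and, if_true, Complex.real_smul]
        push_cast
        ring
      have e21 : (((1 - p) / (((d1 : ℝ) ^ 2 - 1) * ((d2 : ℝ) ^ 2 - 1))) •
            ctens (1 - Gm μ1) (1 - Gm μ2) + p • ctens (Gm μ1) (Gm μ2) :
          Matrix ((Fin d1 × Fin d2) × (Fin d1 × Fin d2)) ((Fin d1 × Fin d2) × (Fin d1 × Fin d2)) ℂ)
          ((z1, o2), (z1, z2)) ((z1, z2), (z1, o2))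
          = ((p * (μ1 z1 ^ 2 * (μ2 z2 * μ2 o2))
              - (1 - p) / (((d1 : ℝ) ^ 2 - 1) * ((d2 : ℝ) ^ 2 - 1)) * (1 - μ1 z1 ^ 2)
                * (μ2 z2 * μ2 o2) : ℝ) : ℂ) := by
        simp only [Matrix.add_apply, Matrix.smul_apply, ctens, Matrix.of_apply, Matrix.sub_apply,
          Matrix.one_apply, Gm_apply, Prod.mk.injEq, if_pos rfl, hz2o2, Ne.symm hz2o2,
          if_false, and_true, and_false, true_and, false_and, if_true, Complex.real_smul]
        push_cast
        ring
      have e22 : (((1 - p) / (((d1 : ℝ) ^ 2 - 1) * ((d2 : ℝ) ^ 2 - 1))) •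
            ctens (1 - Gm μ1) (1 - Gm μ2) + p • ctens (Gm μ1) (Gm μ2) :
          Matrix ((Fin d1 × Fin d2) × (Fin d1 × Fin d2)) ((Fin d1 × Fin d2) × (Fin d1 × Fin d2)) ℂ)
          ((z1, o2), (z1, z2)) ((z1, o2), (z1, z2))
          = (((1 - p) / (((d1 : ℝ) ^ 2 - 1) * ((d2 : ℝ) ^ 2 - 1)) * (1 - μ1 z1 ^ 2) : ℝ) : ℂ) := by
        simp only [Matrix.add_apply, Matrix.smul_apply, ctens, Matrix.of_apply, Matrix.sub_apply,
          Matrix.one_apply, Gm_apply, Prod.mk.injEq, if_pos rfl, hz2o2, Ne.symm hz2o2,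
          if_false, and_true, and_false, true_and, false_and, if_true, Complex.real_smul]
        push_cast
        ring
      rw [e11, e12, e21, e22] at h
      have hcast : ((((1 - p) / (((d1 : ℝ) ^ 2 - 1) * ((d2 : ℝ) ^ 2 - 1)) * (1 - μ1 z1 ^ 2) : ℝ) : ℂ)
          - ((p * (μ1 z1 ^ 2 * (μ2 z2 * μ2 o2))
              - (1 - p) / (((d1 : ℝ) ^ 2 - 1) * ((d2 : ℝ) ^ 2 - 1)) * (1 - μ1 z1 ^ 2)
                * (μ2 z2 * μ2 o2) : ℝ) : ℂ)
          - ((p * (μ1 z1 ^ 2 * (μ2 z2 * μ2 o2))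
              - (1 - p) / (((d1 : ℝ) ^ 2 - 1) * ((d2 : ℝ) ^ 2 - 1)) * (1 - μ1 z1 ^ 2)
                * (μ2 z2 * μ2 o2) : ℝ) : ℂ)
          + (((1 - p) / (((d1 : ℝ) ^ 2 - 1) * ((d2 : ℝ) ^ 2 - 1)) * (1 - μ1 z1 ^ 2) : ℝ) : ℂ))
          = ((2 * ((1 - p) / (((d1 : ℝ) ^ 2 - 1) * ((d2 : ℝ) ^ 2 - 1))) * (1 - μ1 z1 ^ 2)
              * (1 + μ2 z2 * μ2 o2) - 2 * (p * (μ1 z1 ^ 2 * (μ2 z2 * μ2 o2))) : ℝ) : ℂ) := by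
        push_cast
        ring
      rw [hcast, Complex.zero_le_real] at h
      nlinarith [h]
    · have h := hPSD.dotProduct_mulVec_nonneg (Pi.single ((z1, z2), (o1, z2)) 1 - Pi.single ((o1, z2), (z1, z2)) 1)
      rw [qf_two, hM] at h
      have e11 : (((1 - p) / (((d1 : ℝ) ^ 2 - 1) * ((d2 : ℝ) ^ 2 - 1))) •
            ctens (1 - Gm μ1) (1 - Gm μ2) + p • ctens (Gm μ1) (Gm μ2) :
          Matrix ((Fin d1 × Fin d2) × (Fin d1 × Fin d2)) ((Fin d1 × Fin d2) × (Fin d1 × Fin d2)) ℂ)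
          ((z1, z2), (o1, z2)) ((z1, z2), (o1, z2))
          = (((1 - p) / (((d1 : ℝ) ^ 2 - 1) * ((d2 : ℝ) ^ 2 - 1)) * (1 - μ2 z2 ^ 2) : ℝ) : ℂ) := by
        simp only [Matrix.add_apply, Matrix.smul_apply, ctens, Matrix.of_apply, Matrix.sub_apply,
          Matrix.one_apply, Gm_apply, Prod.mk.injEq, if_pos rfl, hz1o1, Ne.symm hz1o1,
          if_false, and_true, and_false, true_and, false_and, if_true, Complex.real_smul]
        push_cast
        ring
      have e12 : (((1 - p) / (((d1 : ℝ) ^ 2 - 1) * ((d2 : ℝ) ^ 2 - 1))) •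
            ctens (1 - Gm μ1) (1 - Gm μ2) + p • ctens (Gm μ1) (Gm μ2) :
          Matrix ((Fin d1 × Fin d2) × (Fin d1 × Fin d2)) ((Fin d1 × Fin d2) × (Fin d1 × Fin d2)) ℂ)
          ((z1, z2), (o1, z2)) ((o1, z2), (z1, z2))
          = ((p * (μ1 z1 * μ1 o1 * μ2 z2 ^ 2)
              - (1 - p) / (((d1 : ℝ) ^ 2 - 1) * ((d2 : ℝ) ^ 2 - 1)) * (μ1 z1 * μ1 o1)
                * (1 - μ2 z2 ^ 2) : ℝ) : ℂ) := by
        simp only [Matrix.add_apply, Matrix.smul_apply, ctens, Matrix.of_apply, Matrix.sub_apply,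
          Matrix.one_apply, Gm_apply, Prod.mk.injEq, if_pos rfl, hz1o1, Ne.symm hz1o1,
          if_false, and_true, and_false, true_and, false_and, if_true, Complex.real_smul]
        push_cast
        ring
      have e21 : (((1 - p) / (((d1 : ℝ) ^ 2 - 1) * ((d2 : ℝ) ^ 2 - 1))) •
            ctens (1 - Gm μ1) (1 - Gm μ2) + p • ctens (Gm μ1) (Gm μ2) :
          Matrix ((Fin d1 × Fin d2) × (Fin d1 × Fin d2)) ((Fin d1 × Fin d2) × (Fin d1 × Fin d2)) ℂ)
          ((o1, z2), (z1, z2)) ((z1, z2), (o1, z2))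
          = ((p * (μ1 z1 * μ1 o1 * μ2 z2 ^ 2)
              - (1 - p) / (((d1 : ℝ) ^ 2 - 1) * ((d2 : ℝ) ^ 2 - 1)) * (μ1 z1 * μ1 o1)
                * (1 - μ2 z2 ^ 2) : ℝ) : ℂ) := by
        simp only [Matrix.add_apply, Matrix.smul_apply, ctens, Matrix.of_apply, Matrix.sub_apply,
          Matrix.one_apply, Gm_apply, Prod.mk.injEq, if_pos rfl, hz1o1, Ne.symm hz1o1,
          if_false, and_true, and_false, true_and, false_and, if_true, Complex.real_smul]
        push_cast
        ring
      have e22 : (((1 - p) / (((d1 : ℝ) ^ 2 - 1) * ((d2 : ℝ) ^ 2 - 1))) •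
            ctens (1 - Gm μ1) (1 - Gm μ2) + p • ctens (Gm μ1) (Gm μ2) :
          Matrix ((Fin d1 × Fin d2) × (Fin d1 × Fin d2)) ((Fin d1 × Fin d2) × (Fin d1 × Fin d2)) ℂ)
          ((o1, z2), (z1, z2)) ((o1, z2), (z1, z2))
          = (((1 - p) / (((d1 : ℝ) ^ 2 - 1) * ((d2 : ℝ) ^ 2 - 1)) * (1 - μ2 z2 ^ 2) : ℝ) : ℂ) := by
        simp only [Matrix.add_apply, Matrix.smul_apply, ctens, Matrix.of_apply, Matrix.sub_apply,
          Matrix.one_apply, Gm_apply, Prod.mk.injEq, if_pos rfl, hz1o1, Ne.symm hz1o1,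
          if_false, and_true, and_false, true_and, false_and, if_true, Complex.real_smul]
        push_cast
        ring
      rw [e11, e12, e21, e22] at h
      have hcast : ((((1 - p) / (((d1 : ℝ) ^ 2 - 1) * ((d2 : ℝ) ^ 2 - 1)) * (1 - μ2 z2 ^ 2) : ℝ) : ℂ)
          - ((p * (μ1 z1 * μ1 o1 * μ2 z2 ^ 2)
              - (1 - p) / (((d1 : ℝ) ^ 2 - 1) * ((d2 : ℝ) ^ 2 - 1)) * (μ1 z1 * μ1 o1)
                * (1 - μ2 z2 ^ 2) : ℝ) : ℂ)
          - ((p * (μ1 z1 * μ1 o1 * μ2 z2 ^ 2)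
              - (1 - p) / (((d1 : ℝ) ^ 2 - 1) * ((d2 : ℝ) ^ 2 - 1)) * (μ1 z1 * μ1 o1)
                * (1 - μ2 z2 ^ 2) : ℝ) : ℂ)
          + (((1 - p) / (((d1 : ℝ) ^ 2 - 1) * ((d2 : ℝ) ^ 2 - 1)) * (1 - μ2 z2 ^ 2) : ℝ) : ℂ))
          = ((2 * ((1 - p) / (((d1 : ℝ) ^ 2 - 1) * ((d2 : ℝ) ^ 2 - 1))) * (1 + μ1 z1 * μ1 o1)
              * (1 - μ2 z2 ^ 2) - 2 * (p * (μ1 z1 * μ1 o1 * μ2 z2 ^ 2)) : ℝ) : ℂ) := by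
        push_cast
        ring
      rw [hcast, Complex.zero_le_real] at h
      nlinarith [h]
  · rintro ⟨h10, h01⟩
    have hc' := hc
    have w00 : 0 ≤ (1 - p) / (((d1 : ℝ) ^ 2 - 1) * ((d2 : ℝ) ^ 2 - 1))
        * (1 + μ1 z1 * μ1 o1) * (1 + μ2 z2 * μ2 o2) + p * (μ1 z1 * μ1 o1) * (μ2 z2 * μ2 o2) := by
      have h1 : 0 < 1 + μ1 z1 * μ1 o1 := by nlinarith
      have h2 : 0 < 1 + μ2 z2 * μ2 o2 := by nlinarith
      have h3 : 0 ≤ p * (μ1 z1 * μ1 o1) * (μ2 z2 * μ2 o2) := by positivity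
      nlinarith [mul_pos (mul_pos hc h1) h2]
    have w11 : 0 ≤ (1 - p) / (((d1 : ℝ) ^ 2 - 1) * ((d2 : ℝ) ^ 2 - 1))
        * (1 - μ1 z1 ^ 2) * (1 - μ2 z2 ^ 2) + p * (μ1 z1 ^ 2) * (μ2 z2 ^ 2) := by
      have h3 : 0 ≤ p * (μ1 z1 ^ 2) * (μ2 z2 ^ 2) := by positivity
      have h4 : 0 ≤ (1 - p) / (((d1 : ℝ) ^ 2 - 1) * ((d2 : ℝ) ^ 2 - 1))
          * (1 - μ1 z1 ^ 2) * (1 - μ2 z2 ^ 2) :=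
        mul_nonneg (mul_nonneg hc.le (by linarith)) (by linarith)
      linarith
    have hA1 : ((μ1 z1 ^ 2) • (1 : Matrix (Fin d1 × Fin d1) (Fin d1 × Fin d1) ℂ)
        - Gm μ1).PosSemidef := psd_bound_sub μ1 _ (by positivity) h1pos hmax1
    have hA2 : ((μ2 z2 ^ 2) • (1 : Matrix (Fin d2 × Fin d2) (Fin d2 × Fin d2) ℂ)
        - Gm μ2).PosSemidef := psd_bound_sub μ2 _ (by positivity) h2pos hmax2
    have hB1 : (Gm μ1 + (μ1 z1 * μ1 o1) • (1 : Matrix (Fin d1 × Fin d1) (Fin d1 × Fin d1) ℂ)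
        ).PosSemidef := psd_bound_add μ1 _ (by positivity) h1pos hoff1
    have hB2 : (Gm μ2 + (μ2 z2 * μ2 o2) • (1 : Matrix (Fin d2 × Fin d2) (Fin d2 × Fin d2) ℂ)
        ).PosSemidef := psd_bound_add μ2 _ (by positivity) h2pos hoff2
    have hs : 0 < (μ1 z1 * μ1 o1 + μ1 z1 ^ 2) * (μ2 z2 * μ2 o2 + μ2 z2 ^ 2) := by positivity
    have hbig : ((((μ1 z1 * μ1 o1 + μ1 z1 ^ 2) * (μ2 z2 * μ2 o2 + μ2 z2 ^ 2)) : ℝ)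
        • ptg (rhoP μ1 μ2 p)).PosSemidef := by
      rw [hM, interp_identity (Gm μ1) (Gm μ2) (μ1 z1 * μ1 o1) (μ1 z1 ^ 2) (μ2 z2 * μ2 o2)
        (μ2 z2 ^ 2) ((1 - p) / (((d1 : ℝ) ^ 2 - 1) * ((d2 : ℝ) ^ 2 - 1))) p]
      refine Matrix.PosSemidef.add (Matrix.PosSemidef.add (Matrix.PosSemidef.add ?_ ?_) ?_) ?_
      · refine psd_rsmul (ctens_psd hA1 hA2) ?_
        nlinarith [w00]
      · refine psd_rsmul (ctens_psd hA1 hB2) ?_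
        nlinarith [h01]
      · refine psd_rsmul (ctens_psd hB1 hA2) ?_
        nlinarith [h10]
      · refine psd_rsmul (ctens_psd hB1 hB2) ?_
        nlinarith [w11]
    have hfin : ptg (rhoP μ1 μ2 p)
        = (((μ1 z1 * μ1 o1 + μ1 z1 ^ 2) * (μ2 z2 * μ2 o2 + μ2 z2 ^ 2))⁻¹ : ℝ)
          • ((((μ1 z1 * μ1 o1 + μ1 z1 ^ 2) * (μ2 z2 * μ2 o2 + μ2 z2 ^ 2)) : ℝ)
            • ptg (rhoP μ1 μ2 p)) := by
      rw [smul_smul, inv_mul_cancel₀ (ne_of_gt hs), one_smul]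
    rw [hfin]
    exact psd_rsmul hbig (inv_nonneg.mpr hs.le)

theorem rhoP_PPT_iff {d1 d2 : ℕ} (hd1 : 2 ≤ d1) (hd2 : 2 ≤ d2)
    (μ1 : Fin d1 → ℝ) (μ2 : Fin d2 → ℝ)
    (h1pos : ∀ i, 0 ≤ μ1 i) (h1norm : ∑ i, μ1 i ^ 2 = 1)
    (h2pos : ∀ i, 0 ≤ μ2 i) (h2norm : ∑ i, μ2 i ^ 2 = 1)
    (h1mono : Antitone μ1) (h2mono : Antitone μ2)
    (h1rank : 2 ≤ schmidtRank μ1) (h2rank : 2 ≤ schmidtRank μ2)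
    (p : ℝ) (hp0 : 0 ≤ p) (hp1 : p < 1) :
    (ptg (rhoP μ1 μ2 p)).PosSemidef ↔
      p / ((1 - p) * (1 / ((d1 : ℝ) ^ 2 - 1)) * (1 / ((d2 : ℝ) ^ 2 - 1))) ≤
        min
          ((1 - μ1 ⟨0, by omega⟩ ^ 2) * (1 + μ2 ⟨0, by omega⟩ * μ2 ⟨1, by omega⟩)
            / (μ1 ⟨0, by omega⟩ ^ 2 * μ2 ⟨0, by omega⟩ * μ2 ⟨1, by omega⟩))
          ((1 - μ2 ⟨0, by omega⟩ ^ 2) * (1 + μ1 ⟨0, by omega⟩ * μ1 ⟨1, by omega⟩)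
            / (μ2 ⟨0, by omega⟩ ^ 2 * μ1 ⟨0, by omega⟩ * μ1 ⟨1, by omega⟩)) := by
  exact main_aux hd1 hd2 μ1 μ2 h1pos h1norm h2pos h2norm h1mono h2mono h1rank h2rank p hp0 hp1
    ⟨0, by omega⟩ ⟨1, by omega⟩ ⟨0, by omega⟩ ⟨1, by omega⟩ rfl rfl rfl rfl
end

section
/- Let ψ1 on ℂ^{d1}⊗ℂ^{d1} be a pure state in Schmidt form of Schmidt rank 1 (separable), and let ψ2 on ℂ^{d2}⊗ℂ^{d2} be a pure state in Schmidt form of Schmidt rank at least 2 (entangled). Then for every p with 0 < p ≤ 1, the matrix ρ_p(ψ1,ψ2)^{Γ_A} is not positive semidefinite, i.e. it has a negative eigenvalue. -/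
open Matrix BigOperators
open scoped ComplexOrder

/-!
Since `ψ₁` has Schmidt rank one, it is `± eᵢ ⊗ eᵢ`, and for two distinct nonzero Schmidt
coefficients `μ₂ j`, `μ₂ k` of `ψ₂` the partial transpose `ρ_p^Γ` has a zero diagonal entry at
`|i j⟩_A |i k⟩_B` but the nonzero entry `p μ₂ⱼ μ₂ₖ` in the same row, at `|i k⟩_A |i j⟩_B`. This is
impossible for a positive semidefinite matrix, whose `2 × 2` principal minors are nonnegative.
-/

theorem Matrix.PosSemidef.apply_eq_zero_of_apply_self_eq_zero {𝕜 n : Type*} [RCLike 𝕜]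
    [Fintype n] {M : Matrix n n 𝕜} (hM : M.PosSemidef) {i : n} (hi : M i i = 0) (j : n) :
    M i j = 0 := by
  have hminor := (hM.submatrix ![i, j]).det_nonneg
  have hji : M j i = star (M i j) := (hM.isHermitian.apply j i).symm
  rw [det_fin_two] at hminor
  have hnorm : ‖M i j‖ ^ 2 ≤ 0 := by
    simp only [submatrix_apply, cons_val_zero, cons_val_one, hi, hji, zero_mul, zero_sub,
      RCLike.star_def, RCLike.mul_conj, Left.nonneg_neg_iff] at hminor
    exact_mod_cast hminor
  exact norm_eq_zero.mp (pow_eq_zero_iff two_ne_zero |>.mp (hnorm.antisymm (by positivity)))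

section SchmidtRank

variable {d : ℕ} {μ : Fin d → ℝ}

theorem exists_sq_eq_one_of_schmidtRank_eq_one (hnorm : ∑ i, μ i ^ 2 = 1)
    (hrank : schmidtRank μ = 1) : ∃ i, μ i ^ 2 = 1 := by
  obtain ⟨i, hi⟩ := Finset.card_eq_one.mp hrank
  refine ⟨i, ?_⟩
  rw [← hnorm, Finset.sum_eq_single i]
  · intro k _ hk
    have hk' : k ∉ Finset.univ.filter fun i => μ i ≠ 0 := by simpa [hi] using hk
    simpa using hk'
  · simp

theorem exists_ne_ne_zero_of_two_le_schmidtRank (hrank : 2 ≤ schmidtRank μ) :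
    ∃ j k, j ≠ k ∧ μ j ≠ 0 ∧ μ k ≠ 0 := by
  obtain ⟨j, hj, k, hk, hjk⟩ := Finset.one_lt_card.mp hrank
  exact ⟨j, k, hjk, by simpa using hj, by simpa using hk⟩

end SchmidtRank

lemma projVec_schmidtVec_apply {d : ℕ} (μ : Fin d → ℝ) (a b c e : Fin d) :
    projVec (schmidtVec μ) (a, b) (c, e) = if a = b ∧ c = e then (μ a * μ c : ℂ) else 0 := by
  by_cases hab : a = b <;> by_cases hce : c = e <;> simp [projVec, schmidtVec, hab, hce]

section PartialTranspose

variable {d1 d2 : ℕ} {μ1 : Fin d1 → ℝ} {μ2 : Fin d2 → ℝ} {p : ℝ} {i : Fin d1} {j k : Fin d2}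

lemma ptg_rhoP_apply_self_eq_zero (hi : μ1 i ^ 2 = 1) (hjk : j ≠ k) :
    ptg (rhoP μ1 μ2 p) ((i, j), (i, k)) ((i, j), (i, k)) = 0 := by
  have hi' : (μ1 i : ℂ) * μ1 i = 1 := by exact_mod_cast (sq (μ1 i)).symm.trans hi
  simp [ptg, rhoP, ctens, projVec_schmidtVec_apply, hjk, hi']

lemma ptg_rhoP_apply_swap (hi : μ1 i ^ 2 = 1) (hjk : j ≠ k) :
    ptg (rhoP μ1 μ2 p) ((i, j), (i, k)) ((i, k), (i, j)) = p * μ2 k * μ2 j := by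
  have hi' : (μ1 i : ℂ) * μ1 i = 1 := by exact_mod_cast (sq (μ1 i)).symm.trans hi
  simp [ptg, rhoP, ctens, projVec_schmidtVec_apply, hjk.symm, hi', Complex.real_smul]
  ring

end PartialTranspose

theorem rhoP_NPT_of_one_separable_one_entangled_general {d1 d2 : ℕ}
    (μ1 : Fin d1 → ℝ) (μ2 : Fin d2 → ℝ)
    (h1norm : ∑ i, μ1 i ^ 2 = 1)
    (h1rank : schmidtRank μ1 = 1) (h2rank : 2 ≤ schmidtRank μ2)
    (p : ℝ) (hp0 : 0 < p) :
    ¬ (ptg (rhoP μ1 μ2 p)).PosSemidef := by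
  intro h
  obtain ⟨i, hi⟩ := exists_sq_eq_one_of_schmidtRank_eq_one h1norm h1rank
  obtain ⟨j, k, hjk, hj, hk⟩ := exists_ne_ne_zero_of_two_le_schmidtRank h2rank
  have hrow := h.apply_eq_zero_of_apply_self_eq_zero (ptg_rhoP_apply_self_eq_zero hi hjk)
    ((i, k), (i, j))
  rw [ptg_rhoP_apply_swap hi hjk] at hrow
  simp [hp0.ne', hj, hk] at hrow

theorem rhoP_NPT_of_one_separable_one_entangled {d1 d2 : ℕ}
    (μ1 : Fin d1 → ℝ) (μ2 : Fin d2 → ℝ)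
    (h1pos : ∀ i, 0 ≤ μ1 i) (h1norm : ∑ i, μ1 i ^ 2 = 1)
    (h2pos : ∀ i, 0 ≤ μ2 i) (h2norm : ∑ i, μ2 i ^ 2 = 1)
    (h1rank : schmidtRank μ1 = 1) (h2rank : 2 ≤ schmidtRank μ2)
    (p : ℝ) (hp0 : 0 < p) (hp1 : p ≤ 1) :
    ¬ (ptg (rhoP μ1 μ2 p)).PosSemidef :=
  rhoP_NPT_of_one_separable_one_entangled_general μ1 μ2 h1norm h1rank h2rank p hp0
end

section
/- Let M ≥ 3 and let r : Fin M → ℕ satisfy r(i) ≥ 1 for all i and r(i) ≥ 2 for at least one i. Then there exists a subset S ⊆ Fin M with S nonempty and S ≠ Fin M such that ∏_{i ∈ S} r(i) ≠ ∏_{i ∉ S} r(i). -/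
/-!
Pick `i` with `r i ≥ 2`. Either `{i}` already splits the product unevenly, or the other ranks
multiply to `r i ≥ 2`, so one of them, `r j`, differs from `1`. Moving `j` across the balanced
split `{i} | {i}ᶜ` multiplies one side by `r j` and divides the other by it, so it unbalances it;
`{i, j}` is still proper because `M ≥ 3`.
-/

namespace Finset

variable {ι : Type*} [Fintype ι] [DecidableEq ι]

theorem prod_insert_ne_prod_compl_of_prod_eq_prod_compl {f : ι → ℕ} {s : Finset ι} {j : ι}
    (hj : j ∉ s) (hfj : f j ≠ 1) (hs : ∏ i ∈ s, f i = ∏ i ∈ sᶜ, f i)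
    (hs₀ : ∏ i ∈ s, f i ≠ 0) :
    ∏ i ∈ insert j s, f i ≠ ∏ i ∈ (insert j s)ᶜ, f i := by
  intro h
  rw [prod_insert hj, compl_insert] at h
  have hcompl : f j * ∏ i ∈ sᶜ.erase j, f i = ∏ i ∈ sᶜ, f i := mul_prod_erase _ _ (mem_compl.2 hj)
  have hsq : ∏ i ∈ s, f i = (f j * f j) * ∏ i ∈ s, f i := by
    calc ∏ i ∈ s, f i = f j * ∏ i ∈ sᶜ.erase j, f i := by rw [hs, hcompl]
      _ = (f j * f j) * ∏ i ∈ s, f i := by rw [← h, mul_assoc]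
  have hsq_one : f j * f j = 1 := by
    rw [← Nat.mul_right_cancel_iff (Nat.pos_of_ne_zero hs₀), one_mul, ← hsq]
  exact hfj (Nat.eq_one_of_mul_eq_one_right hsq_one)

end Finset

open Finset in
theorem splitting_lemma_general (M : ℕ) (hM : 3 ≤ M) (r : Fin M → ℕ)
    (h2 : ∃ i, 2 ≤ r i) :
    ∃ S : Finset (Fin M), S.Nonempty ∧ S ≠ Finset.univ ∧
      (∏ i ∈ S, r i) ≠ ∏ i ∈ Sᶜ, r i := by
  obtain ⟨i, hi⟩ := h2
  by_cases hbal : ∏ k ∈ {i}, r k = ∏ k ∈ {i}ᶜ, r k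
  · rw [prod_singleton] at hbal
    obtain ⟨j, hj, hrj⟩ := exists_ne_one_of_prod_ne_one (s := {i}ᶜ) (f := r) (by omega)
    refine ⟨insert j {i}, insert_nonempty _ _, (card_lt_iff_ne_univ _).1 ?_,
      prod_insert_ne_prod_compl_of_prod_eq_prod_compl (mem_compl.1 hj) hrj ?_ ?_⟩
    · have := card_insert_le j {i}
      simp only [card_singleton, Fintype.card_fin] at this ⊢
      omega
    · rwa [prod_singleton]
    · rw [prod_singleton]; omega
  · exact ⟨{i}, singleton_nonempty i, (card_lt_iff_ne_univ _).1 (by simp; omega), hbal⟩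

theorem splitting_lemma (M : ℕ) (hM : 3 ≤ M) (r : Fin M → ℕ)
    (h1 : ∀ i, 1 ≤ r i) (h2 : ∃ i, 2 ≤ r i) :
    ∃ S : Finset (Fin M), S.Nonempty ∧ S ≠ Finset.univ ∧
      (∏ i ∈ S, r i) ≠ ∏ i ∈ Sᶜ, r i :=
  splitting_lemma_general M hM r h2
end

section
/- Let μ1 ∈ ℝ^{d1} and μ2 ∈ ℝ^{d2} be vectors of nonnegative reals with Σ_i μ1_i² = 1 and Σ_i μ2_i² = 1, identified with the diagonal matrices diag(μ1) and diag(μ2). Then the following are equivalent: (a) there exists ε > 0 such that for all complex d1×d2 matrices α and β, Tr((βᵀ μ1 α)ᴴ (βᵀ μ1 α)) ≥ (1+ε)·|Tr(μ2 βᵀ μ1 α)|²; (b) the number of nonzero entries of μ1 is strictly smaller than the number of nonzero entries of μ2. (In the language of the paper: the simplified witness W̃_ε(ψ1,ψ2) = P_{ψ1} ⊗ (I − (1+ε)P_{ψ2}) can be chosen nontrivial, i.e. with ε > 0 while remaining positive on product vectors, exactly when the Schmidt rank of ψ1 is strictly smaller than that of ψ2.) -/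
open Matrix BigOperators

/-- The number of nonzero entries of `μ`. -/
noncomputable def nnzCount {d : ℕ} (μ : Fin d → ℝ) : ℕ :=
  (Finset.univ.filter fun i => μ i ≠ 0).card

/-!
Let `r1`, `r2` be the numbers of nonzero `μ1 i`, `μ2 j`. The matrix `M = βᵀ diag(μ1) α` has
rank at most `r1`.

If `r2 ≤ r1`, then `diag(μ2)` itself is of this form, and for it
`|Tr(diag(μ2) M)|² = ‖M‖_F² = 1`, so no `ε > 0` works.

If `r1 < r2`, let `P` be the orthogonal projection onto the column space of `M`. Since
`M = P M`, Cauchy–Schwarz gives `|Tr(diag(μ2) M)|² ≤ (∑ μ2 j ^ 2 ‖P e_j‖²) ‖M‖_F²`. The weights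
`‖P e_j‖²` lie in `[0, 1]` and sum to `rank M < r2`, so on the support of `μ2` at least one unit
of weight is missing: the first factor is at most `1 - m`, where `m` is the smallest nonzero
`μ2 j ^ 2`, and `ε = m` works since `(1 + m)(1 - m) ≤ 1`.
-/

open Finset
open scoped InnerProductSpace

section
variable {𝕜 E ι : Type*} [RCLike 𝕜] [NormedAddCommGroup E] [InnerProductSpace 𝕜 E] [Fintype ι]

theorem Submodule.sum_norm_sq_starProjection_eq_finrank (V : Submodule 𝕜 E)
    [FiniteDimensional 𝕜 V] (b : OrthonormalBasis ι 𝕜 E) :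
    ∑ i, ‖V.starProjection (b i)‖ ^ 2 = Module.finrank 𝕜 V := by
  let f := stdOrthonormalBasis 𝕜 V
  have hproj (x : E) : ‖V.starProjection x‖ ^ 2 = ∑ a, ‖⟪(f a : E), x⟫_𝕜‖ ^ 2 := by
    rw [← Submodule.coe_orthogonalProjectionOnto_apply, Submodule.norm_coe,
      ← f.sum_sq_norm_inner_right]
    simp only [Submodule.inner_orthogonalProjectionOnto_eq_of_mem_left]
  simp_rw [hproj]
  rw [Finset.sum_comm]
  simp [b.sum_sq_norm_inner_left, Submodule.norm_coe, f.norm_eq_one]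

theorem Submodule.norm_sum_inner_sq_le_of_forall_mem (V : Submodule 𝕜 E)
    [V.HasOrthogonalProjection] (x c : ι → E) (hc : ∀ i, c i ∈ V) :
    ‖∑ i, ⟪x i, c i⟫_𝕜‖ ^ 2 ≤ (∑ i, ‖V.starProjection (x i)‖ ^ 2) * ∑ i, ‖c i‖ ^ 2 := by
  have hproj (i : ι) : ⟪x i, c i⟫_𝕜 = ⟪V.starProjection (x i), c i⟫_𝕜 := by
    rw [V.inner_starProjection_left_eq_right, V.starProjection_eq_self_iff.mpr (hc i)]
  calc ‖∑ i, ⟪x i, c i⟫_𝕜‖ ^ 2 ≤ (∑ i, ‖V.starProjection (x i)‖ * ‖c i‖) ^ 2 := by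
        gcongr
        simp_rw [hproj]
        exact (norm_sum_le _ _).trans (sum_le_sum fun i _ => norm_inner_le_norm _ _)
    _ ≤ _ := sum_mul_sq_le_sq_mul_sq _ _ _

end

theorem sum_mul_le_sum_sub_of_card_lt {ι : Type*} [Fintype ι] {w q : ι → ℝ} {m : ℝ} {t : ℕ}
    {S : Finset ι} (hw : ∀ i, 0 ≤ w i) (hq0 : ∀ i, 0 ≤ q i) (hq1 : ∀ i, q i ≤ 1)
    (hqt : ∑ i, q i = t) (hm : 0 ≤ m) (hmS : ∀ i ∈ S, m ≤ w i) (ht : t < #S) :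
    ∑ i, w i * q i ≤ ∑ i, w i - m := by
  have hqS : ∑ i ∈ S, q i ≤ t :=
    hqt ▸ sum_le_sum_of_subset_of_nonneg S.subset_univ fun i _ _ => hq0 i
  have hcard : (t : ℝ) + 1 ≤ #S := by exact_mod_cast ht
  have hslack : m ≤ ∑ i, w i * (1 - q i) := calc
    m ≤ m * (#S - ∑ i ∈ S, q i) := le_mul_of_one_le_right hm (by linarith)
    _ = ∑ i ∈ S, m * (1 - q i) := by simp [mul_sub, sum_sub_distrib, mul_sum, mul_comm]
    _ ≤ ∑ i ∈ S, w i * (1 - q i) :=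
        sum_le_sum fun i hi => mul_le_mul_of_nonneg_right (hmS i hi) (sub_nonneg.2 (hq1 i))
    _ ≤ ∑ i, w i * (1 - q i) := sum_le_sum_of_subset_of_nonneg S.subset_univ
        fun i _ _ => mul_nonneg (hw i) (sub_nonneg.2 (hq1 i))
  simp only [mul_sub, mul_one, sum_sub_distrib] at hslack
  linarith

theorem Matrix.re_trace_conjTranspose_mul_self {𝕜 m n : Type*} [RCLike 𝕜] [Fintype m]
    [Fintype n] (M : Matrix m n 𝕜) :
    RCLike.re (Mᴴ * M).trace = ∑ i, ∑ j, ‖M i j‖ ^ 2 := by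
  simp [trace, mul_apply, RCLike.conj_mul, Finset.sum_comm (γ := m)]

theorem Matrix.norm_trace_diagonal_mul_sq_le {𝕜 n : Type*} [RCLike 𝕜] [Fintype n]
    [DecidableEq n] (w : n → ℝ) (M : Matrix n n 𝕜) {m : ℝ} (hm : 0 ≤ m)
    (hmw : ∀ j, w j ≠ 0 → m ≤ w j ^ 2) (hrank : M.rank < #{j | w j ≠ 0}) :
    ‖(diagonal (fun j => (w j : 𝕜)) * M).trace‖ ^ 2 ≤
      (∑ j, w j ^ 2 - m) * RCLike.re (Mᴴ * M).trace := by
  let e := EuclideanSpace.basisFun n 𝕜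
  let V := LinearMap.range (toEuclideanLin M)
  let c k := toEuclideanLin M (e k)
  let q j := ‖V.starProjection (e j)‖ ^ 2
  have hc (j k : n) : c k j = M j k := by simp [c, e]
  have htrace : (diagonal (fun j => (w j : 𝕜)) * M).trace = ∑ k, ⟪(w k : 𝕜) • e k, c k⟫_𝕜 := by
    simp only [trace, diag_apply, diagonal_mul, e, EuclideanSpace.basisFun_apply, inner_smul_left,
      EuclideanSpace.inner_single_left, hc, RCLike.conj_ofReal, map_one, one_mul]
  have hcols : ∑ k, ‖c k‖ ^ 2 = RCLike.re (Mᴴ * M).trace := by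
    rw [re_trace_conjTranspose_mul_self, Finset.sum_comm]
    simp [EuclideanSpace.norm_sq_eq, hc]
  have hweights : ∑ k, ‖V.starProjection ((w k : 𝕜) • e k)‖ ^ 2 = ∑ k, w k ^ 2 * q k := by
    simp [q, norm_smul, mul_pow]
  have hq : ∑ j, q j = M.rank := by
    rw [V.sum_norm_sq_starProjection_eq_finrank e,
      rank_eq_finrank_range_toLin M e.toBasis e.toBasis, ← toEuclideanLin_eq_toLin_orthonormal]
  have hq1 (k : n) : q k ≤ 1 :=
    pow_le_one₀ (norm_nonneg _) ((V.norm_starProjection_apply_le _).trans (by simp [e]))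
  have hbound : ∑ k, w k ^ 2 * q k ≤ ∑ k, w k ^ 2 - m :=
    sum_mul_le_sum_sub_of_card_lt (fun k => sq_nonneg (w k)) (fun k => sq_nonneg _) hq1 hq hm
      (fun k hk => hmw k (mem_filter.1 hk).2) hrank
  calc ‖(diagonal (fun j => (w j : 𝕜)) * M).trace‖ ^ 2
      ≤ (∑ k, ‖V.starProjection ((w k : 𝕜) • e k)‖ ^ 2) * ∑ k, ‖c k‖ ^ 2 := by
        rw [htrace]
        exact V.norm_sum_inner_sq_le_of_forall_mem _ c fun k => LinearMap.mem_range_self _ _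
    _ ≤ (∑ j, w j ^ 2 - m) * RCLike.re (Mᴴ * M).trace := by
        rw [hweights, ← hcols]
        exact mul_le_mul_of_nonneg_right hbound (sum_nonneg fun k _ => sq_nonneg _)

theorem Matrix.exists_transpose_mul_diagonal_mul_eq_diagonal {m n K : Type*} [Fintype m]
    [DecidableEq m] [DecidableEq n] [Field K] (u : m → K) (v : n → K)
    (e : {j // v j ≠ 0} ↪ {i // u i ≠ 0}) :
    ∃ α β : Matrix m n K, βᵀ * diagonal u * α = diagonal v := by
  classical
  -- `β` and `α` are the partial permutation matrices of `e`, rescaled by `u⁻¹` and by `v`.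
  let g (j : n) (hj : v j ≠ 0) : m := e ⟨j, hj⟩
  have hg (j k : n) (hj : v j ≠ 0) (hk : v k ≠ 0) : g j hj = g k hk ↔ j = k := by
    simp [g, Subtype.val_inj, e.apply_eq_iff_eq]
  refine ⟨of fun i k => if h : v k ≠ 0 then if g k h = i then v k else 0 else 0,
    of fun i j => if h : v j ≠ 0 then if g j h = i then (u i)⁻¹ else 0 else 0, ?_⟩
  ext j k
  rw [mul_apply]
  simp only [mul_diagonal, transpose_apply, of_apply]
  by_cases hk : v k = 0
  · simp only [hk, dite_not, dite_eq_ite, ite_self, mul_zero, sum_const_zero, diagonal_apply]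
    split_ifs with hjk <;> simp [hjk, hk]
  rw [Finset.sum_eq_single (g k hk) (fun i _ hi => by simp [hk, Ne.symm hi])
    (fun h => absurd (mem_univ _) h)]
  by_cases hj : v j = 0
  · simp [hj, show j ≠ k by rintro rfl; exact hk hj]
  have hu : u (g k hk) ≠ 0 := (e ⟨k, hk⟩).2
  by_cases hjk : j = k
  · subst hjk; simp [hj, hu]
  · simp [hj, hk, hg, hjk]

theorem exists_pos_le_sq_of_ne_zero {ι : Type*} [Fintype ι] (μ : ι → ℝ) :
    ∃ m > 0, ∀ i, μ i ≠ 0 → m ≤ μ i ^ 2 := by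
  classical
  rcases (univ.filter fun i => μ i ≠ 0).eq_empty_or_nonempty with hS | hS
  · exact ⟨1, one_pos, fun i hi => absurd (hS ▸ mem_filter.2 ⟨mem_univ i, hi⟩) (notMem_empty i)⟩
  obtain ⟨i₀, hi₀, hmin⟩ := exists_min_image _ (fun i => μ i ^ 2) hS
  have hμ₀ : μ i₀ ≠ 0 := (mem_filter.1 hi₀).2
  exact ⟨μ i₀ ^ 2, by positivity, fun i hi => hmin i (mem_filter.2 ⟨mem_univ i, hi⟩)⟩

theorem card_ofReal_ne_zero_eq_nnzCount {d : ℕ} (μ : Fin d → ℝ) :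
    Fintype.card {i // (μ i : ℂ) ≠ 0} = nnzCount μ := by
  simp [nnzCount, Fintype.card_subtype]

theorem conjTranspose_diagC {d : ℕ} (μ : Fin d → ℝ) : (diagC μ)ᴴ = diagC μ := by
  simp [diagC, diagonal_conjTranspose]

theorem trace_diagC_mul_self {d : ℕ} (μ : Fin d → ℝ) :
    (diagC μ * diagC μ).trace = ((∑ i, μ i ^ 2 : ℝ) : ℂ) := by
  simp [diagC, trace, sq]

theorem rank_transpose_mul_diagC_mul_le {d1 d2 : ℕ} (μ : Fin d1 → ℝ)
    (α β : Matrix (Fin d1) (Fin d2) ℂ) : (βᵀ * diagC μ * α).rank ≤ nnzCount μ :=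
  calc (βᵀ * diagC μ * α).rank ≤ (diagC μ).rank :=
        (rank_mul_le_left _ _).trans (rank_mul_le_right _ _)
    _ = nnzCount μ := (rank_diagonal _).trans (card_ofReal_ne_zero_eq_nnzCount μ)

theorem exists_transpose_mul_diagC_mul_eq_diagC {d1 d2 : ℕ} {μ1 : Fin d1 → ℝ}
    {μ2 : Fin d2 → ℝ} (h : nnzCount μ2 ≤ nnzCount μ1) :
    ∃ α β : Matrix (Fin d1) (Fin d2) ℂ, βᵀ * diagC μ1 * α = diagC μ2 := by
  rw [← card_ofReal_ne_zero_eq_nnzCount, ← card_ofReal_ne_zero_eq_nnzCount] at h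
  obtain ⟨e⟩ := Function.Embedding.nonempty_of_card_le h
  exact exists_transpose_mul_diagonal_mul_eq_diagonal _ _ e

theorem nontrivial_simplified_witness_iff_smaller_schmidt_rank_general
    {d1 d2 : ℕ} (μ1 : Fin d1 → ℝ) (μ2 : Fin d2 → ℝ)
    (h2norm : ∑ i, μ2 i ^ 2 = 1) :
    (∃ ε : ℝ, 0 < ε ∧ ∀ α β : Matrix (Fin d1) (Fin d2) ℂ,
        (1 + ε) * ‖(diagC μ2 * βᵀ * diagC μ1 * α).trace‖ ^ 2 ≤
          (((βᵀ * diagC μ1 * α)ᴴ * (βᵀ * diagC μ1 * α)).trace).re)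
      ↔ nnzCount μ1 < nnzCount μ2 := by
  have hassoc (α β : Matrix (Fin d1) (Fin d2) ℂ) :
      diagC μ2 * βᵀ * diagC μ1 * α = diagC μ2 * (βᵀ * diagC μ1 * α) := by
    simp only [Matrix.mul_assoc]
  constructor
  · rintro ⟨ε, hε, hwit⟩
    by_contra! hle
    obtain ⟨α, β, hαβ⟩ := exists_transpose_mul_diagC_mul_eq_diagC hle
    have := hwit α β
    rw [hassoc, hαβ, conjTranspose_diagC, trace_diagC_mul_self, h2norm] at this
    norm_num at this
    linarith
  · intro hlt
    obtain ⟨m, hm, hmμ⟩ := exists_pos_le_sq_of_ne_zero μ2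
    refine ⟨m, hm, fun α β => ?_⟩
    rw [hassoc]
    set M := βᵀ * diagC μ1 * α
    have hM : ‖(diagC μ2 * M).trace‖ ^ 2 ≤ (1 - m) * (Mᴴ * M).trace.re := by
      have := norm_trace_diagonal_mul_sq_le μ2 M hm.le hmμ
        ((rank_transpose_mul_diagC_mul_le μ1 α β).trans_lt hlt)
      rwa [h2norm] at this
    have hT : 0 ≤ (Mᴴ * M).trace.re := by
      rw [← RCLike.re_to_complex, re_trace_conjTranspose_mul_self]
      positivity
    calc (1 + m) * ‖(diagC μ2 * M).trace‖ ^ 2 ≤ (1 + m) * ((1 - m) * (Mᴴ * M).trace.re) := by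
          gcongr
      _ = (Mᴴ * M).trace.re - m ^ 2 * (Mᴴ * M).trace.re := by ring
      _ ≤ (Mᴴ * M).trace.re := sub_le_self _ (by positivity)

theorem nontrivial_simplified_witness_iff_smaller_schmidt_rank
    {d1 d2 : ℕ} (μ1 : Fin d1 → ℝ) (μ2 : Fin d2 → ℝ)
    (h1pos : ∀ i, 0 ≤ μ1 i) (h1norm : ∑ i, μ1 i ^ 2 = 1)
    (h2pos : ∀ i, 0 ≤ μ2 i) (h2norm : ∑ i, μ2 i ^ 2 = 1) :
    (∃ ε : ℝ, 0 < ε ∧ ∀ α β : Matrix (Fin d1) (Fin d2) ℂ,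
        (1 + ε) * ‖(diagC μ2 * βᵀ * diagC μ1 * α).trace‖ ^ 2 ≤
          (((βᵀ * diagC μ1 * α)ᴴ * (βᵀ * diagC μ1 * α)).trace).re)
      ↔ nnzCount μ1 < nnzCount μ2 :=
  nontrivial_simplified_witness_iff_smaller_schmidt_rank_general μ1 μ2 h2norm
end

section
/- Let ψ be a pure state in Schmidt form on ℂ^d ⊗ ℂ^d with Schmidt coefficients ordered decreasingly μ_1 ≥ μ_2 ≥ … ≥ μ_d ≥ 0, and let 1 ≤ k ≤ d. Then for every unit vector φ ∈ ℂ^d ⊗ ℂ^d whose matricization M_φ (defined by M_φ[i,j] = φ[(i,j)]) has rank at most k, one has |⟨ψ, φ⟩|² ≤ Σ_{i=1}^{k} μ_i²; moreover there exists such a unit vector φ of Schmidt rank at most k attaining equality. In other words, max over Schmidt-rank-≤k unit vectors φ of |⟨ψ, φ⟩|² equals Σ_{i=1}^{k} μ_i². -/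
/-! Let `M` be the matricization of `φ` and `P` the orthogonal projection onto its row space,
of dimension `rank M ≤ k`. The rows `M_i` lie in the range of `P`, so
`⟨ψ, φ⟩ = ∑ μ_i M_ii = ∑ μ_i ⟨P e_i, M_i⟩`, and Cauchy–Schwarz bounds `|⟨ψ, φ⟩|²` by
`∑ μ_i² c_i` with `c_i = ‖P e_i‖² ∈ [0, 1]` and `∑ c_i = tr P = rank M ≤ k`. For decreasing
`μ_i²` such a weighted sum is largest when the weight sits on the first `k` indices. The
normalized truncation of `ψ` to its first `k` Schmidt coefficients attains the bound. -/

open Matrix BigOperators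

/-- The matricization of a vector `φ ∈ ℂ^d ⊗ ℂ^d`: `M_φ[i,j] = φ[(i,j)]`. -/
def matricize {d : ℕ} (φ : Fin d × Fin d → ℂ) : Matrix (Fin d) (Fin d) ℂ :=
  Matrix.of fun i j => φ (i, j)

open Module Submodule
open scoped InnerProductSpace

theorem Submodule.trace_starProjection {𝕜 E : Type*} [RCLike 𝕜] [NormedAddCommGroup E]
    [InnerProductSpace 𝕜 E] [FiniteDimensional 𝕜 E] (W : Submodule 𝕜 E) :
    (W.starProjection : E →ₗ[𝕜] E).trace 𝕜 E = finrank 𝕜 W := by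
  simp [(stdOrthonormalBasis 𝕜 W).starProjection_eq_sum_rankOne,
    InnerProductSpace.trace_rankOne, Submodule.norm_coe, OrthonormalBasis.norm_eq_one]

theorem OrthonormalBasis.sum_norm_sq_starProjection {𝕜 E ι : Type*} [RCLike 𝕜]
    [NormedAddCommGroup E] [InnerProductSpace 𝕜 E] [FiniteDimensional 𝕜 E] [Fintype ι]
    (b : OrthonormalBasis ι 𝕜 E) (W : Submodule 𝕜 E) :
    ∑ i, ‖W.starProjection (b i)‖ ^ 2 = finrank 𝕜 W := by
  have htrace := W.trace_starProjection
  rw [LinearMap.trace_eq_sum_inner _ b] at htrace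
  rw [← RCLike.ofReal_re (K := 𝕜) (finrank 𝕜 W : ℝ), RCLike.ofReal_natCast, ← htrace, map_sum]
  refine Finset.sum_congr rfl fun i _ => ?_
  rw [ContinuousLinearMap.coe_coe, ← W.inner_starProjection_left_eq_right,
    W.re_inner_starProjection_eq_normSq, starProjection_apply, norm_coe]

theorem Matrix.finrank_span_toLp_row {𝕜 m n : Type*} [RCLike 𝕜] [Fintype m] [Fintype n]
    (M : Matrix m n 𝕜) :
    finrank 𝕜 (span 𝕜 (Set.range fun i => WithLp.toLp 2 (M i))) = M.rank := by
  rw [M.rank_eq_finrank_span_row, ← (WithLp.linearEquiv 2 𝕜 (n → 𝕜)).symm.finrank_map_eq,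
    map_span, ← Set.range_comp]
  rfl

theorem Matrix.exists_norm_sum_mul_diag_sq_le {𝕜 ι : Type*} [RCLike 𝕜] [Fintype ι]
    [DecidableEq ι] (M : Matrix ι ι 𝕜) (a : ι → 𝕜) :
    ∃ c : ι → ℝ, (∀ i, 0 ≤ c i) ∧ (∀ i, c i ≤ 1) ∧ ∑ i, c i = M.rank ∧
      ‖∑ i, a i * M i i‖ ^ 2 ≤ (∑ i, ∑ j, ‖M i j‖ ^ 2) * ∑ i, ‖a i‖ ^ 2 * c i := by
  set W := span 𝕜 (Set.range fun i => WithLp.toLp 2 (M i))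
  set b := EuclideanSpace.basisFun ι 𝕜
  refine ⟨fun i => ‖W.starProjection (b i)‖ ^ 2, fun i => by positivity, fun i => ?_, ?_, ?_⟩
  · simpa [b.norm_eq_one] using
      pow_le_pow_left₀ (norm_nonneg _) (W.norm_starProjection_apply_le (b i)) 2
  · rw [b.sum_norm_sq_starProjection, M.finrank_span_toLp_row]
  · have hdiag : ∀ i, M i i = ⟪W.starProjection (b i), WithLp.toLp 2 (M i)⟫_𝕜 := by
      intro i
      rw [W.inner_starProjection_left_eq_right, W.starProjection_eq_self_iff.mpr
        (subset_span (Set.mem_range_self i)), EuclideanSpace.basisFun_apply,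
        EuclideanSpace.inner_single_left]
      simp
    have hrow : ∀ i, ∑ j, ‖M i j‖ ^ 2 = ‖WithLp.toLp 2 (M i)‖ ^ 2 := fun i =>
      (EuclideanSpace.norm_sq_eq (WithLp.toLp 2 (M i))).symm
    calc ‖∑ i, a i * M i i‖ ^ 2
        ≤ (∑ i, ‖WithLp.toLp 2 (M i)‖ * (‖a i‖ * ‖W.starProjection (b i)‖)) ^ 2 := by
          gcongr
          refine (norm_sum_le _ _).trans (Finset.sum_le_sum fun i _ => ?_)
          rw [hdiag, norm_mul]
          exact (mul_le_mul_of_nonneg_left (norm_inner_le_norm _ _) (norm_nonneg _)).trans_eq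
            (by ring)
      _ ≤ (∑ i, ‖WithLp.toLp 2 (M i)‖ ^ 2) * ∑ i, (‖a i‖ * ‖W.starProjection (b i)‖) ^ 2 :=
          Finset.sum_mul_sq_le_sq_mul_sq _ _ _
      _ = _ := by simp_rw [hrow, mul_pow]

theorem Antitone.sum_mul_le_sum_filter_val_lt {d k : ℕ} {m c : Fin d → ℝ} (hm : Antitone m)
    (hm0 : ∀ i, 0 ≤ m i) (hc0 : ∀ i, 0 ≤ c i) (hc1 : ∀ i, c i ≤ 1) (hc : ∑ i, c i ≤ k) :
    ∑ i, m i * c i ≤ ∑ i ∈ Finset.univ.filter (fun i : Fin d => (i : ℕ) < k), m i := by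
  rcases lt_or_ge k d with hkd | hdk
  · -- `t = m k` separates the first `k` weights from the others
    set t := m ⟨k, hkd⟩
    have hpoint : ∀ i : Fin d, m i * c i ≤
        (if (i : ℕ) < k then m i else 0) + t * (c i - if (i : ℕ) < k then 1 else 0) := by
      intro i
      split_ifs with hik
      · nlinarith [hm (show i ≤ ⟨k, hkd⟩ from Fin.mk_le_mk.mpr hik.le) , hc1 i]
      · nlinarith [hm (show (⟨k, hkd⟩ : Fin d) ≤ i from Fin.mk_le_mk.mpr (not_lt.mp hik)),
          hc0 i]
    have hcard : ∑ i : Fin d, (if (i : ℕ) < k then (1 : ℝ) else 0) = k := by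
      rw [Finset.sum_boole, Fin.card_filter_val_lt, min_eq_right hkd.le]
    calc ∑ i, m i * c i
        ≤ ∑ i : Fin d, ((if (i : ℕ) < k then m i else 0) +
            t * (c i - if (i : ℕ) < k then 1 else 0)) := Finset.sum_le_sum fun i _ => hpoint i
      _ = ∑ i ∈ Finset.univ.filter (fun i : Fin d => (i : ℕ) < k), m i + t * (∑ i, c i - k) := by
        rw [Finset.sum_add_distrib, ← Finset.mul_sum, Finset.sum_sub_distrib, hcard,
          Finset.sum_ite, Finset.sum_const_zero, add_zero]
      _ ≤ _ := by nlinarith [hm0 ⟨k, hkd⟩]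
  · have hall : Finset.univ.filter (fun i : Fin d => (i : ℕ) < k) = Finset.univ :=
      Finset.filter_true_of_mem fun i _ => i.2.trans_le hdk
    rw [hall]
    exact Finset.sum_le_sum fun i _ => mul_le_of_le_one_right (hm0 i) (hc1 i)

theorem inner_schmidtVec {d : ℕ} (μ : Fin d → ℝ) (φ : Fin d × Fin d → ℂ) :
    ∑ x, star (schmidtVec μ x) * φ x = ∑ i, (μ i : ℂ) * φ (i, i) := by
  simp [schmidtVec, Fintype.sum_prod_type, apply_ite (starRingEnd ℂ), ite_mul]

theorem sum_norm_sq_schmidtVec {d : ℕ} (ν : Fin d → ℝ) :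
    ∑ x, ‖schmidtVec ν x‖ ^ 2 = ∑ i, ν i ^ 2 := by
  simp [schmidtVec, Fintype.sum_prod_type, apply_ite]

theorem matricize_schmidtVec {d : ℕ} (ν : Fin d → ℝ) :
    matricize (schmidtVec ν) = diagonal fun i => (ν i : ℂ) := by
  ext i j
  simp [matricize, schmidtVec, diagonal_apply]

theorem rank_matricize_schmidtVec_le {d k : ℕ} {ν : Fin d → ℝ}
    (hν : ∀ i : Fin d, k ≤ i → ν i = 0) : (matricize (schmidtVec ν)).rank ≤ k := by
  classical
  rw [matricize_schmidtVec, rank_diagonal, Fintype.card_subtype]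
  calc (Finset.univ.filter fun i : Fin d => (ν i : ℂ) ≠ 0).card
      ≤ (Finset.univ.filter fun i : Fin d => (i : ℕ) < k).card :=
        Finset.card_le_card (Finset.monotone_filter_right _ fun i _ hi => by
          by_contra hik
          simp [hν i (not_lt.mp hik)] at hi)
    _ ≤ k := Fin.card_filter_val_lt.trans_le (min_le_right _ _)

theorem Antitone.sum_filter_val_lt_sq_pos {d k : ℕ} {μ : Fin d → ℝ} (hmono : Antitone μ)
    (hpos : ∀ i, 0 ≤ μ i) (hμ : μ ≠ 0) (hk : 0 < k) :
    0 < ∑ i ∈ Finset.univ.filter (fun i : Fin d => (i : ℕ) < k), μ i ^ 2 := by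
  obtain ⟨i, hi⟩ := Function.ne_iff.mp hμ
  have hfirst : 0 < μ ⟨0, i.pos⟩ :=
    ((hpos i).lt_of_ne' hi).trans_le (hmono (Fin.mk_le_mk.mpr i.val.zero_le))
  exact Finset.sum_pos' (fun j _ => sq_nonneg _)
    ⟨⟨0, i.pos⟩, by simpa using hk, by positivity⟩

theorem exists_normalized_truncation {d k : ℕ} (μ : Fin d → ℝ)
    (hS : 0 < ∑ i ∈ Finset.univ.filter (fun i : Fin d => (i : ℕ) < k), μ i ^ 2) :
    ∃ ν : Fin d → ℝ, (∀ i : Fin d, k ≤ i → ν i = 0) ∧ ∑ i, ν i ^ 2 = 1 ∧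
      ∑ i, μ i * ν i = √(∑ i ∈ Finset.univ.filter (fun i : Fin d => (i : ℕ) < k), μ i ^ 2) := by
  set S := ∑ i ∈ Finset.univ.filter (fun i : Fin d => (i : ℕ) < k), μ i ^ 2
  refine ⟨fun i => if (i : ℕ) < k then μ i / √S else 0, fun i hi => if_neg (not_lt.mpr hi),
    ?_, ?_⟩
  · simp_rw [apply_ite (· ^ 2), div_pow, Real.sq_sqrt hS.le, zero_pow two_ne_zero]
    rw [Finset.sum_ite, Finset.sum_const_zero, add_zero, ← Finset.sum_div, div_self hS.ne']
  · simp_rw [mul_ite, mul_zero, Finset.sum_ite, Finset.sum_const_zero, add_zero,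
      ← mul_div_assoc, ← sq]
    rw [← Finset.sum_div, Real.div_sqrt]

theorem norm_sq_inner_schmidtVec_le_of_rank_le {d k : ℕ} {μ : Fin d → ℝ}
    (hpos : ∀ i, 0 ≤ μ i) (hmono : Antitone μ) {φ : Fin d × Fin d → ℂ}
    (hφ : ∑ x, ‖φ x‖ ^ 2 = 1) (hrank : (matricize φ).rank ≤ k) :
    ‖∑ x, star (schmidtVec μ x) * φ x‖ ^ 2 ≤
      ∑ i ∈ Finset.univ.filter (fun i : Fin d => (i : ℕ) < k), μ i ^ 2 := by
  obtain ⟨c, hc0, hc1, hc, hle⟩ :=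
    (matricize φ).exists_norm_sum_mul_diag_sq_le fun i => (μ i : ℂ)
  have hfrob : ∑ i, ∑ j, ‖matricize φ i j‖ ^ 2 = 1 := by
    rw [← hφ, Fintype.sum_prod_type]
    rfl
  have hsq : Antitone fun i => μ i ^ 2 := fun i j hij => pow_le_pow_left₀ (hpos j) (hmono hij) 2
  rw [inner_schmidtVec]
  calc ‖∑ i, (μ i : ℂ) * φ (i, i)‖ ^ 2 ≤ ∑ i, μ i ^ 2 * c i := by
        rw [hfrob, one_mul] at hle
        simpa [matricize] using hle
    _ ≤ _ := hsq.sum_mul_le_sum_filter_val_lt (fun i => sq_nonneg _) hc0 hc1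
        (by rw [hc]; exact_mod_cast hrank)

theorem max_overlap_schmidt_rank_le_general {d k : ℕ} (hk1 : 1 ≤ k)
    (μ : Fin d → ℝ) (hpos : ∀ i, 0 ≤ μ i) (hnorm : ∑ i, μ i ^ 2 = 1)
    (hmono : Antitone μ) :
    (∀ φ : Fin d × Fin d → ℂ, (∑ x, ‖φ x‖ ^ 2) = 1 → (matricize φ).rank ≤ k →
      ‖∑ x, star (schmidtVec μ x) * φ x‖ ^ 2 ≤
        ∑ i ∈ Finset.univ.filter (fun i : Fin d => (i : ℕ) < k), μ i ^ 2)
    ∧ (∃ φ : Fin d × Fin d → ℂ, (∑ x, ‖φ x‖ ^ 2) = 1 ∧ (matricize φ).rank ≤ k ∧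
      ‖∑ x, star (schmidtVec μ x) * φ x‖ ^ 2 =
        ∑ i ∈ Finset.univ.filter (fun i : Fin d => (i : ℕ) < k), μ i ^ 2) := by
  refine ⟨fun φ hφ hrank => norm_sq_inner_schmidtVec_le_of_rank_le hpos hmono hφ hrank, ?_⟩
  have hμ : μ ≠ 0 := by
    rintro rfl
    simp at hnorm
  obtain ⟨ν, hνk, hν1, hμν⟩ :=
    exists_normalized_truncation μ (hmono.sum_filter_val_lt_sq_pos hpos hμ hk1)
  refine ⟨schmidtVec ν, by rw [sum_norm_sq_schmidtVec, hν1],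
    rank_matricize_schmidtVec_le hνk, ?_⟩
  have hoverlap : ∑ i, (μ i : ℂ) * schmidtVec ν (i, i) = ((∑ i, μ i * ν i : ℝ) : ℂ) := by
    simp [schmidtVec]
  rw [inner_schmidtVec, hoverlap, Complex.norm_real, Real.norm_eq_abs, sq_abs, hμν,
    Real.sq_sqrt (Finset.sum_nonneg fun i _ => sq_nonneg _)]

theorem max_overlap_schmidt_rank_le {d k : ℕ} (hk1 : 1 ≤ k) (hkd : k ≤ d)
    (μ : Fin d → ℝ) (hpos : ∀ i, 0 ≤ μ i) (hnorm : ∑ i, μ i ^ 2 = 1)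
    (hmono : Antitone μ) :
    (∀ φ : Fin d × Fin d → ℂ, (∑ x, ‖φ x‖ ^ 2) = 1 → (matricize φ).rank ≤ k →
      ‖∑ x, star (schmidtVec μ x) * φ x‖ ^ 2 ≤
        ∑ i ∈ Finset.univ.filter (fun i : Fin d => (i : ℕ) < k), μ i ^ 2)
    ∧ (∃ φ : Fin d × Fin d → ℂ, (∑ x, ‖φ x‖ ^ 2) = 1 ∧ (matricize φ).rank ≤ k ∧
      ‖∑ x, star (schmidtVec μ x) * φ x‖ ^ 2 =
        ∑ i ∈ Finset.univ.filter (fun i : Fin d => (i : ℕ) < k), μ i ^ 2) :=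
  max_overlap_schmidt_rank_le_general hk1 μ hpos hnorm hmono
end
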